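/- arXiv:2210.12092 — 13 statements merged into one kernel-verified Lean document; each statement's English description precedes it below -/
import Mathlib

section
/- Let q be a prime power and let m and h be positive integers. Then gcd(q^h + 1, (q^m − 1)/(q^{gcd(m,h)} − 1)) = gcd(q^{2h} − 1, q^m − 1) / gcd(q^h − 1, q^m − 1). -/
/-- If `a ∣ b` then `q ^ a - 1 ∣ q ^ b - 1`. -/
lemma aux_pow_sub_one_dvd (q a b : ℕ) (hab : a ∣ b) : q ^ a - 1 ∣ q ^ b - 1 := by
  obtain ⟨k, rfl⟩ := hab
  simpa only [one_pow, ← pow_mul] using Nat.sub_dvd_pow_sub_pow (q ^ a) 1 k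

/-- `gcd (q^m - 1) (q^n - 1) = q^(gcd m n) - 1`. -/
lemma aux_gcd_pow_sub_one (q : ℕ) (hq : 1 ≤ q) (m n : ℕ) :
    Nat.gcd (q ^ m - 1) (q ^ n - 1) = q ^ Nat.gcd m n - 1 := by
  induction m, n using Nat.gcd.induction with
  | H0 n => simp
  | H1 m n hm ih =>
    conv_rhs => rw [Nat.gcd_rec m n]
    rw [← ih]
    have h1 : (1:ℕ) ≤ q ^ (n % m) := Nat.one_le_pow _ _ hq
    have h2 : (1:ℕ) ≤ q ^ (m * (n / m)) := Nat.one_le_pow _ _ hq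
    have h3 : q ^ (n % m) * q ^ (m * (n / m)) = q ^ n := by
      rw [← pow_add, Nat.mod_add_div]
    have key : q ^ n - 1 =
        q ^ (n % m) * (q ^ (m * (n / m)) - 1) + (q ^ (n % m) - 1) := by
      rw [Nat.mul_sub, h3]
      have h4 : q ^ (n % m) ≤ q ^ n := by
        rw [← h3]; exact Nat.le_mul_of_pos_right _ (by omega)
      omega
    apply Nat.dvd_antisymm
    · apply Nat.dvd_gcd _ (Nat.gcd_dvd_left _ _)
      have hd1 : Nat.gcd (q ^ m - 1) (q ^ n - 1) ∣ q ^ (m * (n / m)) - 1 :=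
        (Nat.gcd_dvd_left _ _).trans (aux_pow_sub_one_dvd q m _ ⟨_, rfl⟩)
      have heq : q ^ (n % m) - 1 =
          q ^ n - 1 - q ^ (n % m) * (q ^ (m * (n / m)) - 1) := by omega
      rw [heq]
      exact Nat.dvd_sub (Nat.gcd_dvd_right _ _) (Dvd.dvd.mul_left hd1 _)
    · apply Nat.dvd_gcd (Nat.gcd_dvd_right _ _)
      have hd1 : Nat.gcd (q ^ (n % m) - 1) (q ^ m - 1) ∣ q ^ (m * (n / m)) - 1 :=
        (Nat.gcd_dvd_right _ _).trans (aux_pow_sub_one_dvd q m _ ⟨_, rfl⟩)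
      rw [key]
      exact Nat.dvd_add (Dvd.dvd.mul_left hd1 _) (Nat.gcd_dvd_left _ _)

/-- `(a+1)*(a-1) = a^2 - 1` in ℕ, in power form. -/
lemma aux_sq_sub_one (q k : ℕ) (hq : 1 ≤ q) :
    (q ^ k + 1) * (q ^ k - 1) = q ^ (2 * k) - 1 := by
  have h1 : (1:ℕ) ≤ q ^ k := Nat.one_le_pow _ _ hq
  obtain ⟨b, hb⟩ : ∃ b, q ^ k = b + 1 := ⟨q ^ k - 1, by omega⟩
  rw [two_mul, pow_add, hb]
  simp only [Nat.add_sub_cancel]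
  have : (b + 1) * (b + 1) = (b + 1 + 1) * b + 1 := by ring
  rw [this, Nat.add_sub_cancel]

theorem stmt_0 (q m h : ℕ) (hq : IsPrimePow q) (hm : 0 < m) (hh : 0 < h) :
    Nat.gcd (q ^ h + 1) ((q ^ m - 1) / (q ^ Nat.gcd m h - 1)) =
      Nat.gcd (q ^ (2 * h) - 1) (q ^ m - 1) / Nat.gcd (q ^ h - 1) (q ^ m - 1) := by
  have hq2 : 2 ≤ q := hq.two_le
  have hq1 : 1 ≤ q := by omega
  set d := Nat.gcd m h with hd
  set g := Nat.gcd (2 * h) m with hg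
  have hd_pos : 0 < d := Nat.gcd_pos_of_pos_left _ hm
  have hqd : 2 ≤ q ^ d := by
    calc 2 = 2 ^ 1 := rfl
    _ ≤ 2 ^ d := Nat.pow_le_pow_right (by omega) hd_pos
    _ ≤ q ^ d := Nat.pow_le_pow_left hq2 d
  have hdm : d ∣ m := Nat.gcd_dvd_left _ _
  have hdh : d ∣ h := Nat.gcd_dvd_right _ _
  have hdvd : q ^ d - 1 ∣ q ^ m - 1 := aux_pow_sub_one_dvd q d m hdm
  have hN : (q ^ m - 1) / (q ^ d - 1) * (q ^ d - 1) = q ^ m - 1 :=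
    Nat.div_mul_cancel hdvd
  have hdg : d ∣ g := Nat.dvd_gcd (hdh.mul_left 2) hdm
  have hg2d : g ∣ 2 * d := by
    have h1 : g ∣ 2 * h := Nat.gcd_dvd_left _ _
    have h2 : g ∣ 2 * m := (Nat.gcd_dvd_right _ _).mul_left 2
    have h3 := Nat.dvd_gcd h1 h2
    rwa [Nat.gcd_mul_left, Nat.gcd_comm h m, ← hd] at h3
  have hgm : g ∣ m := Nat.gcd_dvd_right _ _
  have hsq : (q ^ h + 1) * (q ^ h - 1) = q ^ (2 * h) - 1 := aux_sq_sub_one q h hq1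
  have hkey : Nat.gcd ((q ^ h + 1) * (q ^ d - 1)) (q ^ m - 1) = q ^ g - 1 := by
    apply Nat.dvd_antisymm
    · rw [← aux_gcd_pow_sub_one q hq1 (2 * h) m]
      apply Nat.dvd_gcd _ (Nat.gcd_dvd_right _ _)
      calc Nat.gcd ((q ^ h + 1) * (q ^ d - 1)) (q ^ m - 1)
          ∣ (q ^ h + 1) * (q ^ d - 1) := Nat.gcd_dvd_left _ _
        _ ∣ (q ^ h + 1) * (q ^ h - 1) :=
            mul_dvd_mul_left _ (aux_pow_sub_one_dvd q d h hdh)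
        _ = q ^ (2 * h) - 1 := hsq
    · apply Nat.dvd_gcd _ (aux_pow_sub_one_dvd q g m hgm)
      obtain ⟨c, hc⟩ := hdg
      have hc2 : c ∣ 2 := by
        have : d * c ∣ d * 2 := by rw [← hc, mul_comm d 2]; exact hg2d
        exact (mul_dvd_mul_iff_left (by omega : d ≠ 0)).mp this
      rcases (Nat.prime_two.eq_one_or_self_of_dvd c hc2) with h1 | h1
      · rw [hc, h1, mul_one]
        exact dvd_mul_left _ _
      · -- g = 2 * d
        obtain ⟨t, ht⟩ := hdh
        have htodd : Odd t := by
          rcases Nat.even_or_odd t with he | ho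
          · exfalso
            obtain ⟨u, hu⟩ := he
            have h2dh : 2 * d ∣ h := ⟨u, by rw [ht, hu]; ring⟩
            have h2dm : 2 * d ∣ m := by
              have : g = 2 * d := by rw [hc, h1, mul_comm]
              rw [← this]; exact hgm
            have h2dd : 2 * d ∣ d := Nat.dvd_gcd h2dm h2dh
            have := Nat.le_of_dvd hd_pos h2dd
            omega
          · exact ho
        have hdiv : q ^ d + 1 ∣ q ^ h + 1 := by
          rw [ht, pow_mul]
          simpa using htodd.nat_add_dvd_pow_add_pow (q ^ d) 1
        have : g = 2 * d := by rw [hc, h1, mul_comm]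
        rw [this, ← aux_sq_sub_one q d hq1]
        exact mul_dvd_mul hdiv dvd_rfl
  have hmain : Nat.gcd (q ^ h + 1) ((q ^ m - 1) / (q ^ d - 1)) * (q ^ d - 1)
      = q ^ g - 1 := by
    rw [← Nat.gcd_mul_right, hN, hkey]
  rw [aux_gcd_pow_sub_one q hq1 (2 * h) m, aux_gcd_pow_sub_one q hq1 h m,
    Nat.gcd_comm h m, ← hd, ← hg]
  exact (Nat.div_eq_of_eq_mul_left (by omega) hmain.symm).symm
end

section
/- Let m be an odd positive integer and h a positive integer with gcd(m,h) = 1, and set n = 2^m − 1. Then gcd(2^h + 1, 2^m − 1) = 1, and the 2-cyclotomic coset of 2^h + 1 modulo n has exactly m elements. -/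
/-- The 2-cyclotomic coset of `j` modulo `n`. -/
def cycCoset (n j : ℕ) : Set ℕ := {x | ∃ k : ℕ, x = j * 2 ^ k % n}

private lemma dvd_pow_mod_sub_one (d a b : ℕ) (ha : d ∣ 2 ^ a - 1) (hb : d ∣ 2 ^ b - 1) :
    d ∣ 2 ^ (b % a) - 1 := by
  rcases Nat.eq_zero_or_pos a with rfl | hpos
  · simpa using hb
  set q := b / a
  set r := b % a
  have hdm : d ∣ 2 ^ (a * q) - 1 := by
    refine ha.trans ?_
    have := Nat.sub_dvd_pow_sub_pow (2 ^ a) 1 q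
    simpa [← pow_mul] using this
  have hdm2 : d ∣ 2 ^ r * (2 ^ (a * q) - 1) := Dvd.dvd.mul_left hdm _
  have hkey : 2 ^ r - 1 = (2 ^ b - 1) - 2 ^ r * (2 ^ (a * q) - 1) := by
    have hb' : 2 ^ b = 2 ^ (a * q) * 2 ^ r := by
      rw [← pow_add]
      congr 1
      exact (Nat.div_add_mod b a).symm
    have hmul : 2 ^ r * (2 ^ (a * q) - 1) = 2 ^ r * 2 ^ (a * q) - 2 ^ r := by
      rw [Nat.mul_sub, mul_one]
    have h1 : 1 ≤ 2 ^ r := Nat.one_le_two_pow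
    have h2 : 1 ≤ 2 ^ (a * q) := Nat.one_le_two_pow
    have h3 : 2 ^ r ≤ 2 ^ r * 2 ^ (a * q) := Nat.le_mul_of_pos_right _ (by positivity)
    have h4 : 2 ^ (a*q) * 2 ^ r = 2 ^ r * 2 ^ (a*q) := mul_comm _ _
    omega
  rw [hkey]
  exact Nat.dvd_sub hb hdm2

private lemma dvd_pow_gcd_sub_one (d : ℕ) : ∀ a b : ℕ, d ∣ 2 ^ a - 1 → d ∣ 2 ^ b - 1 →
    d ∣ 2 ^ (Nat.gcd a b) - 1 := by
  intro a
  induction a using Nat.strong_induction_on with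
  | _ a ih =>
    intro b ha hb
    rcases Nat.eq_zero_or_pos a with rfl | hpos
    · simpa using hb
    rw [Nat.gcd_rec]
    exact ih (b % a) (Nat.mod_lt _ hpos) a (dvd_pow_mod_sub_one d a b ha hb) ha

theorem stmt_1 (m h : ℕ) (hm : 0 < m) (hmo : Odd m) (hh : 0 < h)
    (hgcd : Nat.gcd m h = 1) (n : ℕ) (hn : n = 2 ^ m - 1) :
    Nat.gcd (2 ^ h + 1) (2 ^ m - 1) = 1 ∧ (cycCoset n (2 ^ h + 1)).ncard = m := by
  set j := 2 ^ h + 1 with hj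
  -- Part 1
  have hgcd1 : Nat.gcd j (2 ^ m - 1) = 1 := by
    set d := Nat.gcd j (2 ^ m - 1) with hd
    have hd1 : d ∣ j := Nat.gcd_dvd_left _ _
    have hd2 : d ∣ 2 ^ m - 1 := Nat.gcd_dvd_right _ _
    have hdvd2h : d ∣ 2 ^ (2 * h) - 1 := by
      have hfac : 2 ^ (2 * h) - 1 = (2 ^ h + 1) * (2 ^ h - 1) := by
        have h1 : 1 ≤ 2 ^ h := Nat.one_le_two_pow
        have h2 : (2:ℕ) ^ (2 * h) = 2 ^ h * 2 ^ h := by rw [two_mul, pow_add]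
        have h3 : (2 ^ h + 1) * (2 ^ h - 1) = (2 ^ h + 1) * 2 ^ h - (2 ^ h + 1) := by
          rw [Nat.mul_sub, mul_one]
        have h4 : (2 ^ h + 1) * 2 ^ h = 2 ^ h * 2 ^ h + 2 ^ h := by ring
        omega
      rw [hfac]
      exact Dvd.dvd.mul_right hd1 _
    have hkey := dvd_pow_gcd_sub_one d (2 * h) m hdvd2h hd2
    have hcop : Nat.gcd (2 * h) m = 1 := by
      have hm2 : Nat.Coprime m 2 := Nat.coprime_two_right.mpr hmo
      have : Nat.Coprime m (2 * h) := Nat.Coprime.mul_right hm2 hgcd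
      exact Nat.coprime_comm.mp this
    rw [hcop] at hkey
    simpa using Nat.eq_one_of_dvd_one (by simpa using hkey)
  refine ⟨hgcd1, ?_⟩
  -- Part 2
  have hnpos : 0 < n := by
    rw [hn]
    have : 2 ^ 1 ≤ 2 ^ m := Nat.pow_le_pow_right (by norm_num) hm
    omega
  have h2m : (2:ℕ) ^ m % n = 1 % n := by
    have h1 : 1 ≤ 2 ^ m := Nat.one_le_two_pow
    have h2 : (2:ℕ) ^ m = n + 1 := by omega
    rw [h2, Nat.add_mod_left]
  have hq : ∀ q : ℕ, ((2:ℕ) ^ m) ^ q % n = 1 % n := by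
    intro q
    rw [Nat.pow_mod, h2m, ← Nat.pow_mod, one_pow]
  have hper : ∀ k, j * 2 ^ k % n = j * 2 ^ (k % m) % n := by
    intro k
    calc j * 2 ^ k % n = j * 2 ^ (k % m) * 2 ^ (m * (k / m)) % n := by
          rw [mul_assoc, ← pow_add, Nat.mod_add_div]
      _ = (j * 2 ^ (k % m) % n) * (((2:ℕ) ^ m) ^ (k / m) % n) % n := by
          rw [← pow_mul, Nat.mul_mod]
      _ = (j * 2 ^ (k % m) % n) * (1 % n) % n := by rw [hq]
      _ = j * 2 ^ (k % m) % n := by rw [← Nat.mul_mod, mul_one]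
  have hcopn : Nat.Coprime n j := by
    rw [hn]
    exact Nat.coprime_comm.mp hgcd1
  have hcop2 : Nat.Coprime n 2 := by
    have hodd : Odd n := by
      have h1 : 2 ≤ 2 ^ m := Nat.one_lt_two_pow_iff.mpr (by omega)
      have h2 : Even ((2:ℕ) ^ m) := (Nat.even_pow' (by omega)).mpr even_two
      rcases h2 with ⟨t, ht⟩
      refine ⟨t - 1, by omega⟩
    exact Nat.coprime_two_right.mpr hodd
  have hinj : ∀ a b, a ≤ b → b < m → j * 2 ^ a % n = j * 2 ^ b % n → a = b := by
    intro a b hab hbm heq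
    by_contra hne
    have hlt : a < b := lt_of_le_of_ne hab hne
    have hle : j * 2 ^ a ≤ j * 2 ^ b :=
      Nat.mul_le_mul_left _ (Nat.pow_le_pow_right (by norm_num) hab)
    have hdvd : n ∣ j * 2 ^ b - j * 2 ^ a := (Nat.modEq_iff_dvd' hle).mp heq
    have hfac : j * 2 ^ b - j * 2 ^ a = j * 2 ^ a * (2 ^ (b - a) - 1) := by
      have h1 : 1 ≤ 2 ^ (b - a) := Nat.one_le_two_pow
      rw [Nat.mul_sub, mul_one, mul_assoc, ← pow_add, Nat.add_sub_cancel' hab]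
    rw [hfac] at hdvd
    have hcopja : Nat.Coprime n (j * 2 ^ a) := Nat.Coprime.mul_right hcopn (hcop2.pow_right a)
    have hdvd2 : n ∣ 2 ^ (b - a) - 1 := (Nat.Coprime.dvd_of_dvd_mul_left hcopja) hdvd
    have hlt2 : 2 ^ (b - a) - 1 < n := by
      have : (2:ℕ) ^ (b - a) < 2 ^ m := Nat.pow_lt_pow_right (by norm_num) (by omega)
      have h1 : 1 ≤ 2 ^ (b - a) := Nat.one_le_two_pow
      omega
    have hpos2 : 0 < 2 ^ (b - a) - 1 := by
      have : (2:ℕ) ^ 1 ≤ 2 ^ (b - a) := Nat.pow_le_pow_right (by norm_num) (by omega)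
      omega
    have := Nat.eq_zero_of_dvd_of_lt hdvd2 hlt2
    omega
  have hset : cycCoset n j = ↑((Finset.range m).image fun k => j * 2 ^ k % n) := by
    ext x
    simp only [cycCoset, Set.mem_setOf_eq, Finset.coe_image, Set.mem_image, Finset.mem_coe,
      Finset.mem_range]
    constructor
    · rintro ⟨k, rfl⟩
      exact ⟨k % m, Nat.mod_lt _ hm, (hper k).symm⟩
    · rintro ⟨k, _, rfl⟩
      exact ⟨k, rfl⟩
  rw [hset, Set.ncard_coe_finset, Finset.card_image_of_injOn, Finset.card_range]
  intro a ha b hb heq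
  simp only [Finset.coe_range, Set.mem_Iio] at ha hb
  rcases le_total a b with hab | hab
  · exact hinj a b hab hb heq
  · exact (hinj b a hab ha heq.symm).symm
end

section
/- Let m be a positive integer with m ≡ 2 (mod 4) and h a positive integer with gcd(m,h) = 2, and set n = 2^m − 1. Then gcd(2^h + 1, 2^m − 1) = 1, and the 2-cyclotomic coset of 2^h + 1 modulo n has exactly m elements. -/
theorem Nat.pow_sub_one_dvd_pow_sub_one_iff {a : ℕ} (ha : 1 < a) {m k : ℕ} :
    a ^ m - 1 ∣ a ^ k - 1 ↔ m ∣ k := by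
  have hinj : Function.Injective fun e : ℕ => a ^ e - 1 := fun e e' hee' => by
    have := Nat.one_le_pow e a (by omega)
    have := Nat.one_le_pow e' a (by omega)
    apply Nat.pow_right_injective ha
    simp only at hee' ⊢
    omega
  rw [← Nat.gcd_eq_left_iff_dvd, Nat.pow_sub_one_gcd_pow_sub_one, hinj.eq_iff,
    Nat.gcd_eq_left_iff_dvd]

theorem orderOf_two_zmod_two_pow_sub_one (m : ℕ) : orderOf (2 : ZMod (2 ^ m - 1)) = m := by
  have hpow (k : ℕ) : (2 : ZMod (2 ^ m - 1)) ^ k = 1 ↔ m ∣ k := by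
    rw [← Nat.pow_sub_one_dvd_pow_sub_one_iff one_lt_two,
      ← Nat.modEq_iff_dvd' Nat.one_le_two_pow, ← ZMod.natCast_eq_natCast_iff]
    push_cast
    exact eq_comm
  exact Nat.dvd_antisymm (orderOf_dvd_of_pow_eq_one ((hpow m).2 dvd_rfl))
    ((hpow _).1 (pow_orderOf_eq_one _))

theorem IsOfFinOrder.ncard_powers {M : Type*} [Monoid M] {x : M} (hx : IsOfFinOrder x) :
    (Submonoid.powers x : Set M).ncard = orderOf x := by
  classical
  rw [hx.powers_eq_image_range_orderOf, Set.ncard_coe_finset,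
    Finset.card_image_of_injOn (by simpa using pow_injOn_Iio_orderOf), Finset.card_range]

theorem cycCoset_eq_image_powers (n j : ℕ) :
    cycCoset n j = (fun x : ZMod n => ((j : ZMod n) * x).val) ''
      (Submonoid.powers (2 : ZMod n) : Set (ZMod n)) := by
  ext y
  simp_rw [cycCoset, Submonoid.coe_powers, ← Set.range_comp, Set.mem_ofPred_eq, Set.mem_range,
    Function.comp_def, ← ZMod.val_natCast, eq_comm]
  push_cast
  rfl

theorem ncard_cycCoset_two_pow_sub_one {m j : ℕ} (hm : 0 < m) (hj : j.Coprime (2 ^ m - 1)) :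
    (cycCoset (2 ^ m - 1) j).ncard = m := by
  have : NeZero (2 ^ m - 1) := ⟨by have := Nat.one_lt_two_pow hm.ne'; omega⟩
  have hinj : Function.Injective fun x : ZMod (2 ^ m - 1) => ((j : ZMod (2 ^ m - 1)) * x).val :=
    ZMod.val_injective _ |>.comp ((ZMod.isUnit_iff_coprime j _).2 hj).mul_right_injective
  have hfin : IsOfFinOrder (2 : ZMod (2 ^ m - 1)) :=
    orderOf_pos_iff.1 ((orderOf_two_zmod_two_pow_sub_one m).symm ▸ hm)
  rw [cycCoset_eq_image_powers, Set.ncard_image_of_injective _ hinj, hfin.ncard_powers,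
    orderOf_two_zmod_two_pow_sub_one]

theorem Nat.gcd_two_mul_eq_two_of_mod_four_eq_two {m h : ℕ} (hm : m % 4 = 2)
    (hgcd : m.gcd h = 2) :
    (2 * h).gcd m = 2 := by
  obtain ⟨q, rfl⟩ : ∃ q, m = 2 * q := ⟨m / 2, by omega⟩
  have hq : Nat.Coprime 2 q := Nat.coprime_two_left.2 (Nat.odd_iff.2 (by omega))
  have hqh : q.gcd h = 1 :=
    (hq.coprime_dvd_right (Nat.gcd_dvd_left q h)).symm.eq_one_of_dvd
      (hgcd ▸ Nat.gcd_dvd_gcd_mul_left_left q h 2)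
  rw [Nat.gcd_mul_left, Nat.gcd_comm, hqh]

theorem Nat.coprime_two_pow_add_one_two_pow_sub_one {h m : ℕ} (hh : Even h)
    (hhm : (2 * h).gcd m = 2) : Nat.Coprime (2 ^ h + 1) (2 ^ m - 1) := by
  have hdvd : 2 ^ h + 1 ∣ 2 ^ (2 * h) - 1 :=
    ⟨2 ^ h - 1, by rw [pow_mul', ← Nat.sq_sub_sq, one_pow]⟩
  have h3 : (2 ^ h + 1).gcd (2 ^ m - 1) ∣ 3 := by
    simpa [hhm] using Nat.gcd_dvd_gcd_of_dvd_left (2 ^ m - 1) hdvd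
  have hndvd : ¬ 3 ∣ 2 ^ h + 1 := by
    obtain ⟨t, rfl⟩ := hh
    rw [← two_mul, pow_mul, Nat.dvd_iff_mod_eq_zero, Nat.add_mod, Nat.pow_mod]
    norm_num
  rcases (Nat.dvd_prime Nat.prime_three).1 h3 with h1 | h3
  · exact h1
  · exact absurd (h3 ▸ Nat.gcd_dvd_left _ _) hndvd

theorem stmt_2_general (m h : ℕ) (hm4 : m % 4 = 2)
    (hgcd : Nat.gcd m h = 2) (n : ℕ) (hn : n = 2 ^ m - 1) :
    Nat.gcd (2 ^ h + 1) (2 ^ m - 1) = 1 ∧ (cycCoset n (2 ^ h + 1)).ncard = m := by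
  subst hn
  have hh : Even h := even_iff_two_dvd.2 (hgcd ▸ Nat.gcd_dvd_right m h)
  have hcop := Nat.coprime_two_pow_add_one_two_pow_sub_one hh
    (Nat.gcd_two_mul_eq_two_of_mod_four_eq_two hm4 hgcd)
  exact ⟨hcop, ncard_cycCoset_two_pow_sub_one (by omega) hcop⟩

theorem stmt_2 (m h : ℕ) (hm : 0 < m) (hm4 : m % 4 = 2) (hh : 0 < h)
    (hgcd : Nat.gcd m h = 2) (n : ℕ) (hn : n = 2 ^ m - 1) :
    Nat.gcd (2 ^ h + 1) (2 ^ m - 1) = 1 ∧ (cycCoset n (2 ^ h + 1)).ncard = m :=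
  stmt_2_general m h hm4 hgcd n hn
end

section
/- Let m ≥ 3 be an odd integer, h a positive integer with gcd(m,h) = 1, n = 2^m − 1, and let α be a primitive element of the finite field F_{2^m} (a generator of its multiplicative group). Let C = { c = (c_0, …, c_{n−1}) ∈ F_2^n : Σ_{i=0}^{n−1} c_i · α^{(2^h+1)·i} = 0 in F_{2^m} and Σ_{i=0}^{n−1} c_i = 0 in F_2 }, where c_i · x denotes scalar multiplication of x ∈ F_{2^m} by c_i ∈ F_2. Then C is an F_2-linear subspace of F_2^n of dimension 2^m − 2 − m, and the minimum Hamming weight of a nonzero element of C equals 4. -/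
/-!
Since `m` is odd and coprime to `h`, `2 ^ m - 1` is coprime to `2 ^ h + 1`, so `β = α ^ (2 ^ h + 1)`
is again primitive and `i ↦ β ^ i` enumerates the nonzero vectors of `F ≅ 𝔽₂ᵐ`. Hence `C` is the
even-weight subcode of the binary Hamming code: the kernel of `c ↦ (∑ cᵢ βⁱ, ∑ cᵢ)`, which is onto
`F × 𝔽₂`. A nonzero codeword has even weight, not `2` as the `βⁱ` are distinct, and weight `4` is
attained on any four distinct nonzero vectors `x, y, z, x + y + z`.
-/

open Finset

theorem Nat.coprime_two_pow_sub_one_two_pow_add_one {m h : ℕ} (hm : Odd m) (hmh : m.Coprime h) :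
    (2 ^ m - 1).Coprime (2 ^ h + 1) := by
  have hdvd : 2 ^ h + 1 ∣ 2 ^ (2 * h) - 1 :=
    ⟨2 ^ h - 1, by rw [pow_mul', ← one_pow 2, Nat.sq_sub_sq, one_pow]⟩
  refine Nat.Coprime.coprime_dvd_right hdvd ?_
  rw [Nat.Coprime, Nat.pow_sub_one_gcd_pow_sub_one, (Nat.coprime_two_right.2 hm).mul_right hmh,
    pow_one]

theorem IsPrimitiveRoot.exists_pow_eq_of_ne_zero {F : Type*} [Field F] [Fintype F] {β : F}
    (hβ : IsPrimitiveRoot β (Fintype.card F - 1)) {x : F} (hx : x ≠ 0) :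
    ∃ i < Fintype.card F - 1, β ^ i = x :=
  have : NeZero (Fintype.card F - 1) := ⟨by have := Fintype.one_lt_card (α := F); omega⟩
  hβ.eq_pow_of_pow_eq_one (FiniteField.pow_card_sub_one_eq_one x hx)

theorem exists_notMem_of_card_lt_card_univ {α : Type*} [Fintype α] (s : Finset α)
    (h : #s < Fintype.card α) : ∃ x, x ∉ s :=
  let ⟨x, _, hx⟩ := exists_mem_notMem_of_card_lt_card (t := univ) (by rwa [card_univ])
  ⟨x, hx⟩

theorem ZModModule.add_eq_zero_iff_eq {G : Type*} [AddCommGroup G] [Module (ZMod 2) G]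
    {x y : G} : x + y = 0 ↔ x = y := by
  rw [← ZModModule.sub_eq_add, sub_eq_zero]

-- `x, y, z, x + y + z` for `y ∉ {0, x}` and `z ∉ {0, x, y, x + y}`
theorem ZModModule.exists_card_eq_four_sum_eq_zero {V : Type*} [AddCommGroup V]
    [Module (ZMod 2) V] [Fintype V] [DecidableEq V] (hV : 4 < Fintype.card V) :
    ∃ T : Finset V, 0 ∉ T ∧ #T = 4 ∧ ∑ t ∈ T, t = 0 := by
  obtain ⟨x, hx⟩ := exists_notMem_of_card_lt_card_univ ({0} : Finset V)
    (by rw [card_singleton]; omega)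
  obtain ⟨y, hy⟩ := exists_notMem_of_card_lt_card_univ ({0, x} : Finset V)
    (card_le_two.trans_lt (by omega))
  obtain ⟨z, hz⟩ := exists_notMem_of_card_lt_card_univ ({0, x, y, x + y} : Finset V)
    (card_le_four.trans_lt hV)
  simp only [mem_singleton, mem_insert, not_or] at hx hy hz
  have := ZModModule.add_self x
  have := ZModModule.add_self y
  have := ZModModule.add_self z
  have hxT : x ∉ ({y, z, x + y + z} : Finset V) := by grind
  have hyT : y ∉ ({z, x + y + z} : Finset V) := by grind
  have hzT : z ≠ x + y + z := by grind
  refine ⟨{x, y, z, x + y + z}, by grind, ?_, ?_⟩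
  · rw [card_insert_of_notMem hxT, card_insert_of_notMem hyT, card_pair hzT]
  · rw [sum_insert hxT, sum_insert hyT, sum_pair hzT, ← ZModModule.add_self (x + y + z)]
    abel

section EvenHamming

variable {ι V : Type*} [Fintype ι] [AddCommGroup V] [Module (ZMod 2) V] (v : ι → V)

-- When `v` enumerates the nonzero vectors of `V`, the kernel is the even-weight Hamming code.
def evenHammingCheck : (ι → ZMod 2) →ₗ[ZMod 2] V × ZMod 2 :=
  Fintype.linearCombination (ZMod 2) fun i => (v i, 1)

theorem evenHammingCheck_apply (c : ι → ZMod 2) :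
    evenHammingCheck v c = (∑ i, c i • v i, ∑ i, c i) := by
  ext <;> simp [evenHammingCheck, Fintype.linearCombination_apply, Prod.fst_sum, Prod.snd_sum]

theorem evenHammingCheck_apply_eq_sum_support [DecidableEq ι] (c : ι → ZMod 2) :
    evenHammingCheck v c = (∑ i ∈ {i | c i ≠ 0}, v i, (hammingNorm c : ZMod 2)) := by
  have hsmul : ∀ i, c i • (v i, (1 : ZMod 2)) = if c i ≠ 0 then (v i, 1) else 0 := by
    intro i
    rcases (by decide : ∀ a : ZMod 2, a = 0 ∨ a = 1) (c i) with h | h <;> simp [h]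
  rw [evenHammingCheck, Fintype.linearCombination_apply, sum_congr rfl fun i _ => hsmul i,
    ← sum_filter]
  ext <;> simp [Prod.fst_sum, Prod.snd_sum, hammingNorm]

variable {v}

theorem range_evenHammingCheck [Fintype V] (hv : ∀ x ≠ 0, ∃ i, v i = x)
    (hV : 2 < Fintype.card V) : LinearMap.range (evenHammingCheck v) = ⊤ := by
  classical
  set R := LinearMap.range (evenHammingCheck v)
  have hcol : ∀ x ≠ 0, (x, (1 : ZMod 2)) ∈ R := fun x hx ↦ by
    obtain ⟨i, rfl⟩ := hv x hx
    exact ⟨Pi.single i 1, by simp [evenHammingCheck]⟩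
  obtain ⟨x, hx⟩ := exists_notMem_of_card_lt_card_univ ({0} : Finset V)
    (by rw [card_singleton]; omega)
  obtain ⟨y, hy⟩ := exists_notMem_of_card_lt_card_univ ({0, x} : Finset V)
    (card_le_two.trans_lt hV)
  simp only [mem_singleton, mem_insert, not_or] at hx hy
  -- `(x, 1) + (y, 1) + (x + y, 1) = (0, 1)`, as `x + y ≠ 0` in characteristic two
  have hxy : x + y ≠ 0 := by
    rw [Ne, ZModModule.add_eq_zero_iff_eq]; exact Ne.symm hy.2
  have hunit : ((0 : V), (1 : ZMod 2)) ∈ R := by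
    convert R.add_mem (R.add_mem (hcol x hx) (hcol y hy.1)) (hcol _ hxy) using 1
    exact Prod.ext (ZModModule.add_self _).symm rfl
  have hzero : ∀ x : V, (x, (0 : ZMod 2)) ∈ R := fun x ↦ by
    by_cases hx : x = 0
    · exact hx ▸ R.zero_mem
    · simpa using R.sub_mem (hcol x hx) hunit
  refine eq_top_iff.2 fun ⟨x, t⟩ _ ↦ ?_
  simpa using R.add_mem (hzero x) (R.smul_mem t hunit)

theorem finrank_ker_evenHammingCheck [Fintype V] (hv : ∀ x ≠ 0, ∃ i, v i = x)
    (hV : 2 < Fintype.card V) :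
    Module.finrank (ZMod 2) (LinearMap.ker (evenHammingCheck v)) =
      Fintype.card ι - Module.finrank (ZMod 2) V - 1 := by
  have := LinearMap.finrank_range_add_finrank_ker (evenHammingCheck v)
  rw [range_evenHammingCheck hv hV, finrank_top, Module.finrank_prod, Module.finrank_self,
    Module.finrank_fintype_fun_eq_card] at this
  omega

theorem four_le_hammingNorm_of_mem_ker_evenHammingCheck (hv : Function.Injective v)
    {c : ι → ZMod 2} (hc : c ∈ LinearMap.ker (evenHammingCheck v)) (hc0 : c ≠ 0) :
    4 ≤ hammingNorm c := by
  classical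
  rw [LinearMap.mem_ker, evenHammingCheck_apply_eq_sum_support, Prod.mk_eq_zero,
    ZMod.natCast_eq_zero_iff_even] at hc
  obtain ⟨hsum, heven⟩ := hc
  have hne0 : hammingNorm c ≠ 0 := hammingNorm_ne_zero_iff.2 hc0
  have hne2 : hammingNorm c ≠ 2 := fun h2 ↦ by
    obtain ⟨i, j, hij, hs⟩ := card_eq_two.1 h2
    rw [hs, sum_pair hij, ZModModule.add_eq_zero_iff_eq] at hsum
    exact hij (hv hsum)
  obtain ⟨k, hk⟩ := heven
  omega

theorem evenHammingCheck_indicator [DecidableEq V] (hv : Function.Injective v)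
    (hsurj : ∀ x ≠ 0, ∃ i, v i = x) {T : Finset V} (hT0 : 0 ∉ T) :
    evenHammingCheck v (fun i ↦ if v i ∈ T then 1 else 0) = (∑ t ∈ T, t, (#T : ZMod 2)) ∧
      hammingNorm (fun i ↦ if v i ∈ T then (1 : ZMod 2) else 0) = #T := by
  classical
  set s : Finset ι := {i | v i ∈ T}
  have hsT : s.image v = T := by
    ext t
    simp only [s, mem_image, mem_filter, mem_univ, true_and]
    refine ⟨fun ⟨i, hi, hit⟩ ↦ hit ▸ hi, fun ht ↦ ?_⟩
    obtain ⟨i, rfl⟩ := hsurj t (ne_of_mem_of_not_mem ht hT0)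
    exact ⟨i, ht, rfl⟩
  have hsupp : ({i | (if v i ∈ T then 1 else 0 : ZMod 2) ≠ 0} : Finset ι) = s := by
    ext i
    by_cases hi : v i ∈ T <;> simp [s, hi]
  have hnorm : hammingNorm (fun i ↦ if v i ∈ T then (1 : ZMod 2) else 0) = #T := by
    rw [hammingNorm, hsupp, ← card_image_of_injective _ hv, hsT]
  refine ⟨?_, hnorm⟩
  rw [evenHammingCheck_apply_eq_sum_support, hnorm, hsupp, ← hsT,
    sum_image fun _ _ _ _ h ↦ hv h]

theorem exists_hammingNorm_eq_four_mem_ker_evenHammingCheck [Fintype V]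
    (hv : Function.Injective v) (hsurj : ∀ x ≠ 0, ∃ i, v i = x) (hV : 4 < Fintype.card V) :
    ∃ c ∈ LinearMap.ker (evenHammingCheck v), hammingNorm c = 4 := by
  classical
  obtain ⟨T, hT0, hTcard, hTsum⟩ := ZModModule.exists_card_eq_four_sum_eq_zero hV
  obtain ⟨hcheck, hnorm⟩ := evenHammingCheck_indicator hv hsurj hT0
  refine ⟨_, ?_, hnorm.trans hTcard⟩
  rw [LinearMap.mem_ker, hcheck, hTsum, hTcard]
  rfl

theorem isLeast_hammingNorm_ker_evenHammingCheck [Fintype V] (hv : Function.Injective v)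
    (hsurj : ∀ x ≠ 0, ∃ i, v i = x) (hV : 4 < Fintype.card V) :
    IsLeast {w | ∃ c ∈ LinearMap.ker (evenHammingCheck v), c ≠ 0 ∧ hammingNorm c = w} 4 := by
  obtain ⟨c, hc, hc4⟩ := exists_hammingNorm_eq_four_mem_ker_evenHammingCheck hv hsurj hV
  refine ⟨⟨c, hc, hammingNorm_ne_zero_iff.1 (by omega), hc4⟩, ?_⟩
  rintro _ ⟨c, hc, hc0, rfl⟩
  exact four_le_hammingNorm_of_mem_ker_evenHammingCheck hv hc hc0

end EvenHamming

theorem stmt_3_general (m : ℕ) (hm : 3 ≤ m) (hmo : Odd m) (h : ℕ)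
    (hgcd : Nat.gcd m h = 1) (n : ℕ) (hn : n = 2 ^ m - 1)
    (F : Type) [Field F] [Fintype F] [Algebra (ZMod 2) F]
    (hF : Fintype.card F = 2 ^ m) (α : F) (hα : orderOf α = n)
    (C : Set (Fin n → ZMod 2))
    (hC : C = {c | (∑ i : Fin n, c i • α ^ ((2 ^ h + 1) * (i : ℕ)) = 0) ∧
                   (∑ i : Fin n, c i = 0)}) :
    (∃ W : Submodule (ZMod 2) (Fin n → ZMod 2),
        (W : Set (Fin n → ZMod 2)) = C ∧ Module.finrank (ZMod 2) W = 2 ^ m - 2 - m) ∧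
    IsLeast {w : ℕ | ∃ c ∈ C, c ≠ 0 ∧ hammingNorm c = w} 4 := by
  subst hn
  have hβ : IsPrimitiveRoot (α ^ (2 ^ h + 1)) (2 ^ m - 1) :=
    (hα ▸ IsPrimitiveRoot.orderOf α).pow_of_coprime _
      (Nat.coprime_two_pow_sub_one_two_pow_add_one hmo hgcd).symm
  set v : Fin (2 ^ m - 1) → F := fun i ↦ (α ^ (2 ^ h + 1)) ^ (i : ℕ)
  have hv : Function.Injective v := fun i j hij ↦ Fin.ext (hβ.pow_inj i.2 j.2 hij)
  have hsurj : ∀ x ≠ 0, ∃ i, v i = x := fun x hx ↦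
    let ⟨i, hi, hix⟩ := (hF ▸ hβ).exists_pow_eq_of_ne_zero hx
    ⟨⟨i, hF ▸ hi⟩, hix⟩
  have hCker : C = LinearMap.ker (evenHammingCheck v) := by
    ext c
    simp [hC, evenHammingCheck_apply, v, pow_mul]
  have hcard : 8 ≤ Fintype.card F := hF ▸ Nat.pow_le_pow_right two_pos hm
  have hfinrank : Module.finrank (ZMod 2) F = m := by
    have := Module.card_eq_pow_finrank (K := ZMod 2) (V := F)
    rw [hF, ZMod.card] at this
    exact (Nat.pow_right_injective le_rfl this).symm
  subst hCker
  refine ⟨⟨_, rfl, ?_⟩, isLeast_hammingNorm_ker_evenHammingCheck hv hsurj (by omega)⟩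
  rw [finrank_ker_evenHammingCheck hsurj (by omega), Fintype.card_fin, hfinrank]
  omega

theorem stmt_3 (m : ℕ) (hm : 3 ≤ m) (hmo : Odd m) (h : ℕ) (hh : 0 < h)
    (hgcd : Nat.gcd m h = 1) (n : ℕ) (hn : n = 2 ^ m - 1)
    (F : Type) [Field F] [Fintype F] [Algebra (ZMod 2) F]
    (hF : Fintype.card F = 2 ^ m) (α : F) (hα : orderOf α = n)
    (C : Set (Fin n → ZMod 2))
    (hC : C = {c | (∑ i : Fin n, c i • α ^ ((2 ^ h + 1) * (i : ℕ)) = 0) ∧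
                   (∑ i : Fin n, c i = 0)}) :
    (∃ W : Submodule (ZMod 2) (Fin n → ZMod 2),
        (W : Set (Fin n → ZMod 2)) = C ∧ Module.finrank (ZMod 2) W = 2 ^ m - 2 - m) ∧
    IsLeast {w : ℕ | ∃ c ∈ C, c ≠ 0 ∧ hammingNorm c = w} 4 :=
  stmt_3_general m hm hmo h hgcd n hn F hF α hα C hC
end

section
/- Let m be a positive integer with m ≡ 2 (mod 4), h a positive integer with gcd(m,h) = 2, n = 2^m − 1, and let α be a primitive element of the finite field F_{2^m}. Let C = { c = (c_0, …, c_{n−1}) ∈ F_2^n : Σ_{i=0}^{n−1} c_i · α^{(2^h+1)·i} = 0 in F_{2^m} }. Then C is an F_2-linear subspace of F_2^n of dimension 2^m − 1 − m, and the minimum Hamming weight of a nonzero element of C equals 3. -/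
lemma aux_dvd_pow_gcd (d a b : ℕ) (hd2 : ¬ 2 ∣ d) (ha : d ∣ 2 ^ a - 1) (hb : d ∣ 2 ^ b - 1) :
    d ∣ 2 ^ Nat.gcd a b - 1 := by
  have hco : Nat.Coprime 2 d := (Nat.prime_two.coprime_iff_not_dvd).mpr hd2
  set u : (ZMod d)ˣ := ZMod.unitOfCoprime 2 hco with hu
  have key : ∀ k : ℕ, d ∣ 2 ^ k - 1 ↔ u ^ k = 1 := by
    intro k
    have h1 : (1 : ℕ) ≤ 2 ^ k := Nat.one_le_two_pow
    rw [Units.ext_iff, Units.val_pow_eq_pow_val, hu, ZMod.coe_unitOfCoprime, Units.val_one]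
    rw [← ZMod.natCast_eq_zero_iff, Nat.cast_sub h1]
    push_cast
    constructor
    · intro hz; linear_combination hz
    · intro hz; linear_combination hz
  have h1 : orderOf u ∣ a := orderOf_dvd_of_pow_eq_one ((key a).1 ha)
  have h2 : orderOf u ∣ b := orderOf_dvd_of_pow_eq_one ((key b).1 hb)
  exact (key _).2 (orderOf_dvd_iff_pow_eq_one.mp (Nat.dvd_gcd h1 h2))

lemma aux_coprime (m h : ℕ) (hm4 : m % 4 = 2) (hh : 0 < h) (hgcd : Nat.gcd m h = 2) :
    Nat.Coprime (2 ^ m - 1) (2 ^ h + 1) := by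
  have h2h : 2 ∣ h := hgcd ▸ Nat.gcd_dvd_right m h
  have h2m : 2 ∣ m := by omega
  set d := Nat.gcd (2 ^ m - 1) (2 ^ h + 1) with hd
  have hd1 : d ∣ 2 ^ m - 1 := Nat.gcd_dvd_left _ _
  have hd2 : d ∣ 2 ^ h + 1 := Nat.gcd_dvd_right _ _
  have hodd : ¬ 2 ∣ d := by
    intro h2d
    have h21 : (2 : ℕ) ∣ 2 ^ m - 1 := dvd_trans h2d hd1
    have h1 : (1:ℕ) ≤ 2 ^ m := Nat.one_le_two_pow
    have h2pm : 2 ∣ 2 ^ m := dvd_pow_self 2 (by omega)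
    omega
  -- d ∣ 2^(2h) - 1
  have hfac : 2 ^ (2 * h) - 1 = (2 ^ h + 1) * (2 ^ h - 1) := by
    have e : 2 ^ (2 * h) = 2 ^ h * 2 ^ h := by rw [two_mul, pow_add]
    obtain ⟨y, hy⟩ : ∃ y, 2 ^ h = y + 1 := ⟨2 ^ h - 1, by have := Nat.one_le_two_pow (n := h); omega⟩
    rw [e, hy]
    have e1 : (y + 1) * (y + 1) = (y + 1 + 1) * y + 1 := by ring
    have e2 : (y + 1 + 1) * (y + 1 - 1) = (y + 1 + 1) * y := by norm_num
    rw [e2, e1, Nat.add_sub_cancel]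
  have hd3 : d ∣ 2 ^ (2 * h) - 1 := hfac ▸ Dvd.dvd.mul_right hd2 _
  -- gcd m (2h) = 2
  have hg2 : Nat.gcd m (2 * h) = 2 := by
    have hdvd4 : Nat.gcd m (2 * h) ∣ 4 := by
      have step : Nat.gcd m (2 * h) ∣ Nat.gcd (2 * m) (2 * h) :=
        Nat.dvd_gcd ((Nat.gcd_dvd_left m (2*h)).trans (dvd_mul_left m 2)) (Nat.gcd_dvd_right _ _)
      rwa [Nat.gcd_mul_left, hgcd] at step
    have h2g : 2 ∣ Nat.gcd m (2 * h) := Nat.dvd_gcd h2m ⟨h, rfl⟩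
    have hgm : Nat.gcd m (2 * h) ∣ m := Nat.gcd_dvd_left _ _
    have hle : Nat.gcd m (2 * h) ≤ 4 := Nat.le_of_dvd (by norm_num) hdvd4
    interval_cases hg : Nat.gcd m (2 * h)
    · omega
    · omega
    · rfl
    · norm_num at hdvd4
    · omega
  have hd3' : d ∣ 3 := by
    have := aux_dvd_pow_gcd d m (2 * h) hodd hd1 hd3
    rwa [hg2] at this
  -- rule out d = 3
  obtain ⟨h', rfl⟩ := h2h
  have h4 : 2 ^ (2 * h') = 4 ^ h' := by rw [pow_mul]; norm_num
  have h31 : (3 : ℕ) ∣ 4 ^ h' - 1 := by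
    have := Nat.sub_dvd_pow_sub_pow 4 1 h'
    simpa using this
  have hd4 : d ∣ 4 ^ h' + 1 := h4 ▸ hd2
  rcases (Nat.prime_three.eq_one_or_self_of_dvd d hd3') with h1 | h3
  · exact h1
  · exfalso
    have hA : (1:ℕ) ≤ 4 ^ h' := Nat.one_le_pow _ _ (by norm_num)
    have : (3:ℕ) ∣ 4 ^ h' + 1 := h3 ▸ hd4
    omega

set_option maxHeartbeats 2000000 in
theorem stmt_4 (m : ℕ) (hm : 0 < m) (hm4 : m % 4 = 2) (h : ℕ) (hh : 0 < h)
    (hgcd : Nat.gcd m h = 2) (n : ℕ) (hn : n = 2 ^ m - 1)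
    (F : Type) [Field F] [Fintype F] [Algebra (ZMod 2) F]
    (hF : Fintype.card F = 2 ^ m) (α : F) (hα : orderOf α = n)
    (C : Set (Fin n → ZMod 2))
    (hC : C = {c | ∑ i : Fin n, c i • α ^ ((2 ^ h + 1) * (i : ℕ)) = 0}) :
    (∃ W : Submodule (ZMod 2) (Fin n → ZMod 2),
        (W : Set (Fin n → ZMod 2)) = C ∧ Module.finrank (ZMod 2) W = 2 ^ m - 1 - m) ∧
    IsLeast {w : ℕ | ∃ c ∈ C, c ≠ 0 ∧ hammingNorm c = w} 3 := by
  have hm2 : 2 ≤ m := by omega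
  have h4m : 4 ≤ 2 ^ m := by
    calc (4:ℕ) = 2 ^ 2 := by norm_num
    _ ≤ 2 ^ m := Nat.pow_le_pow_right (by norm_num) hm2
  have hn3 : 3 ≤ n := by omega
  have hnpos : 0 < n := by omega
  have hzm : ∀ x : ZMod 2, x ≠ 0 → x = 1 := by decide
  have hnormdef : ∀ c : Fin n → ZMod 2,
      hammingNorm c = (Finset.filter (fun i => c i ≠ 0) Finset.univ).card := fun c => by
    simp [hammingNorm]
  -- characteristic 2 facts
  have htwo : (2 : F) = 0 := by
    have h0 : algebraMap (ZMod 2) F ((2:ℕ) : ZMod 2) = ((2:ℕ) : F) := map_natCast _ 2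
    have h1 : ((2:ℕ) : ZMod 2) = 0 := by decide
    rw [h1, map_zero] at h0
    exact_mod_cast h0.symm
  have addself : ∀ x : F, x + x = 0 := fun x => by
    rw [← two_mul, htwo, zero_mul]
  -- β
  set β : F := α ^ (2 ^ h + 1) with hβdef
  have hβ : orderOf β = n := by
    have hc : (orderOf α).Coprime (2 ^ h + 1) := by
      rw [hα, hn]; exact aux_coprime m h hm4 hh hgcd
    rw [hβdef, hc.orderOf_pow, hα]
  have hβ1 : β ^ n = 1 := by rw [← hβ]; exact pow_orderOf_eq_one β
  have hβ0 : β ≠ 0 := by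
    intro hz
    rw [hz, zero_pow (by omega)] at hβ1
    exact zero_ne_one hβ1
  set b : Fˣ := Units.mk0 β hβ0 with hb
  have hob : orderOf b = n := by
    rw [← orderOf_units, hb, Units.val_mk0, hβ]
  -- the linear map
  set φ : (Fin n → ZMod 2) →ₗ[ZMod 2] F :=
    { toFun := fun c => ∑ i : Fin n, c i • β ^ (i : ℕ)
      map_add' := fun a b => by
        simp [add_smul, Finset.sum_add_distrib]
      map_smul' := fun r c => by
        simp [Pi.smul_apply, smul_eq_mul, mul_smul, Finset.smul_sum] } with hφdef
  have hφ : ∀ c : Fin n → ZMod 2, φ c = ∑ i : Fin n, c i • β ^ (i : ℕ) := fun _ => rfl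
  have hCk : C = ↑(LinearMap.ker φ) := by
    rw [hC]; ext c
    simp only [Set.mem_setOf_eq, SetLike.mem_coe, LinearMap.mem_ker, hφ]
    have : ∀ i : Fin n, c i • α ^ ((2 ^ h + 1) * (i : ℕ)) = c i • β ^ (i : ℕ) := by
      intro i; rw [hβdef, ← pow_mul]
    rw [Finset.sum_congr rfl (fun i _ => this i)]
  -- every nonzero element is a power of β with exponent < n
  have hsurj : ∀ x : F, x ≠ 0 → ∃ i : Fin n, β ^ (i : ℕ) = x := by
    intro x hx
    have hcard : Nat.card Fˣ = n := by
      rw [Nat.card_units, Nat.card_eq_fintype_card, hF, hn]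
    have htop : Subgroup.zpowers b = ⊤ :=
      Subgroup.eq_top_of_card_eq _ (by rw [Nat.card_zpowers, hob, hcard])
    have hmem : Units.mk0 x hx ∈ Subgroup.zpowers b := by
      rw [htop]; trivial
    obtain ⟨k, hk⟩ := mem_powers_iff_mem_zpowers.mpr hmem
    refine ⟨⟨k % n, Nat.mod_lt _ hnpos⟩, ?_⟩
    have h1 : b ^ (k % n) = b ^ k := by rw [← hob]; exact pow_mod_orderOf b k
    have h2 := congrArg Units.val (h1.trans hk)
    simpa [hb] using h2
  have hφsingle : ∀ i : Fin n, φ (Pi.single i 1) = β ^ (i : ℕ) := by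
    intro i
    rw [hφ]
    rw [Finset.sum_congr rfl (fun j _ => by rw [Pi.single_apply, ite_smul, one_smul, zero_smul])]
    rw [Finset.sum_ite_eq' Finset.univ i (fun j => β ^ (j : ℕ))]
    simp
  have hrange : LinearMap.range φ = ⊤ := by
    rw [eq_top_iff]
    rintro x -
    by_cases hx : x = 0
    · rw [hx]; exact Submodule.zero_mem _
    · obtain ⟨i, hi⟩ := hsurj x hx
      exact ⟨Pi.single i 1, by rw [hφsingle i, hi]⟩
  -- dimension
  have hdimF : Module.finrank (ZMod 2) F = m := by
    have hcard := Module.card_eq_pow_finrank (K := ZMod 2) (V := F)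
    rw [ZMod.card, hF] at hcard
    exact (Nat.pow_right_injective (le_refl 2) hcard.symm)
  have hdom : Module.finrank (ZMod 2) (Fin n → ZMod 2) = n := Module.finrank_fin_fun _
  have hrn := LinearMap.finrank_range_add_finrank_ker φ
  rw [hrange, finrank_top, hdimF, hdom] at hrn
  have hkerdim : Module.finrank (ZMod 2) (LinearMap.ker φ) = 2 ^ m - 1 - m := by omega
  refine ⟨⟨LinearMap.ker φ, hCk.symm, hkerdim⟩, ?_, ?_⟩
  · -- membership: a weight-3 codeword
    set a0 : Fin n := ⟨0, hnpos⟩ with ha0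
    set a1 : Fin n := ⟨1, by omega⟩ with ha1
    have hx : (1 : F) + β ≠ 0 := by
      intro hz
      have hβone : β = 1 := by
        have h1 := addself β
        have h2 : (1 : F) + β = β + β := by rw [hz, h1]
        exact (add_right_cancel h2).symm
      rw [hβone, orderOf_one] at hβ
      omega
    obtain ⟨k, hk⟩ := hsurj _ hx
    have hβa0 : β ^ (a0 : ℕ) = 1 := by rw [ha0]; simp
    have hβa1 : β ^ (a1 : ℕ) = β := by rw [ha1]; simp
    have hka0 : k ≠ a0 := by
      intro he; rw [he, hβa0] at hk
      have h2 : (1:F) + 0 = 1 + β := by rw [add_zero]; exact hk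
      exact hβ0 (add_left_cancel h2).symm
    have hka1 : k ≠ a1 := by
      intro he; rw [he, hβa1] at hk
      have h2 : (0:F) + β = 1 + β := by rw [zero_add]; exact hk
      exact zero_ne_one (add_right_cancel h2)
    have h01 : a0 ≠ a1 := by rw [ha0, ha1]; intro he; simpa using congrArg Fin.val he
    set c : Fin n → ZMod 2 := Pi.single a0 1 + Pi.single a1 1 + Pi.single k 1 with hc3
    have hφc : φ c = 0 := by
      rw [hc3, map_add, map_add, hφsingle, hφsingle, hφsingle, hβa0, hβa1, ← hk]
      exact addself _
    have hcval : ∀ i, c i ≠ 0 ↔ (i = a0 ∨ i = a1 ∨ i = k) := by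
      intro i
      rw [hc3]
      simp only [Pi.add_apply, Pi.single_apply]
      by_cases h0 : i = a0
      · by_cases h1 : i = a1
        · exact absurd (h0.symm.trans h1) h01
        · by_cases h2 : i = k
          · exact absurd (h2.symm.trans h0) hka0
          · rw [if_pos h0, if_neg (h0 ▸ h1 : ¬ i = a1), if_neg (h0 ▸ h2 : ¬ i = k)]
            simp [h0]
      · by_cases h1 : i = a1
        · by_cases h2 : i = k
          · exact absurd (h2.symm.trans h1) hka1
          · rw [if_neg h0, if_pos h1, if_neg h2]
            simp [h1]
        · by_cases h2 : i = k
          · rw [if_neg h0, if_neg h1, if_pos h2]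
            simp [h2]
          · rw [if_neg h0, if_neg h1, if_neg h2]
            simp [h0, h1, h2]
    have hfilter : Finset.filter (fun i => c i ≠ 0) Finset.univ = {a0, a1, k} := by
      ext i
      simp [hcval i]
    have hnorm : hammingNorm c = 3 := by
      rw [hnormdef c, hfilter]
      rw [Finset.card_insert_of_notMem (by simp [h01, Ne.symm hka0]),
        Finset.card_insert_of_notMem (by simp [Ne.symm hka1]), Finset.card_singleton]
    refine ⟨c, ?_, ?_, hnorm⟩
    · rw [hCk]
      simpa only [SetLike.mem_coe, LinearMap.mem_ker] using hφc
    · intro hz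
      rw [hz, hammingNorm_zero] at hnorm
      exact three_ne_zero hnorm.symm
  · -- lower bound
    rintro w ⟨c, hcC, hc0, rfl⟩
    by_contra hlt
    push_neg at hlt
    set s := Finset.filter (fun i => c i ≠ 0) Finset.univ with hs
    have hsnorm : hammingNorm c = s.card := hnormdef c
    have hφc : φ c = 0 := by
      rw [hCk] at hcC
      simpa only [SetLike.mem_coe, LinearMap.mem_ker] using hcC
    have hsum : ∑ i ∈ s, β ^ (i : ℕ) = 0 := by
      calc ∑ i ∈ s, β ^ (i : ℕ) = ∑ i ∈ s, c i • β ^ (i : ℕ) := by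
            refine Finset.sum_congr rfl fun i hi => ?_
            rw [hzm (c i) (Finset.mem_filter.mp hi).2, one_smul]
      _ = ∑ i : Fin n, c i • β ^ (i : ℕ) :=
            Finset.sum_filter_of_ne fun x _ hx h0 => hx (by rw [h0, zero_smul])
      _ = 0 := by rw [← hφ]; exact hφc
    have hpos : 0 < hammingNorm c := hammingNorm_pos_iff.mpr hc0
    have : s.card = 1 ∨ s.card = 2 := by omega
    rcases this with h1 | h2
    · obtain ⟨j, hj⟩ := Finset.card_eq_one.mp h1
      rw [hj, Finset.sum_singleton] at hsum
      exact pow_ne_zero _ hβ0 hsum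
    · obtain ⟨j, l, hjl, hset⟩ := Finset.card_eq_two.mp h2
      rw [hset, Finset.sum_pair (fun he => hjl he)] at hsum
      have he : β ^ (j : ℕ) = β ^ (l : ℕ) := by
        have h3 := addself (β ^ (l : ℕ))
        linear_combination hsum - h3
      have hu : b ^ (j : ℕ) = b ^ (l : ℕ) := by
        ext
        simpa [hb] using he
      have hjlval : (j : ℕ) = (l : ℕ) :=
        pow_injOn_Iio_orderOf (by rw [hob]; exact j.isLt) (by rw [hob]; exact l.isLt) hu
      exact hjl (Fin.ext hjlval)
end

section
/- Let t ≥ 2 be an integer and set T = 2^t − 1. For each odd integer a with 1 ≤ a ≤ T define ε_a = 1 if a = T, and otherwise ε_a = the least nonnegative integer k such that a·2^k ≥ T (that is, ε_a = ⌈log_2(T/a)⌉). Then the number N_t of odd integers a with 1 ≤ a ≤ T for which ε_a is odd equals (2^t + (−1)^{t−1})/3. -/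
/-- `cycEps T a` is `1` if `a = T`, and otherwise the least nonnegative integer `k`
with `a * 2 ^ k ≥ T` (that is, `⌈log₂ (T / a)⌉`). -/
noncomputable def cycEps (T a : ℕ) : ℕ := if a = T then 1 else sInf {k : ℕ | T ≤ a * 2 ^ k}

/-!
For `1 ≤ a ≤ 2 ^ t - 1` one has `ε_a = t - ⌊log₂ a⌋` (also for `a = 2 ^ t - 1`, whose logarithm
is `t - 1`). Let `N_t` count the odd `a < 2 ^ t` with `t - ⌊log₂ a⌋` odd. Passing from `t` to
`t + 1` flips the parity of `t - ⌊log₂ a⌋` for `a < 2 ^ t`, while every new `a ∈ [2 ^ t, 2 ^ (t+1))`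
has `t + 1 - ⌊log₂ a⌋ = 1`; so the `2 ^ t` odd numbers below `2 ^ (t + 1)` split into those
counted by `N_(t+1)` and those counted by `N_t`. Hence `N_(t+1) + N_t = 2 ^ t`, `N_0 = 0`, and
`3 N_t = 2 ^ t - (-1) ^ t`.
-/

open Finset

namespace Nat

lemma log_two_pow_sub_one {t : ℕ} (ht : t ≠ 0) : log 2 (2 ^ t - 1) = t - 1 := by
  apply log_eq_of_pow_le_of_lt_pow
  · have := Nat.pow_lt_pow_right (a := 2) one_lt_two (show t - 1 < t by omega)
    omega
  · rw [Nat.sub_add_cancel (one_le_iff_ne_zero.mpr ht)]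
    exact sub_lt (Nat.two_pow_pos t) one_pos

lemma two_pow_le_mul_two_pow_iff {t a k : ℕ} (ha : a ≠ 0) :
    2 ^ t ≤ a * 2 ^ k ↔ t - log 2 a ≤ k := by
  constructor
  · intro h
    by_contra! hk
    have : a * 2 ^ k < 2 ^ t :=
      calc a * 2 ^ k < 2 ^ (log 2 a + 1) * 2 ^ k :=
            Nat.mul_lt_mul_of_pos_right (lt_pow_succ_log_self one_lt_two a) (Nat.two_pow_pos k)
        _ = 2 ^ (log 2 a + 1 + k) := (pow_add ..).symm
        _ ≤ 2 ^ t := Nat.pow_le_pow_right two_pos (by omega)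
    omega
  · intro hk
    calc 2 ^ t ≤ 2 ^ (log 2 a + k) := Nat.pow_le_pow_right two_pos (by omega)
      _ = 2 ^ log 2 a * 2 ^ k := pow_add ..
      _ ≤ a * 2 ^ k := Nat.mul_le_mul_right _ (pow_log_le_self 2 ha)

/-- `2 ^ t - 1 = a * 2 ^ k` is impossible: for `k = 0` because `a < 2 ^ t - 1`,
for `k > 0` by parity. -/
lemma two_pow_sub_one_le_mul_two_pow_iff {t a k : ℕ} (ha : a < 2 ^ t - 1) :
    2 ^ t - 1 ≤ a * 2 ^ k ↔ 2 ^ t ≤ a * 2 ^ k := by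
  obtain _ | k := k
  · omega
  have ht : t ≠ 0 := by rintro rfl; simp at ha
  have h2t : 2 ∣ 2 ^ t := dvd_pow_self 2 ht
  have h2k : 2 ∣ a * 2 ^ (k + 1) := Dvd.dvd.mul_left (dvd_pow_self 2 k.succ_ne_zero) a
  omega

end Nat

lemma cycEps_two_pow_sub_one {t a : ℕ} (ha : a ≠ 0) (haT : a ≤ 2 ^ t - 1) :
    cycEps (2 ^ t - 1) a = t - Nat.log 2 a := by
  unfold cycEps
  split_ifs with h
  · have ht : t ≠ 0 := by rintro rfl; simp at haT; omega
    rw [h, Nat.log_two_pow_sub_one ht]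
    omega
  · have : {k : ℕ | 2 ^ t - 1 ≤ a * 2 ^ k} = Set.Ici (t - Nat.log 2 a) := by
      ext k
      rw [Set.mem_ofPred_eq, Nat.two_pow_sub_one_le_mul_two_pow_iff (by omega),
        Nat.two_pow_le_mul_two_pow_iff ha, Set.mem_Ici]
    rw [this, csInf_Ici]

lemma card_filter_odd_range_two_mul (m : ℕ) : #{a ∈ range (2 * m) | Odd a} = m := by
  have := Nat.count_modEq_card (b := 2 * m) two_pos 1
  rw [Nat.count_eq_card_filter_range] at this
  convert this using 3 <;> simp [Nat.ModEq, Nat.odd_iff]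

/-- The odd `a < 2 ^ t` whose `ε_a = t - log₂ a` is odd. -/
def oddEpsSet (t : ℕ) : Finset ℕ := {a ∈ range (2 ^ t) | Odd a ∧ Odd (t - Nat.log 2 a)}

lemma card_oddEpsSet_succ_add (t : ℕ) : #(oddEpsSet (t + 1)) + #(oddEpsSet t) = 2 ^ t := by
  have hsucc : oddEpsSet (t + 1) =
      {a ∈ {a ∈ range (2 ^ (t + 1)) | Odd a} | Odd (t + 1 - Nat.log 2 a)} := by
    rw [oddEpsSet, filter_filter]
  have hprev : oddEpsSet t =
      {a ∈ {a ∈ range (2 ^ (t + 1)) | Odd a} | ¬ Odd (t + 1 - Nat.log 2 a)} := by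
    ext a
    simp only [oddEpsSet, mem_filter, mem_range]
    constructor
    · rintro ⟨ha, hodd, hε⟩
      have hlog : Nat.log 2 a < t := Nat.log_lt_of_lt_pow hodd.pos.ne' ha
      refine ⟨⟨ha.trans (Nat.pow_lt_pow_right one_lt_two t.lt_succ_self), hodd⟩, ?_⟩
      rw [show t + 1 - Nat.log 2 a = t - Nat.log 2 a + 1 by omega, Nat.odd_add_one, not_not]
      exact hε
    · rintro ⟨⟨ha, hodd⟩, hε⟩
      have hlog : Nat.log 2 a < t + 1 := Nat.log_lt_of_lt_pow' t.succ_ne_zero ha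
      have hlog' : Nat.log 2 a ≠ t := by rintro h; simp [h] at hε
      refine ⟨Nat.lt_pow_of_log_lt one_lt_two (by omega), hodd, ?_⟩
      rwa [show t + 1 - Nat.log 2 a = t - Nat.log 2 a + 1 by omega, Nat.odd_add_one,
        not_not] at hε
  rw [hsucc, hprev, card_filter_add_card_filter_not, pow_succ, mul_comm,
    card_filter_odd_range_two_mul]

lemma three_mul_card_oddEpsSet (t : ℕ) : 3 * (#(oddEpsSet t) : ℤ) = 2 ^ t - (-1) ^ t := by
  induction t with
  | zero => simp [oddEpsSet]
  | succ t ih =>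
    have hsucc : (#(oddEpsSet (t + 1)) : ℤ) = 2 ^ t - #(oddEpsSet t) := by
      rw [eq_sub_iff_add_eq]
      exact_mod_cast card_oddEpsSet_succ_add t
    rw [hsucc, mul_sub, ih, pow_succ, pow_succ]
    ring

lemma setOf_odd_cycEps_eq_oddEpsSet (t : ℕ) :
    {a : ℕ | 1 ≤ a ∧ a ≤ 2 ^ t - 1 ∧ Odd a ∧ Odd (cycEps (2 ^ t - 1) a)} = oddEpsSet t := by
  ext a
  simp only [Set.mem_ofPred_eq, oddEpsSet, coe_filter, mem_range]
  constructor
  · rintro ⟨h1, h2, hodd, hε⟩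
    rw [cycEps_two_pow_sub_one (by omega) h2] at hε
    exact ⟨by omega, hodd, hε⟩
  · rintro ⟨ha, hodd, hε⟩
    have h1 : 1 ≤ a := hodd.pos
    rw [← cycEps_two_pow_sub_one (by omega) (by omega)] at hε
    exact ⟨h1, by omega, hodd, hε⟩

theorem stmt_5_general (t : ℕ) :
    (({a : ℕ | 1 ≤ a ∧ a ≤ 2 ^ t - 1 ∧ Odd a ∧ Odd (cycEps (2 ^ t - 1) a)}.ncard : ℤ)) =
      (2 ^ t + (-1 : ℤ) ^ (t - 1)) / 3 := by
  rw [setOf_odd_cycEps_eq_oddEpsSet, Set.ncard_coe_finset]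
  have hcount := three_mul_card_oddEpsSet t
  obtain _ | n := t
  · -- truncated `0 - 1 = 0`, so the right-hand side is `(1 + 1) / 3 = 0`
    norm_num at hcount ⊢
    omega
  · rw [pow_succ (-1 : ℤ), mul_neg_one, sub_neg_eq_add] at hcount
    rw [Nat.add_sub_cancel, ← hcount, Int.mul_ediv_cancel_left _ three_ne_zero]

theorem stmt_5 (t : ℕ) (ht : 2 ≤ t) :
    (({a : ℕ | 1 ≤ a ∧ a ≤ 2 ^ t - 1 ∧ Odd a ∧ Odd (cycEps (2 ^ t - 1) a)}.ncard : ℤ)) =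
      (2 ^ t + (-1 : ℤ) ^ (t - 1)) / 3 :=
  stmt_5_general t
end

section
/- Let m and h be positive integers satisfying Condition (R), set n = 2^m − 1, A = {0,1,...,2^h − 1} and B = { i + 2^{m−h} : i ∈ A }. Then (1) for every j ∈ B, the 2-cyclotomic coset C_j modulo n has exactly m elements, and (2) for any two distinct elements i, j ∈ B, C_i ∩ C_j = ∅. -/
lemma pw {a b : ℕ} (h : a ≤ b) : (2:ℕ)^a ≤ 2^b := Nat.pow_le_pow_right (by norm_num) h

lemma ps {a b c : ℕ} (h : a = b + c) : (2:ℕ)^a = 2^b * 2^c := by subst h; exact pow_add 2 b c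

lemma pd {b : ℕ} (h : 1 ≤ b) : (2:ℕ)^b = 2 * 2^(b-1) := by
  have := ps (show b = 1 + (b-1) by omega); simpa using this

lemma p2m1 (m n : ℕ) (hn : 2^m = n + 1) : (2:ℕ)^m ≡ 1 [MOD n] := by
  exact ((Nat.modEq_iff_dvd' (Nat.one_le_two_pow)).mpr ⟨1, by omega⟩).symm

/-- Core lemma: a shift of an element of B is congruent to an element of B only trivially. -/
lemma key_lemma (m h : ℕ) (hm : 4*h+1 ≤ m) (hh : 0 < h) (i1 i2 k : ℕ)
    (h1 : i1 < 2^h) (h2 : i2 < 2^h) (hk : k < m)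
    (heq : (i1 + 2^(m-h)) * 2^k ≡ i2 + 2^(m-h) [MOD 2^m - 1]) : k = 0 ∧ i1 = i2 := by
  have hn1 : (1:ℕ) ≤ 2^m := Nat.one_le_two_pow
  have h2mod : (2:ℕ)^m ≡ 1 [MOD 2^m - 1] := p2m1 m (2^m-1) (by omega)
  -- j2 < n
  have P1 : (2:ℕ)^h ≤ 2^(m-2) := pw (by omega)
  have P2 : (2:ℕ)^(m-h) ≤ 2^(m-1) := pw (by omega)
  have C1 : (2:ℕ)^m = 2*2^(m-1) := pd (by omega)
  have C2 : (2:ℕ)^(m-1) = 2*2^(m-2) := pd (by omega)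
  have C3 : (8:ℕ) ≤ 2^(m-2) := by
    have : (2:ℕ)^3 ≤ 2^(m-2) := pw (by omega)
    simpa using this
  have hj2 : i2 + 2^(m-h) < 2^m - 1 := by omega
  have heq' : (i1 + 2^(m-h)) * 2^k % (2^m-1) = i2 + 2^(m-h) := by
    have h' : (i1 + 2^(m-h)) * 2^k % (2^m-1) = (i2 + 2^(m-h)) % (2^m-1) := heq
    rwa [Nat.mod_eq_of_lt hj2] at h'
  rcases Nat.lt_or_ge k h with hkh | hkh
  · -- Case k < h : no wraparound
    have dec : (i1 + 2^(m-h)) * 2^k = i1*2^k + 2^(m-h+k) := by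
      rw [add_mul, ← pow_add]
    have B1 : i1 * 2^k < 2^h * 2^k :=
      mul_lt_mul_of_pos_right h1 (pow_pos (by norm_num) k)
    have B2 : (2:ℕ)^h * 2^k = 2^(h+k) := (pow_add 2 h k).symm
    have B3 : (2:ℕ)^(h+k) ≤ 2^(m-2) := pw (by omega)
    have B4 : (2:ℕ)^(m-h+k) ≤ 2^(m-1) := pw (by omega)
    have hv : i1*2^k + 2^(m-h+k) < 2^m - 1 := by omega
    rw [dec, Nat.mod_eq_of_lt hv] at heq'
    rcases Nat.eq_zero_or_pos k with rfl | hk0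
    · simp only [pow_zero, mul_one, add_zero] at heq'
      exact ⟨rfl, by omega⟩
    · exfalso
      have D1 : (2:ℕ)^(m-h+1) ≤ 2^(m-h+k) := pw (by omega)
      have D2 : (2:ℕ)^(m-h+1) = 2*2^(m-h) := by
        have := pd (show 1 ≤ m-h+1 by omega); simpa using this
      have D3 : (2:ℕ)^h ≤ 2^(m-h) := pw (by omega)
      omega
  · -- Case h ≤ k < m : wraparound
    exfalso
    set a := i1 % 2^(m-k) with ha_def
    set b := i1 / 2^(m-k) with hb_def
    have hmodlt : a < 2^(m-k) := Nat.mod_lt _ (pow_pos (by norm_num) _)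
    have habd : i1 = a + 2^(m-k) * b := (Nat.mod_add_div i1 (2^(m-k))).symm
    clear_value a b
    have e1 : (2:ℕ)^(m-k) * 2^k = 2^m := by
      rw [← pow_add]
      exact congrArg (fun t => (2:ℕ)^t) (by omega : m-k+k = m)
    have e2 : (2:ℕ)^(m-h) * 2^k = 2^(k-h) * 2^m := by
      rw [← pow_add, ← pow_add]
      exact congrArg (fun t => (2:ℕ)^t) (by omega : m-h+k = k-h+m)
    have step : (i1 + 2^(m-h))*2^k ≡ a*2^k + b + 2^(k-h) [MOD 2^m - 1] := by
      calc (i1 + 2^(m-h))*2^k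
          = a*2^k + b*(2^(m-k)*2^k) + 2^(m-h)*2^k := by rw [habd]; ring
        _ = a*2^k + b*2^m + 2^(k-h)*2^m := by rw [e1, e2]
        _ ≡ a*2^k + b*1 + 2^(k-h)*1 [MOD 2^m-1] :=
            ((Nat.ModEq.refl (a*2^k)).add (h2mod.mul_left b)).add (h2mod.mul_left (2^(k-h)))
        _ = a*2^k + b + 2^(k-h) := by ring
    have E : a*2^k + b + 2^(k-h) ≡ i2 + 2^(m-h) [MOD 2^m - 1] := step.symm.trans heq
    have Fa : a*2^k + 2^k ≤ 2^m := by
      have : (a+1)*2^k ≤ 2^(m-k)*2^k := Nat.mul_le_mul_right _ (by omega)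
      rw [e1] at this; nlinarith [this]
    rcases le_or_gt k (m-h) with hk2 | hk2
    · -- Sub-case h ≤ k ≤ m-h : b = 0, a = i1
      have ha' : a = i1 := by
        rw [ha_def]; exact Nat.mod_eq_of_lt (lt_of_lt_of_le h1 (pw (by omega)))
      have hb' : b = 0 := by
        rw [hb_def]; exact Nat.div_eq_of_lt (lt_of_lt_of_le h1 (pw (by omega)))
      rw [ha', hb'] at E
      have F1 : i1*2^k + 2^k ≤ 2^(h+k) := by
        have : (i1+1)*2^k ≤ 2^h*2^k := Nat.mul_le_mul_right _ (by omega)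
        rw [← pow_add] at this; nlinarith [this]
      have F2 : (2:ℕ)^(k-h) ≤ 2^k := pw (by omega)
      rcases le_or_gt k (m-2*h-1) with hk3 | hk3
      · -- size contradiction
        have F3 : 2*2^(h+k) ≤ 2^(m-h) := by
          have : (2:ℕ)^(h+k+1) ≤ 2^(m-h) := pw (by omega)
          rw [pd (show 1 ≤ h+k+1 by omega)] at this
          simpa using this
        have F35 : (2:ℕ)^(m-h) ≤ 2^m := pw (by omega)
        have Fp1 : (1:ℕ) ≤ 2^(h+k) := Nat.one_le_two_pow
        have Fp2 : (1:ℕ) ≤ 2^(k-h) := Nat.one_le_two_pow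
        have Fp3 : (1:ℕ) ≤ 2^(m-h) := Nat.one_le_two_pow
        have hv : i1*2^k + 0 + 2^(k-h) < 2^m - 1 := by omega
        have E' : i1*2^k + 0 + 2^(k-h) = i2 + 2^(m-h) := by
          have h' : (i1*2^k + 0 + 2^(k-h)) % (2^m-1) = (i2 + 2^(m-h)) % (2^m-1) := E
          rwa [Nat.mod_eq_of_lt hv, Nat.mod_eq_of_lt hj2] at h'
        omega
      · -- divisibility argument
        have F4 : (2:ℕ)^(k-h) ≤ 2^(k-1) := pw (by omega)
        have F5 : (2:ℕ)^k = 2*2^(k-1) := pd (by omega)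
        have F6 : (4:ℕ) ≤ 2^(k-1) := by
          have : (2:ℕ)^2 ≤ 2^(k-1) := pw (by omega)
          simpa using this
        have F7 : (2:ℕ)^(h+k) ≤ 2^m := pw (by omega)
        have hv : i1*2^k + 0 + 2^(k-h) < 2^m - 1 := by omega
        have E' : i1*2^k + 0 + 2^(k-h) = i2 + 2^(m-h) := by
          have h' : (i1*2^k + 0 + 2^(k-h)) % (2^m-1) = (i2 + 2^(m-h)) % (2^m-1) := E
          rwa [Nat.mod_eq_of_lt hv, Nat.mod_eq_of_lt hj2] at h'
        rw [add_zero] at E'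
        have d1 : (2:ℕ)^(k-h) ∣ i1*2^k := Dvd.dvd.mul_left (pow_dvd_pow 2 (by omega)) i1
        have d2 : (2:ℕ)^(k-h) ∣ 2^(m-h) := pow_dvd_pow 2 (by omega)
        have hd : (2:ℕ)^(k-h) ∣ i2 := by
          have : i2 = (i1*2^k + 2^(k-h)) - 2^(m-h) := by omega
          rw [this]
          exact Nat.dvd_sub (dvd_add d1 dvd_rfl) d2
        have hi2 : i2 = 0 := Nat.eq_zero_of_dvd_of_lt hd (lt_of_lt_of_le h2 (pw (by omega)))
        rw [hi2, zero_add] at E'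
        have e4 : (2:ℕ)^k = 2^(k-h)*2^h := ps (by omega)
        have e5 : (2:ℕ)^(m-h) = 2^(k-h)*2^(m-k) := ps (by omega)
        have E3 : 2^(k-h)*(i1*2^h+1) = 2^(k-h)*2^(m-k) := by
          calc (2:ℕ)^(k-h)*(i1*2^h+1) = i1*(2^(k-h)*2^h) + 2^(k-h) := by ring
            _ = i1*2^k + 2^(k-h) := by rw [← e4]
            _ = 2^(m-h) := E'
            _ = 2^(k-h)*2^(m-k) := e5
        have E4 : i1*2^h + 1 = 2^(m-k) :=
          Nat.eq_of_mul_eq_mul_left (pow_pos (by norm_num) _) E3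
        have o1 : (2:ℕ)^h = 2*2^(h-1) := pd hh
        have o2 : (2:ℕ)^(m-k) = 2*2^(m-k-1) := pd (by omega)
        have o3 : i1*2^h = 2*(i1*2^(h-1)) := by rw [o1]; ring
        omega
    · -- Sub-case m-h < k < m
      have hs : 1 ≤ m - k := by omega
      have hb : b < 2^(h-(m-k)) := by
        rw [hb_def]
        apply Nat.div_lt_iff_lt_mul (pow_pos (by norm_num) _) |>.mpr
        calc i1 < 2^h := h1
          _ = 2^(h-(m-k)) * 2^(m-k) := ps (by omega)
      have G1 : (2:ℕ)^(m-h+1) ≤ 2^k := pw (by omega)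
      have G2 : (2:ℕ)^(m-h+1) = 2*2^(m-h) := by
        have := pd (show 1 ≤ m-h+1 by omega); simpa using this
      have G3 : (2:ℕ)^h ≤ 2^(m-h) := pw (by omega)
      have G4 : (2:ℕ)^(h-(m-k)) ≤ 2^(h-1) := pw (by omega)
      have G5 : (2:ℕ)^(k-h) ≤ 2^(m-h-1) := pw (by omega)
      have G6 : (2:ℕ)^(h-1) ≤ 2^(m-h-1) := pw (by omega)
      have G7 : (2:ℕ)^(m-h) = 2*2^(m-h-1) := pd (by omega)
      have Gp1 : (1:ℕ) ≤ 2^(m-h-1) := Nat.one_le_two_pow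
      have Gp2 : (1:ℕ) ≤ 2^k := Nat.one_le_two_pow
      have Gp3 : (1:ℕ) ≤ 2^(k-h) := Nat.one_le_two_pow
      have Gp4 : (1:ℕ) ≤ 2^(h-1) := Nat.one_le_two_pow
      have Gp5 : (1:ℕ) ≤ 2^(h-(m-k)) := Nat.one_le_two_pow
      have hv : a*2^k + b + 2^(k-h) < 2^m - 1 := by omega
      have E' : a*2^k + b + 2^(k-h) = i2 + 2^(m-h) := by
        have h' : (a*2^k + b + 2^(k-h)) % (2^m-1) = (i2 + 2^(m-h)) % (2^m-1) := E
        rwa [Nat.mod_eq_of_lt hv, Nat.mod_eq_of_lt hj2] at h'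
      rcases Nat.eq_zero_or_pos a with h0 | hpos
      · rw [h0, zero_mul, zero_add] at E'
        omega
      · have hge : 2^k ≤ a*2^k := Nat.le_mul_of_pos_left _ hpos
        omega

lemma red_exp (m n j K : ℕ) (hn : 2^m = n + 1) :
    j * 2^K ≡ j * 2^(K % m) [MOD n] := by
  have h1 : (2:ℕ)^m ≡ 1 [MOD n] := p2m1 m n hn
  have h2 : (2:ℕ)^K = (2^m)^(K/m) * 2^(K % m) := by
    rw [← pow_mul, ← pow_add]
    exact congrArg (fun t => (2:ℕ)^t) (Nat.div_add_mod K m).symm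
  calc j*2^K = j*((2^m)^(K/m) * 2^(K%m)) := by rw [h2]
    _ ≡ j*(1^(K/m) * 2^(K%m)) [MOD n] :=
        Nat.ModEq.mul_left j (Nat.ModEq.mul_right _ (h1.pow _))
    _ = j*2^(K%m) := by rw [one_pow, one_mul]

lemma coset_eq (m n j : ℕ) (hn : 2^m = n+1) (hm : 0 < m) :
    cycCoset n j = ↑((Finset.range m).image (fun k => j*2^k % n)) := by
  ext x
  simp only [cycCoset, Set.mem_setOf_eq, Finset.coe_image, Set.mem_image, Finset.mem_coe,
    Finset.mem_range]
  constructor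
  · rintro ⟨K, rfl⟩
    exact ⟨K % m, Nat.mod_lt _ hm, (red_exp m n j K hn).symm⟩
  · rintro ⟨k, _, rfl⟩
    exact ⟨k, rfl⟩

lemma inj_aux (m h n : ℕ) (hm4 : 4*h+1 ≤ m) (hh : 0 < h) (hn : 2^m = n+1)
    (i : ℕ) (hi : i < 2^h) (a b : ℕ) (ha : a < m) (hb : b < m) (hab : a ≤ b)
    (he : (i + 2^(m-h))*2^a % n = (i + 2^(m-h))*2^b % n) : a = b := by
  set j := i + 2^(m-h) with hj
  have he' : j*2^a ≡ j*2^b [MOD n] := he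
  have hmod := he'.mul_right (2^(m-a))
  have e1 : j*2^a*2^(m-a) = j*2^m := by
    rw [mul_assoc, ← pow_add, show a+(m-a) = m by omega]
  have e2 : j*2^b*2^(m-a) = j*2^(b-a)*2^m := by
    rw [mul_assoc, ← pow_add, mul_assoc, ← pow_add, show b+(m-a) = (b-a)+m by omega]
  rw [e1, e2] at hmod
  have h1 : (2:ℕ)^m ≡ 1 [MOD n] := p2m1 m n hn
  have A : j*2^(b-a) ≡ j [MOD n] := by
    calc j*2^(b-a) = j*2^(b-a)*1 := by ring
      _ ≡ j*2^(b-a)*2^m [MOD n] := Nat.ModEq.mul_left _ h1.symm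
      _ ≡ j*2^m [MOD n] := hmod.symm
      _ ≡ j*1 [MOD n] := Nat.ModEq.mul_left _ h1
      _ = j := by ring
  have A' : (i + 2^(m-h))*2^(b-a) ≡ i + 2^(m-h) [MOD 2^m - 1] := by
    have : n = 2^m - 1 := by omega
    rw [← this]; exact A
  have := (key_lemma m h hm4 hh i i (b-a) hi hi (by omega) A').1
  omega

lemma cross_lemma (m h n : ℕ) (hm4 : 4*h+1 ≤ m) (hh : 0 < h) (hn : 2^m = n+1)
    (i1 i2 : ℕ) (hi1 : i1 < 2^h) (hi2 : i2 < 2^h) (K1 K2 : ℕ)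
    (he : (i1 + 2^(m-h))*2^K1 % n = (i2 + 2^(m-h))*2^K2 % n) : i1 = i2 := by
  have hm : 0 < m := by omega
  set j1 := i1 + 2^(m-h) with hj1
  set j2 := i2 + 2^(m-h) with hj2
  have he' : j1*2^K1 ≡ j2*2^K2 [MOD n] := he
  have h1 : (2:ℕ)^m ≡ 1 [MOD n] := p2m1 m n hn
  set b := K2 % m with hbdef
  have hb : b < m := Nat.mod_lt _ hm
  have he2 : j1*2^K1 ≡ j2*2^b [MOD n] := he'.trans (red_exp m n j2 K2 hn)
  have hmod := he2.mul_right (2^(m-b))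
  have e2 : j2*2^b*2^(m-b) = j2*2^m := by
    rw [mul_assoc, ← pow_add, show b+(m-b) = m by omega]
  have e1 : j1*2^K1*2^(m-b) = j1*2^(K1+(m-b)) := by
    rw [mul_assoc, ← pow_add]
  rw [e1, e2] at hmod
  have A : j1*2^((K1+(m-b)) % m) ≡ j2 [MOD n] := by
    calc j1*2^((K1+(m-b)) % m) ≡ j1*2^(K1+(m-b)) [MOD n] := (red_exp m n j1 _ hn).symm
      _ ≡ j2*2^m [MOD n] := hmod
      _ ≡ j2*1 [MOD n] := Nat.ModEq.mul_left _ h1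
      _ = j2 := by ring
  have A' : (i1 + 2^(m-h))*2^((K1+(m-b)) % m) ≡ i2 + 2^(m-h) [MOD 2^m - 1] := by
    have hne : n = 2^m - 1 := by omega
    rw [← hne]; exact A
  exact (key_lemma m h hm4 hh i1 i2 _ hi1 hi2 (Nat.mod_lt _ hm) A').2

theorem stmt_6 (m h : ℕ) (hm : 0 < m) (hh : 0 < h)
    (hR : (m % 4 = 1 → 4 * h ≤ m - 1) ∧ (m % 4 = 2 → 4 * h ≤ m - 2) ∧
          (m % 4 = 3 → 4 * h ≤ m - 3) ∧ (m % 4 = 0 → 4 * h ≤ m - 4))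
    (n : ℕ) (hn : n = 2 ^ m - 1)
    (B : Set ℕ) (hB : B = {j | ∃ i < 2 ^ h, j = i + 2 ^ (m - h)}) :
    (∀ j ∈ B, (cycCoset n j).ncard = m) ∧
    (∀ i ∈ B, ∀ j ∈ B, i ≠ j → cycCoset n i ∩ cycCoset n j = ∅) := by
  obtain ⟨r1, r2, r3, r4⟩ := hR
  have hm4 : 4*h + 1 ≤ m := by omega
  have hone : (1:ℕ) ≤ 2^m := Nat.one_le_two_pow
  have hn' : 2^m = n + 1 := by omega
  subst hB
  constructor
  · rintro j ⟨i, hi, rfl⟩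
    rw [coset_eq m n _ hn' hm, Set.ncard_coe_finset]
    rw [Finset.card_image_of_injOn, Finset.card_range]
    intro x hx y hy hxy
    simp only [Finset.coe_range, Set.mem_Iio] at hx hy
    rcases le_total x y with hle | hle
    · exact inj_aux m h n hm4 hh hn' i hi x y hx hy hle hxy
    · exact (inj_aux m h n hm4 hh hn' i hi y x hy hx hle hxy.symm).symm
  · rintro j1 ⟨i1, hi1, rfl⟩ j2 ⟨i2, hi2, rfl⟩ hne
    rw [Set.eq_empty_iff_forall_notMem]
    rintro x ⟨⟨K1, hx1⟩, ⟨K2, hx2⟩⟩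
    exact hne (by rw [cross_lemma m h n hm4 hh hn' i1 i2 hi1 hi2 K1 K2 (hx1 ▸ hx2 ▸ rfl)])
end

section
/- Let m and h be positive integers satisfying Condition (O), set n = 2^m − 1 and A = {0,1,...,2^h − 1}. Then for every i ∈ A the cardinality of the 2-cyclotomic coset C_{i+2^{m−h}} modulo n lies in {m/3, m/2, m}. Moreover, if one of the following holds: (i) gcd(6,m) = 1; (ii) gcd(6,m) = 2 and 4h ≤ m; (iii) gcd(6,m) = 3 and 3h ≤ m; (iv) gcd(6,m) = 6 and 4h ≤ m, then |C_{i+2^{m−h}}| = m for every i ∈ A. -/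
/-!
The coset `C_j` modulo `n` is the orbit of `j % n` under doubling modulo `n`, so its size is the
minimal period `d`, the least `d > 0` with `n ∣ j * (2 ^ d - 1)`; for `n = 2 ^ m - 1` it divides `m`.
For `j = i + 2 ^ (m - h)`, Condition (O) makes `j * (2 ^ d - 1) < 2 ^ m - 1` whenever `4 * d ≤ m`,
which leaves `d ∈ {m, m / 2, m / 3}`. If `m = 2 * d` or `m = 3 * d`, then
`2 ^ m - 1 = (2 ^ d - 1) * Φ` with `Φ = 2 ^ d + 1` or `Φ = 2 ^ (2 * d) + 2 ^ d + 1`, so `Φ ∣ j`;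
under the extra hypotheses, however, `j` is congruent modulo `Φ` to minus a number strictly
between `0` and `Φ`.
-/

open Function

def doubleMod (n x : ℕ) : ℕ := x * 2 % n

lemma doubleMod_iterate (n j k : ℕ) : (doubleMod n)^[k] (j % n) = j * 2 ^ k % n := by
  induction k with
  | zero => simp
  | succ k ih => rw [iterate_succ_apply', ih, doubleMod, Nat.mod_mul_mod, pow_succ, mul_assoc]

lemma isPeriodicPt_doubleMod_iff {n j p : ℕ} :
    IsPeriodicPt (doubleMod n) p (j % n) ↔ n ∣ j * (2 ^ p - 1) := by
  rw [IsPeriodicPt, IsFixedPt, doubleMod_iterate, Nat.mul_sub_one,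
    ← Nat.modEq_iff_dvd' (Nat.le_mul_of_pos_right _ (by positivity))]
  exact ⟨Nat.ModEq.symm, Nat.ModEq.symm⟩

lemma ncard_cycCoset {n j p : ℕ} (hp : 0 < p) (hdvd : n ∣ j * (2 ^ p - 1)) :
    (cycCoset n j).ncard = minimalPeriod (doubleMod n) (j % n) := by
  have hpos : 0 < minimalPeriod (doubleMod n) (j % n) :=
    (isPeriodicPt_doubleMod_iff.mpr hdvd).minimalPeriod_pos hp
  have horbit : cycCoset n j =
      (fun k ↦ (doubleMod n)^[k] (j % n)) '' Set.Iio (minimalPeriod (doubleMod n) (j % n)) := by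
    ext x
    simp only [cycCoset, Set.mem_ofPred_eq, Set.mem_image, Set.mem_Iio]
    constructor
    · rintro ⟨k, rfl⟩
      exact ⟨_, Nat.mod_lt k hpos, by rw [iterate_mod_minimalPeriod_eq, doubleMod_iterate]⟩
    · rintro ⟨k, -, rfl⟩
      exact ⟨k, doubleMod_iterate n j k⟩
  rw [horbit, iterate_injOn_Iio_minimalPeriod.ncard_image, Set.ncard_Iio_nat]

theorem ncard_cycCoset_mersenne {m : ℕ} (hm : 0 < m) (j : ℕ) :
    0 < (cycCoset (2 ^ m - 1) j).ncard ∧ (cycCoset (2 ^ m - 1) j).ncard ∣ m ∧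
      2 ^ m - 1 ∣ j * (2 ^ (cycCoset (2 ^ m - 1) j).ncard - 1) := by
  have hper : IsPeriodicPt (doubleMod (2 ^ m - 1)) m (j % (2 ^ m - 1)) :=
    isPeriodicPt_doubleMod_iff.mpr (dvd_mul_left _ _)
  rw [ncard_cycCoset hm (dvd_mul_left _ _)]
  exact ⟨hper.minimalPeriod_pos hm, hper.minimalPeriod_dvd,
    isPeriodicPt_doubleMod_iff.mp (isPeriodicPt_minimalPeriod _ _)⟩

section
variable {m h i d : ℕ}

lemma mul_two_pow_sub_one_lt (hi : i < 2 ^ h) (hdh : d ≤ h) (hhm : 2 * h < m)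
    (hd : d = h → 4 * h ≤ m) : (i + 2 ^ (m - h)) * (2 ^ d - 1) < 2 ^ m - 1 := by
  have hsplit : 2 ^ m = 2 ^ (m - h) * 2 ^ h := by rw [← pow_add, Nat.sub_add_cancel (by omega)]
  have hy : 1 ≤ 2 ^ d := Nat.one_le_two_pow
  have hx : 2 * 2 ^ h ≤ 2 ^ (m - h) := by
    rw [← pow_succ']; exact Nat.pow_le_pow_right (by norm_num) (by omega)
  rw [hsplit]
  zify [hy, Nat.one_le_two_pow.trans_eq hsplit]
  rcases hdh.lt_or_eq with hlt | rfl
  · have hyx : 2 * 2 ^ d ≤ 2 ^ h := by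
      rw [← pow_succ']; exact Nat.pow_le_pow_right (by norm_num) (by omega)
    zify at hi hyx hx hy
    nlinarith
  · have hx3 : (2 ^ d) ^ 3 ≤ 2 ^ (m - d) := by
      rw [← pow_mul]; exact Nat.pow_le_pow_right (by norm_num) (by omega)
    zify at hi hx3 hx hy
    nlinarith [mul_nonneg (sub_nonneg.mpr hy) (sq_nonneg ((2 : ℤ) ^ d)),
      mul_nonneg (sub_nonneg.mpr (Int.le_sub_one_of_lt hi)) (sub_nonneg.mpr hy)]

lemma not_dvd_of_four_mul_le (hhm : 2 * h < m) (hmh : m ≤ 4 * h) (hi : i < 2 ^ h) (hd : 0 < d)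
    (hdm : 4 * d ≤ m) : ¬ 2 ^ m - 1 ∣ (i + 2 ^ (m - h)) * (2 ^ d - 1) :=
  Nat.not_dvd_of_pos_of_lt
    (Nat.mul_pos (by positivity) (Nat.sub_pos_of_lt (Nat.one_lt_two_pow hd.ne')))
    (mul_two_pow_sub_one_lt hi (by omega) hhm (by omega))

lemma not_dvd_of_eq_four_mul (hh : 0 < h) (hi : i < 2 ^ h) :
    ¬ 2 ^ (4 * h) - 1 ∣ (i + 2 ^ (3 * h)) * (2 ^ (2 * h) - 1) := by
  have hfac : 2 ^ (4 * h) - 1 = (2 ^ (2 * h) + 1) * (2 ^ (2 * h) - 1) := by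
    rw [← Nat.sq_sub_sq, one_pow, ← pow_mul]; ring_nf
  rw [hfac, Nat.mul_dvd_mul_iff_right (Nat.sub_pos_of_lt (Nat.one_lt_two_pow (by omega)))]
  -- `2 ^ (3 * h) ≡ -2 ^ h` modulo `2 ^ (2 * h) + 1`
  have hsum : 2 ^ (2 * h) + 1 ∣ (i + 2 ^ (3 * h)) + (2 ^ h - i) := by
    refine ⟨2 ^ h, ?_⟩
    rw [add_mul, one_mul, ← pow_add, show 2 * h + h = 3 * h by ring]
    omega
  have hlt : 2 ^ h < 2 ^ (2 * h) + 1 :=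
    Nat.lt_succ_of_le (Nat.pow_le_pow_right (by norm_num) (by omega))
  exact fun hj ↦ Nat.not_dvd_of_pos_of_lt (by omega) (by omega) ((Nat.dvd_add_right hj).mp hsum)

lemma not_dvd_of_eq_three_mul {t : ℕ} (hh : 0 < h) (hht : h ≤ t) (hi : i < 2 ^ h) :
    ¬ 2 ^ (3 * t) - 1 ∣ (i + 2 ^ (3 * t - h)) * (2 ^ t - 1) := by
  have hfac : 2 ^ (3 * t) - 1 = (2 ^ (2 * t) + 2 ^ t + 1) * (2 ^ t - 1) := by
    have hy : 1 ≤ 2 ^ t := Nat.one_le_two_pow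
    rw [mul_comm 3, mul_comm 2, pow_mul, pow_mul]
    zify [hy, Nat.one_le_pow 3 _ hy]
    ring
  rw [hfac, Nat.mul_dvd_mul_iff_right (Nat.sub_pos_of_lt (Nat.one_lt_two_pow (by omega)))]
  obtain ⟨r, rfl⟩ : ∃ r, t = h + r := ⟨t - h, by omega⟩
  have hi' : i < 2 ^ (h + r + r) := hi.trans_le (Nat.pow_le_pow_right (by norm_num) (by omega))
  have hr : 0 < 2 ^ r := Nat.two_pow_pos r
  -- `2 ^ (3 * t - h) = 2 ^ (2 * t + r) ≡ -2 ^ (t + r) - 2 ^ r` modulo `2 ^ (2 * t) + 2 ^ t + 1`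
  have hsum : 2 ^ (2 * (h + r)) + 2 ^ (h + r) + 1 ∣
      (i + 2 ^ (3 * (h + r) - h)) + (2 ^ (h + r + r) + 2 ^ r - i) := by
    refine ⟨2 ^ r, ?_⟩
    rw [add_mul, add_mul, one_mul, ← pow_add, ← pow_add,
      show 3 * (h + r) - h = 2 * (h + r) + r by omega]
    omega
  have hlt : 2 ^ (h + r + r) < 2 ^ (2 * (h + r)) := Nat.pow_lt_pow_right (by norm_num) (by omega)
  have hle : 2 ^ r ≤ 2 ^ (h + r) := Nat.pow_le_pow_right (by norm_num) (by omega)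
  exact fun hj ↦ Nat.not_dvd_of_pos_of_lt (by omega) (by omega) ((Nat.dvd_add_right hj).mp hsum)

lemma eq_or_two_mul_eq_or_three_mul_eq (hhm : 2 * h < m) (hmh : m ≤ 4 * h) (hi : i < 2 ^ h)
    (hd : 0 < d) (hdm : d ∣ m) (hdvd : 2 ^ m - 1 ∣ (i + 2 ^ (m - h)) * (2 ^ d - 1)) :
    d = m ∨ 2 * d = m ∨ 3 * d = m := by
  obtain ⟨q, rfl⟩ := hdm
  by_contra hne
  have hq : 4 ≤ q := by
    by_contra! hq
    interval_cases q <;> omega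
  exact not_dvd_of_four_mul_le hhm hmh hi hd (mul_comm 4 d ▸ Nat.mul_le_mul_left d hq) hdvd

end

theorem stmt_9 (m h : ℕ) (hm : 0 < m) (hh : 0 < h)
    (hO : (m % 4 = 1 → m + 3 ≤ 4 * h ∧ 2 * h ≤ m - 1) ∧
          (m % 4 = 2 → m + 2 ≤ 4 * h ∧ 2 * h ≤ m - 2) ∧
          (m % 4 = 3 → m + 1 ≤ 4 * h ∧ 2 * h ≤ m - 3) ∧
          (m % 4 = 0 → m ≤ 4 * h ∧ 2 * h ≤ m - 4))
    (n : ℕ) (hn : n = 2 ^ m - 1) :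
    (∀ i < 2 ^ h, (cycCoset n (i + 2 ^ (m - h))).ncard ∈ ({m / 3, m / 2, m} : Set ℕ)) ∧
    ((Nat.gcd 6 m = 1 ∨ (Nat.gcd 6 m = 2 ∧ 4 * h ≤ m) ∨ (Nat.gcd 6 m = 3 ∧ 3 * h ≤ m) ∨
        (Nat.gcd 6 m = 6 ∧ 4 * h ≤ m)) →
      ∀ i < 2 ^ h, (cycCoset n (i + 2 ^ (m - h))).ncard = m) := by
  subst hn
  have hhm : 2 * h < m := by omega
  have hmh : m ≤ 4 * h := by omega
  have key : ∀ i < 2 ^ h, ∃ d, (cycCoset (2 ^ m - 1) (i + 2 ^ (m - h))).ncard = d ∧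
      2 ^ m - 1 ∣ (i + 2 ^ (m - h)) * (2 ^ d - 1) ∧ (d = m ∨ 2 * d = m ∨ 3 * d = m) := by
    intro i hi
    obtain ⟨hd, hdm, hdvd⟩ := ncard_cycCoset_mersenne hm (i + 2 ^ (m - h))
    exact ⟨_, rfl, hdvd, eq_or_two_mul_eq_or_three_mul_eq hhm hmh hi hd hdm hdvd⟩
  refine ⟨fun i hi ↦ ?_, fun hg i hi ↦ ?_⟩
  · obtain ⟨d, hcard, -, hd⟩ := key i hi
    simp only [hcard, Set.mem_insert_iff, Set.mem_singleton_iff]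
    omega
  · obtain ⟨d, hcard, hdvd, hd | hd | hd⟩ := key i hi
    · exact hcard.trans hd
    · have h2 : 2 ∣ Nat.gcd 6 m := Nat.dvd_gcd (by norm_num) ⟨d, hd.symm⟩
      obtain rfl : m = 4 * h := by omega
      obtain rfl : d = 2 * h := by omega
      rw [show 4 * h - h = 3 * h by omega] at hdvd
      exact absurd hdvd (not_dvd_of_eq_four_mul hh hi)
    · have h3 : 3 ∣ Nat.gcd 6 m := Nat.dvd_gcd (by norm_num) ⟨d, hd.symm⟩
      have hhd : h ≤ d := by omega
      subst hd
      exact absurd hdvd (not_dvd_of_eq_three_mul hh hhd hi)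
end

section
/- Let m and h be positive integers satisfying Condition (O), set n = 2^m − 1, A = {0,1,...,2^h − 1}, and for i ∈ A write j = i + 2^{m−h}. (1) If gcd(6,m) = 2 and 4h ≥ m + 2, then the 2-cyclotomic coset C_j modulo n has cardinality m/2 if and only if j = 2^{m/2−h} + 2^{m−h}, and cardinality m otherwise. (2) If gcd(6,m) = 6 and m/2 + 1 ≤ 2h ≤ 2m/3, then |C_j| = m/2 if and only if j = 2^{m/2−h} + 2^{m−h}, and |C_j| = m otherwise. -/
def Per (n j t : ℕ) : Prop := j * 2 ^ t ≡ j [MOD n]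

lemma geom_two (t p : ℕ) :
    (2 ^ t - 1) * ∑ k ∈ Finset.range p, 2 ^ (t * k) = 2 ^ (t * p) - 1 := by
  have h1 : (1:ℕ) ≤ 2 ^ t := Nat.one_le_two_pow
  have h2 : (1:ℕ) ≤ 2 ^ (t * p) := Nat.one_le_two_pow
  zify [h1, h2]
  simp only [pow_mul]
  rw [mul_comm, geom_sum_mul]

lemma Per.add' {n j a b : ℕ} (ha : Per n j a) (hb : Per n j b) : Per n j (a + b) := by
  unfold Per at *
  calc j * 2 ^ (a + b) = (j * 2 ^ a) * 2 ^ b := by ring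
    _ ≡ j * 2 ^ b [MOD n] := ha.mul_right _
    _ ≡ j [MOD n] := hb

lemma hcopn {n : ℕ} (hodd : n % 2 = 1) (b : ℕ) : Nat.gcd n (2 ^ b) = 1 := by
  have : Nat.Coprime (2 ^ b) n :=
    Nat.Coprime.pow_left _ (Nat.coprime_two_left.mpr (Nat.odd_iff.mpr hodd))
  simpa [Nat.Coprime, Nat.gcd_comm] using this

lemma per_cancel {n j a b : ℕ} (hodd : n % 2 = 1) (hab : Per n j (a + b)) (hb : Per n j b) :
    Per n j a := by
  apply Nat.ModEq.cancel_right_of_coprime (hcopn hodd b)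
  calc (j * 2 ^ a) * 2 ^ b = j * 2 ^ (a + b) := by ring
    _ ≡ j [MOD n] := hab
    _ ≡ j * 2 ^ b [MOD n] := hb.symm

lemma per_mul {n j d : ℕ} (hd : Per n j d) : ∀ k, Per n j (k * d) := by
  intro k
  induction k with
  | zero => unfold Per; simpa using Nat.ModEq.refl j
  | succ k ih => rw [Nat.succ_mul]; exact ih.add' hd

lemma per_mod {n j d : ℕ} (hodd : n % 2 = 1) (hd0 : 0 < d) (hd : Per n j d) :
    ∀ t, Per n j t → Per n j (t % d) := by
  intro t
  induction t using Nat.strong_induction_on with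
  | _ t ih =>
    intro ht
    by_cases hlt : t < d
    · rwa [Nat.mod_eq_of_lt hlt]
    · push_neg at hlt
      have h1 : Per n j (t - d) := per_cancel hodd (by rwa [Nat.sub_add_cancel hlt]) hd
      rw [Nat.mod_eq_sub_mod hlt]
      exact ih (t - d) (by omega) h1

lemma key (m h i s : ℕ) (hs : m = 2 * s) (hh1 : 1 ≤ h)
    (h2h : 2 * h + 2 ≤ m) (h4h : m + 2 ≤ 4 * h) (h3m : 3 ∣ m → 3 * h ≤ m)
    (hi : i < 2 ^ h) :
    ((cycCoset (2 ^ m - 1) (i + 2 ^ (m - h))).ncard = m / 2 ↔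
      i + 2 ^ (m - h) = 2 ^ (m / 2 - h) + 2 ^ (m - h)) ∧
    (i + 2 ^ (m - h) ≠ 2 ^ (m / 2 - h) + 2 ^ (m - h) →
      (cycCoset (2 ^ m - 1) (i + 2 ^ (m - h))).ncard = m) := by
  classical
  have hm6 : 6 ≤ m := by omega
  have hhs : h + 1 ≤ s := by omega
  set n := 2 ^ m - 1 with hn
  set j := i + 2 ^ (m - h) with hj
  have h2mpos : 2 ∣ 2 ^ m := dvd_pow_self 2 (by omega)
  have h1m : 1 ≤ 2 ^ m := Nat.one_le_two_pow
  have hnodd : n % 2 = 1 := by omega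
  have hj0 : 0 < j := by positivity
  -- m is a period
  have hperm : Per n j m := by
    have hle : j ≤ j * 2 ^ m := Nat.le_mul_of_pos_right _ (by positivity)
    have hdv : n ∣ j * 2 ^ m - j := by
      have he : j * 2 ^ m - j = j * n := by
        rw [hn, Nat.mul_sub, mul_one]
      rw [he]
      exact dvd_mul_left n j
    exact ((Nat.modEq_iff_dvd' hle).mpr hdv).symm
  -- period t dividing m ↔ geometric-sum divisor of j
  have hperN : ∀ t, t ∣ m → 0 < t →
      (Per n j t ↔ (∑ k ∈ Finset.range (m / t), 2 ^ (t * k)) ∣ j) := by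
    intro t htm ht0
    have hle : j ≤ j * 2 ^ t := Nat.le_mul_of_pos_right _ (by positivity)
    have h1 : Per n j t ↔ n ∣ j * (2 ^ t - 1) := by
      rw [show j * (2 ^ t - 1) = j * 2 ^ t - j by rw [Nat.mul_sub, mul_one]]
      exact ⟨fun hp => (Nat.modEq_iff_dvd' hle).mp hp.symm,
        fun hd => ((Nat.modEq_iff_dvd' hle).mpr hd).symm⟩
    have hfac : n = (2 ^ t - 1) * ∑ k ∈ Finset.range (m / t), 2 ^ (t * k) := by
      have hg := geom_two t (m / t)
      rw [Nat.mul_div_cancel' htm] at hg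
      rw [hn, ← hg]
    have h2t : 2 ≤ 2 ^ t := by
      calc (2:ℕ) = 2 ^ 1 := (pow_one 2).symm
      _ ≤ 2 ^ t := Nat.pow_le_pow_right (by norm_num) ht0
    rw [h1, hfac, show j * (2 ^ t - 1) = (2 ^ t - 1) * j from mul_comm _ _]
    exact Nat.mul_dvd_mul_iff_left (by omega)
  -- lower bound for the geometric sum
  have hNge : ∀ t, t ∣ m → 0 < t → t < m →
      2 ^ (m - t) + 1 ≤ ∑ k ∈ Finset.range (m / t), 2 ^ (t * k) := by
    intro t htm ht0 htm'
    set N := ∑ k ∈ Finset.range (m / t), 2 ^ (t * k) with hN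
    have hfac : (2 ^ t - 1) * N = 2 ^ m - 1 := by
      have hg := geom_two t (m / t)
      rwa [Nat.mul_div_cancel' htm] at hg
    by_contra hcon
    push_neg at hcon
    have hNle : N ≤ 2 ^ (m - t) := by omega
    have h2t : 2 ≤ 2 ^ t := by
      calc (2:ℕ) = 2 ^ 1 := (pow_one 2).symm
      _ ≤ 2 ^ t := Nat.pow_le_pow_right (by norm_num) ht0
    have hBB : 2 ^ t * 2 ^ (m - t) = 2 ^ m := by rw [← pow_add]; congr 1; omega
    have hle2 : (2 ^ t - 1) * N ≤ (2 ^ t - 1) * 2 ^ (m - t) := Nat.mul_le_mul_left _ hNle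
    have hsub : (2 ^ t - 1) * 2 ^ (m - t) = 2 ^ m - 2 ^ (m - t) := by
      rw [Nat.sub_mul, one_mul, hBB]
    have hB2 : 2 ≤ 2 ^ (m - t) := by
      calc (2:ℕ) = 2 ^ 1 := (pow_one 2).symm
      _ ≤ 2 ^ (m - t) := Nat.pow_le_pow_right (by norm_num) (by omega)
    omega
  -- the geometric sum is odd
  have hNodd : ∀ t, t ∣ m → 0 < t → (∑ k ∈ Finset.range (m / t), 2 ^ (t * k)) % 2 = 1 := by
    intro t htm ht0
    set N := ∑ k ∈ Finset.range (m / t), 2 ^ (t * k) with hN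
    have hfac : (2 ^ t - 1) * N = 2 ^ m - 1 := by
      have hg := geom_two t (m / t)
      rwa [Nat.mul_div_cancel' htm] at hg
    have hdvd : N ∣ 2 ^ m - 1 := ⟨2 ^ t - 1, by rw [← hfac]; ring⟩
    have h2 : ¬ 2 ∣ N := by
      intro hd
      have : (2:ℕ) ∣ 2 ^ m - 1 := hd.trans hdvd
      omega
    omega
  -- the key claim: divisibility by a prime-indexed geometric sum pins down everything
  have hclaim : ∀ t p, m = p * t → p.Prime → (∑ k ∈ Finset.range p, 2 ^ (t * k)) ∣ j →
      p = 2 ∧ i = 2 ^ (s - h) := by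
    intro t p hpt hp hNj
    set N := ∑ k ∈ Finset.range p, 2 ^ (t * k) with hN
    have hp2 : 2 ≤ p := hp.two_le
    have ht0 : 0 < t := by
      rcases Nat.eq_zero_or_pos t with h0 | h0
      · exfalso
        rw [h0, mul_zero] at hpt
        omega
      · exact h0
    have ht2 : 2 ≤ t := by
      rcases Nat.lt_or_ge t 2 with h' | h'
      · exfalso
        have ht1 : t = 1 := by omega
        subst ht1
        rw [mul_one] at hpt
        have h2p : 2 ∣ p := by omega
        rcases (hp.eq_one_or_self_of_dvd 2 h2p) with h2 | h2 <;> omega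
      · exact h'
    rcases eq_or_ne p 2 with hp2' | hp2'
    · -- p = 2, t = s
      subst hp2'
      have hts : s = t := by omega
      rw [hts]
      refine ⟨rfl, ?_⟩
      have hNval : N = 1 + 2 ^ t := by
        rw [hN, Finset.sum_range_succ, Finset.sum_range_one, mul_zero, pow_zero, mul_one]
      have hjz : (j:ℤ) = ((i:ℤ) - 2 ^ (t - h)) + 2 ^ (t - h) * (1 + 2 ^ t) := by
        have hks : m - h = (t - h) + t := by omega
        rw [hj]
        push_cast
        rw [hks, pow_add]
        ring
      have h1 : ((1:ℤ) + 2 ^ t) ∣ (j:ℤ) := by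
        have hnd : N ∣ j := hNj
        rw [hNval] at hnd
        exact_mod_cast Int.natCast_dvd_natCast.mpr hnd
      have hdvd : ((1:ℤ) + 2 ^ t) ∣ ((i:ℤ) - 2 ^ (t - h)) := by
        have h2 : ((1:ℤ) + 2 ^ t) ∣ (j:ℤ) - 2 ^ (t - h) * (1 + 2 ^ t) :=
          dvd_sub h1 (dvd_mul_left _ _)
        have he : (j:ℤ) - 2 ^ (t - h) * (1 + 2 ^ t) = (i:ℤ) - 2 ^ (t - h) := by
          rw [hjz]; ring
        rwa [he] at h2
      have hi' : (i:ℤ) < 2 ^ h := by exact_mod_cast hi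
      have hb1 : (2:ℤ) ^ h ≤ 2 ^ t := pow_le_pow_right₀ (by norm_num) (by omega)
      have hb2 : (2:ℤ) ^ (t - h) ≤ 2 ^ t := pow_le_pow_right₀ (by norm_num) (by omega)
      have hb3 : (0:ℤ) < 2 ^ (t - h) := by positivity
      have hb4 : (0:ℤ) ≤ (i:ℤ) := Int.natCast_nonneg i
      have habs : (i:ℤ) - 2 ^ (t - h) = 0 := by
        apply Int.eq_zero_of_abs_lt_dvd hdvd
        rw [abs_lt]
        constructor <;> linarith
      have hieq : (i:ℤ) = (2:ℤ) ^ (t - h) := by linarith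
      exact_mod_cast hieq
    rcases eq_or_ne p 3 with hp3 | hp3
    · exfalso
      subst hp3
      have h3h : 3 * h ≤ m := h3m ⟨t, hpt⟩
      have hht : h ≤ t := by omega
      have hNval : N = 1 + 2 ^ t + 2 ^ (t * 2) := by
        rw [hN, Finset.sum_range_succ, Finset.sum_range_succ, Finset.sum_range_one,
          mul_zero, pow_zero, mul_one]
      have hjz : (j:ℤ) = ((i:ℤ) - 2 ^ (2 * t - h) - 2 ^ (t - h))
          + 2 ^ (t - h) * (1 + 2 ^ t + 2 ^ (t * 2)) := by
        have e1 : m - h = (t - h) + t * 2 := by omega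
        have e2 : 2 * t - h = (t - h) + t := by omega
        rw [hj]
        push_cast
        rw [e1, e2, pow_add, pow_add]
        ring
      have h1 : ((1:ℤ) + 2 ^ t + 2 ^ (t * 2)) ∣ (j:ℤ) := by
        have hnd : N ∣ j := hNj
        rw [hNval] at hnd
        exact_mod_cast Int.natCast_dvd_natCast.mpr hnd
      have hdvd : ((1:ℤ) + 2 ^ t + 2 ^ (t * 2)) ∣ ((i:ℤ) - 2 ^ (2 * t - h) - 2 ^ (t - h)) := by
        have h2 : ((1:ℤ) + 2 ^ t + 2 ^ (t * 2)) ∣ (j:ℤ) - 2 ^ (t - h) * (1 + 2 ^ t + 2 ^ (t * 2)) :=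
          dvd_sub h1 (dvd_mul_left _ _)
        have he : (j:ℤ) - 2 ^ (t - h) * (1 + 2 ^ t + 2 ^ (t * 2)) = (i:ℤ) - 2 ^ (2 * t - h) - 2 ^ (t - h) := by
          rw [hjz]; ring
        rwa [he] at h2
      have hi' : (i:ℤ) < 2 ^ h := by exact_mod_cast hi
      have hb1 : (2:ℤ) ^ h ≤ 2 ^ t := pow_le_pow_right₀ (by norm_num) (by omega)
      have hb2 : (2:ℤ) ^ (2 * t - h) ≤ 2 ^ (t * 2) := pow_le_pow_right₀ (by norm_num) (by omega)
      have hb3 : (2:ℤ) ^ (t - h) ≤ 2 ^ t := pow_le_pow_right₀ (by norm_num) (by omega)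
      have hb4 : (0:ℤ) ≤ (i:ℤ) := Int.natCast_nonneg i
      have hb5 : (0:ℤ) < 2 ^ (t - h) := by positivity
      have hb6 : (0:ℤ) < 2 ^ (2 * t - h) := by positivity
      have habs : (i:ℤ) - 2 ^ (2 * t - h) - 2 ^ (t - h) = 0 := by
        apply Int.eq_zero_of_abs_lt_dvd hdvd
        rw [abs_lt]
        constructor <;> linarith
      have hge : (2:ℤ) ^ h ≤ 2 ^ (2 * t - h) := pow_le_pow_right₀ (by norm_num) (by omega)
      linarith
    · exfalso
      have hp4 : p ≠ 4 := by rintro rfl; norm_num at hp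
      have hp5 : 5 ≤ p := by omega
      have h5t : 5 * t ≤ p * t := Nat.mul_le_mul_right t hp5
      have hht : t + 1 ≤ h := by omega
      have hdvdt : t ∣ m := ⟨p, by rw [hpt, mul_comm]⟩
      have hdivt : m / t = p := by
        rw [hpt]
        exact Nat.mul_div_cancel _ ht0
      have hNt : 2 ^ (m - t) + 1 ≤ N := by
        have hb := hNge t hdvdt ht0 (by omega)
        rwa [hdivt] at hb
      have hle1 : 2 ^ h ≤ 2 ^ (m - h) := Nat.pow_le_pow_right (by norm_num) (by omega)
      have hle3 : 2 ^ (m - h) + 2 ^ (m - h) ≤ 2 ^ (m - t) := by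
        rw [← two_mul, ← pow_succ']
        exact Nat.pow_le_pow_right (by norm_num) (by omega)
      have hNj' : N ≤ j := Nat.le_of_dvd hj0 hNj
      omega
  -- minimal period machinery
  have hex : ∃ t, 0 < t ∧ Per n j t := ⟨m, by omega, hperm⟩
  set d := Nat.find hex with hd
  obtain ⟨hd0, hdP⟩ : 0 < d ∧ Per n j d := Nat.find_spec hex
  have hddvd : ∀ t, Per n j t → d ∣ t := by
    intro t ht
    have hmod : Per n j (t % d) := per_mod hnodd hd0 hdP t ht
    rcases Nat.eq_zero_or_pos (t % d) with h0 | h0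
    · exact Nat.dvd_of_mod_eq_zero h0
    · exact absurd ⟨h0, hmod⟩ (Nat.find_min hex (Nat.mod_lt t hd0))
  have hdm : d ∣ m := hddvd m hperm
  have hdlem : d ≤ m := Nat.le_of_dvd (by omega) hdm
  -- cardinality of the coset is the minimal period
  have hcard : (cycCoset n j).ncard = d := by
    have himg : cycCoset n j = ↑((Finset.range d).image fun k => j * 2 ^ k % n) := by
      ext x
      simp only [cycCoset, Set.mem_setOf_eq, Finset.coe_image, Set.mem_image,
        Finset.mem_coe, Finset.mem_range]
      constructor
      · rintro ⟨k, rfl⟩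
        refine ⟨k % d, Nat.mod_lt _ hd0, ?_⟩
        have hper : Per n j (d * (k / d)) := by
          have hpm := per_mul hdP (k / d)
          rwa [mul_comm] at hpm
        have hme : j * 2 ^ k ≡ j * 2 ^ (k % d) [MOD n] := by
          calc j * 2 ^ k = (j * 2 ^ (d * (k / d))) * 2 ^ (k % d) := by
                rw [mul_assoc, ← pow_add, Nat.div_add_mod]
            _ ≡ j * 2 ^ (k % d) [MOD n] := hper.mul_right _
        exact hme.symm
      · rintro ⟨k, -, rfl⟩
        exact ⟨k, rfl⟩
    have haux : ∀ a b : ℕ, a < d → b < d → a ≤ b → j * 2 ^ a % n = j * 2 ^ b % n → a = b := by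
      intro a b ha hb hab heq
      by_contra hne
      have h1 : (j * 2 ^ (b - a)) * 2 ^ a ≡ j * 2 ^ a [MOD n] := by
        rw [mul_assoc, ← pow_add, Nat.sub_add_cancel hab]
        exact heq.symm
      have h2 : Per n j (b - a) := Nat.ModEq.cancel_right_of_coprime (hcopn hnodd a) h1
      exact absurd ⟨by omega, h2⟩ (Nat.find_min hex (show b - a < d by omega))
    rw [himg, Set.ncard_coe_finset, Finset.card_image_of_injOn, Finset.card_range]
    intro a ha b hb hab
    simp only [Finset.mem_coe, Finset.mem_range] at ha hb
    rcases Nat.le_total a b with h' | h'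
    · exact haux a b ha hb h' hab
    · exact (haux b a hb ha h' hab.symm).symm
  have hm2eq : m / 2 = s := by omega
  -- the special value: cardinality m/2
  have hJ0 : i = 2 ^ (s - h) → (cycCoset n j).ncard = s := by
    intro hieq
    have hsm : s ∣ m := ⟨2, by omega⟩
    have hs0 : 0 < s := by omega
    have hms2 : m / s = 2 := by
      rw [hs]
      exact Nat.mul_div_cancel _ hs0
    have hjfac : j = 2 ^ (s - h) * (1 + 2 ^ s) := by
      rw [hj, hieq, show m - h = (s - h) + s by omega, pow_add]
      ring
    have hNs : (∑ k ∈ Finset.range (m / s), 2 ^ (s * k)) ∣ j := by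
      rw [hms2, Finset.sum_range_succ, Finset.sum_range_one, mul_zero, pow_zero, mul_one]
      exact ⟨2 ^ (s - h), by rw [hjfac]; ring⟩
    have hPs : Per n j s := (hperN s hsm hs0).mpr hNs
    have hds : d ≤ s := Nat.le_of_dvd hs0 (hddvd s hPs)
    have hNd : (∑ k ∈ Finset.range (m / d), 2 ^ (d * k)) ∣ j := (hperN d hdm hd0).mp hdP
    set Nd := ∑ k ∈ Finset.range (m / d), 2 ^ (d * k) with hNdd
    have hodd : Nd % 2 = 1 := hNodd d hdm hd0
    have hcop : Nat.Coprime Nd (2 ^ (s - h)) :=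
      Nat.Coprime.pow_right _ (Nat.coprime_two_right.mpr (Nat.odd_iff.mpr hodd))
    have hdvd2 : Nd ∣ 1 + 2 ^ s := by
      have hnd := hNd
      rw [hjfac] at hnd
      exact hcop.dvd_of_dvd_mul_left hnd
    have hge : 2 ^ (m - d) + 1 ≤ Nd := hNge d hdm hd0 (by omega)
    have hle : Nd ≤ 1 + 2 ^ s := Nat.le_of_dvd (by positivity) hdvd2
    have h2 : 2 ^ (m - d) ≤ 2 ^ s := by omega
    have h3 : m - d ≤ s := by
      by_contra hc
      push_neg at hc
      exact absurd h2 (not_le.mpr (Nat.pow_lt_pow_right one_lt_two hc))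
    have hdse : d = s := by omega
    rw [hcard, hdse]
  -- the generic value: cardinality m
  have hMain : i ≠ 2 ^ (s - h) → (cycCoset n j).ncard = m := by
    intro hne
    have hdem : d = m := by
      by_contra hdm'
      have hdlt : d < m := lt_of_le_of_ne hdlem hdm'
      obtain ⟨q, hq⟩ := hdm
      have hq2 : 2 ≤ q := by
        rcases Nat.lt_or_ge q 2 with h' | h'
        · interval_cases q <;> omega
        · exact h'
      have hqp : q.minFac ∣ q := Nat.minFac_dvd q
      have hpp : q.minFac.Prime := Nat.minFac_prime (by omega)
      set p := q.minFac with hp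
      obtain ⟨r, hr⟩ := hqp
      have hr0 : 0 < r := by
        rcases Nat.eq_zero_or_pos r with h0 | h0
        · exfalso; rw [h0, mul_zero] at hr; omega
        · exact h0
      have hPer_t : Per n j (r * d) := per_mul hdP r
      have hrd0 : 0 < r * d := by positivity
      have hmrd : m = (r * d) * p := by rw [hq, hr]; ring
      have hrdm : r * d ∣ m := ⟨p, hmrd⟩
      have hdivrd : m / (r * d) = p := by rw [hmrd, mul_comm]; exact Nat.mul_div_cancel _ hrd0
      have hNt : (∑ k ∈ Finset.range p, 2 ^ ((r * d) * k)) ∣ j := by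
        have hnt := (hperN (r * d) hrdm hrd0).mp hPer_t
        rwa [hdivrd] at hnt
      have hcl := hclaim (r * d) p (by rw [hmrd]; ring) hpp hNt
      exact hne hcl.2
    rw [hcard, hdem]
  -- assembling
  have hiff : j = 2 ^ (m / 2 - h) + 2 ^ (m - h) ↔ i = 2 ^ (s - h) := by
    rw [hm2eq, hj]
    omega
  refine ⟨⟨fun hc => ?_, fun heq => ?_⟩, fun hne => hMain (fun hie => hne (hiff.mpr hie))⟩
  · by_contra hne
    have hval : (cycCoset n j).ncard = m := hMain (fun hie => hne (hiff.mpr hie))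
    omega
  · rw [hm2eq]
    exact hJ0 (hiff.mp heq)

theorem stmt_10 (m h : ℕ) (hm : 0 < m) (hh : 0 < h)
    (hO : (m % 4 = 1 → m + 3 ≤ 4 * h ∧ 2 * h ≤ m - 1) ∧
          (m % 4 = 2 → m + 2 ≤ 4 * h ∧ 2 * h ≤ m - 2) ∧
          (m % 4 = 3 → m + 1 ≤ 4 * h ∧ 2 * h ≤ m - 3) ∧
          (m % 4 = 0 → m ≤ 4 * h ∧ 2 * h ≤ m - 4))
    (n : ℕ) (hn : n = 2 ^ m - 1) :
    (Nat.gcd 6 m = 2 → m + 2 ≤ 4 * h →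
      ∀ i < 2 ^ h,
        ((cycCoset n (i + 2 ^ (m - h))).ncard = m / 2 ↔
          i + 2 ^ (m - h) = 2 ^ (m / 2 - h) + 2 ^ (m - h)) ∧
        (i + 2 ^ (m - h) ≠ 2 ^ (m / 2 - h) + 2 ^ (m - h) →
          (cycCoset n (i + 2 ^ (m - h))).ncard = m)) ∧
    (Nat.gcd 6 m = 6 → m + 2 ≤ 4 * h → 3 * h ≤ m →
      ∀ i < 2 ^ h,
        ((cycCoset n (i + 2 ^ (m - h))).ncard = m / 2 ↔
          i + 2 ^ (m - h) = 2 ^ (m / 2 - h) + 2 ^ (m - h)) ∧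
        (i + 2 ^ (m - h) ≠ 2 ^ (m / 2 - h) + 2 ^ (m - h) →
          (cycCoset n (i + 2 ^ (m - h))).ncard = m)) := by
  subst hn
  constructor
  · intro hg h4 i hi
    have h2m : 2 ∣ m := by
      have hgd := Nat.gcd_dvd_right 6 m
      rw [hg] at hgd
      exact hgd
    have h3m : ¬ 3 ∣ m := by
      intro h3
      have hgd : (3:ℕ) ∣ Nat.gcd 6 m := Nat.dvd_gcd (by norm_num) h3
      rw [hg] at hgd
      omega
    have hm4 : m % 4 = 0 ∨ m % 4 = 2 := by omega
    have h2h : 2 * h + 2 ≤ m := by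
      rcases hm4 with h' | h'
      · have := hO.2.2.2 h'; omega
      · have := hO.2.1 h'; omega
    obtain ⟨s, hs⟩ := h2m
    exact key m h i s hs hh h2h h4 (fun h3 => absurd h3 h3m) hi
  · intro hg h4 h3 i hi
    have h6m : 6 ∣ m := by
      have hgd := Nat.gcd_dvd_right 6 m
      rw [hg] at hgd
      exact hgd
    have h2m : 2 ∣ m := by omega
    have hm4 : m % 4 = 0 ∨ m % 4 = 2 := by omega
    have h2h : 2 * h + 2 ≤ m := by
      rcases hm4 with h' | h'
      · have := hO.2.2.2 h'; omega
      · have := hO.2.1 h'; omega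
    obtain ⟨s, hs⟩ := h2m
    exact key m h i s hs hh h2h h4 (fun _ => h3) hi
end

section
/- Let m and h be positive integers satisfying Condition (O), set n = 2^m − 1, A = {0,1,...,2^h − 1}, B = { i + 2^{m−h} : i ∈ A }, and B_2 = { j ∈ B : wt(j) = 2 }. Then: (i) for any two distinct elements j_1, j_2 of B \ B_2, the 2-cyclotomic cosets C_{j_1} and C_{j_2} modulo n are disjoint; (ii) for every j ∈ B, if |C_j ∩ B| > 1 then wt(j) = 2; (iii) for every j ∈ B, if |C_j ∩ B| > 1 then |C_j ∩ B| = 2. -/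
/-- The number of ones in the binary expansion of a natural number. -/
def binWt (i : ℕ) : ℕ := (Nat.digits 2 i).sum

lemma binWt_succ (x : ℕ) (hx : 0 < x) : binWt x = x % 2 + binWt (x / 2) := by
  unfold binWt
  rw [Nat.digits_def' (by norm_num : 1 < 2) hx]
  simp

lemma binWt_two_pow (a : ℕ) : binWt (2 ^ a) = 1 := by
  induction a with
  | zero => simp [binWt]
  | succ n ih =>
      rw [binWt_succ _ (by positivity), pow_succ]
      simpa using ih

lemma binWt_pair {a b : ℕ} (hab : a < b) : binWt (2 ^ a + 2 ^ b) = 2 := by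
  induction a generalizing b with
  | zero =>
      obtain ⟨c, rfl⟩ : ∃ c, b = c + 1 := ⟨b - 1, by omega⟩
      have h1 : 2 ^ 0 + 2 ^ (c + 1) = 2 * 2 ^ c + 1 := by ring
      rw [h1, binWt_succ _ (by positivity)]
      rw [Nat.mul_add_mod, Nat.mul_add_div (by norm_num)]
      simp [binWt_two_pow]
  | succ a ih =>
      obtain ⟨c, rfl⟩ : ∃ c, b = c + 1 := ⟨b - 1, by omega⟩
      have h1 : 2 ^ (a + 1) + 2 ^ (c + 1) = 2 * (2 ^ a + 2 ^ c) := by ring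
      rw [h1, binWt_succ _ (by positivity), Nat.mul_mod_right,
        Nat.mul_div_cancel_left _ (by norm_num)]
      simpa using ih (by omega)

lemma two_pow_mono {a b : ℕ} (hab : a ≤ b) : (2:ℕ) ^ a ≤ 2 ^ b :=
  Nat.pow_le_pow_right (by norm_num) hab

lemma pow_pred {k : ℕ} (hk : 1 ≤ k) : (2:ℕ) ^ k = 2 ^ (k - 1) * 2 := by
  calc (2:ℕ) ^ k = 2 ^ (k - 1 + 1) := by congr 1; omega
  _ = 2 ^ (k - 1) * 2 := pow_succ 2 (k - 1)

lemma pow_pred2 {k : ℕ} (hk : 2 ≤ k) : (2:ℕ) ^ k = 2 ^ (k - 2) * 4 := by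
  calc (2:ℕ) ^ k = 2 ^ (k - 2 + 2) := by congr 1; omega
  _ = 2 ^ (k - 2) * 4 := by rw [pow_add]; norm_num

lemma hmod_base (m : ℕ) : (2:ℕ) ^ m ≡ 1 [MOD 2 ^ m - 1] :=
  ((Nat.modEq_iff_dvd' (Nat.one_le_two_pow)).mpr dvd_rfl).symm

lemma key_s11 {m h : ℕ} (hh : 2 ≤ h) (hm : 2 * h + 1 ≤ m)
    {i1 i2 k : ℕ} (hi1 : i1 < 2 ^ h) (hi2 : i2 < 2 ^ h)
    (hk0 : 0 < k) (hkm : k < m)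
    (heq : (i1 + 2 ^ (m - h)) * 2 ^ k % (2 ^ m - 1) = i2 + 2 ^ (m - h)) :
    ∃ t, i1 = 2 ^ t ∧ i2 = 2 ^ (m - 2 * h - t) := by
  have hmod : (2:ℕ) ^ m ≡ 1 [MOD 2 ^ m - 1] := hmod_base m
  have hraw : (i1 + 2 ^ (m - h)) * 2 ^ k = i1 * 2 ^ k + 2 ^ (m - h + k) := by
    rw [add_mul, ← pow_add]
  rcases lt_trichotomy k h with hc | hc | hc
  · -- Case I : k < h, impossible
    exfalso
    have b1 : i1 * 2 ^ k < 2 ^ (h + k) := by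
      rw [pow_add]; exact Nat.mul_lt_mul_of_lt_of_le hi1 le_rfl (by positivity)
    have b2 : (2:ℕ) ^ (h + k) ≤ 2 ^ (m - 2) := two_pow_mono (by omega)
    have b3 : (2:ℕ) ^ (m - h + k) ≤ 2 ^ (m - 1) := two_pow_mono (by omega)
    have b4 : (2:ℕ) ^ m = 2 ^ (m - 2) * 4 := pow_pred2 (by omega)
    have b5 : (2:ℕ) ^ m = 2 ^ (m - 1) * 2 := pow_pred (by omega)
    have hlt : (i1 + 2 ^ (m - h)) * 2 ^ k < 2 ^ m - 1 := by
      rw [hraw]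
      have h1 : (1:ℕ) ≤ 2 ^ (m - 2) := Nat.one_le_two_pow
      omega
    rw [Nat.mod_eq_of_lt hlt, hraw] at heq
    have c1 : (2:ℕ) ^ (m - h + 1) ≤ 2 ^ (m - h + k) := two_pow_mono (by omega)
    have c2 : (2:ℕ) ^ (m - h + 1) = 2 ^ (m - h) * 2 := pow_succ 2 (m - h)
    have c3 : (2:ℕ) ^ h ≤ 2 ^ (m - h) := two_pow_mono (by omega)
    omega
  · -- Case II : k = h
    rw [hc] at hraw heq
    have e1 : m - h + h = m := by omega
    rw [e1] at hraw
    have hmv : (i1 * 2 ^ h + 2 ^ m) % (2 ^ m - 1) = (i1 * 2 ^ h + 1) % (2 ^ m - 1) :=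
      (Nat.ModEq.add_left _ hmod)
    have b1 : i1 * 2 ^ h < 2 ^ h * 2 ^ h :=
      Nat.mul_lt_mul_of_lt_of_le hi1 le_rfl (by positivity)
    have b2 : (2:ℕ) ^ h * 2 ^ h = 2 ^ (h + h) := by rw [pow_add]
    have b3 : (2:ℕ) ^ (h + h) ≤ 2 ^ (m - 1) := two_pow_mono (by omega)
    have b5 : (2:ℕ) ^ m = 2 ^ (m - 1) * 2 := pow_pred (by omega)
    have h1 : (1:ℕ) ≤ 2 ^ (m - 1) := Nat.one_le_two_pow
    have h2 : (2:ℕ) ^ 1 ≤ 2 ^ (m - 1) := two_pow_mono (by omega)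
    norm_num at h2
    have hlt : i1 * 2 ^ h + 1 < 2 ^ m - 1 := by omega
    rw [hraw, hmv, Nat.mod_eq_of_lt hlt] at heq
    -- mod 2^h analysis
    have m1 : (i1 * 2 ^ h + 1) % 2 ^ h = 1 := by
      rw [add_comm, Nat.add_mul_mod_self_right]
      exact Nat.mod_eq_of_lt (Nat.one_lt_two_pow_iff.mpr (by omega))
    have edec : m - h = (m - 2 * h) + h := by omega
    have m2 : (i2 + 2 ^ (m - h)) % 2 ^ h = i2 := by
      rw [edec, pow_add, Nat.add_mul_mod_self_right]
      exact Nat.mod_eq_of_lt hi2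
    have hi2e : i2 = 1 := by rw [heq] at m1; omega
    have hmain : i1 * 2 ^ h = 2 ^ (m - 2 * h) * 2 ^ h := by
      rw [← pow_add, ← edec]
      omega
    have hi1e : i1 = 2 ^ (m - 2 * h) := Nat.eq_of_mul_eq_mul_right (by positivity) hmain
    exact ⟨m - 2 * h, hi1e, by rw [hi2e, Nat.sub_self, pow_zero]⟩
  · rcases le_or_gt k (m - h) with hc2 | hc2
    · -- Case III.a : h < k ≤ m - h
      have e1 : m - h + k = m + (k - h) := by omega
      rw [e1, pow_add] at hraw
      have hmv : (i1 * 2 ^ k + 2 ^ m * 2 ^ (k - h)) % (2 ^ m - 1)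
          = (i1 * 2 ^ k + 1 * 2 ^ (k - h)) % (2 ^ m - 1) :=
        Nat.ModEq.add_left _ (hmod.mul_right _)
      rw [one_mul] at hmv
      have b1 : i1 * 2 ^ k ≤ (2 ^ h - 1) * 2 ^ k :=
        Nat.mul_le_mul_right _ (by omega)
      have b2 : (2 ^ h - 1) * 2 ^ k = 2 ^ (h + k) - 2 ^ k := by
        rw [Nat.sub_mul, one_mul, ← pow_add]
      have b3 : (2:ℕ) ^ (h + k) ≤ 2 ^ m := two_pow_mono (by omega)
      have b4 : (2:ℕ) ^ (k - h) ≤ 2 ^ (k - 1) := two_pow_mono (by omega)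
      have b5 : (2:ℕ) ^ k = 2 ^ (k - 1) * 2 := pow_pred (by omega)
      have b6 : (2:ℕ) ^ 1 ≤ 2 ^ (k - 1) := two_pow_mono (by omega)
      have b7 : (2:ℕ) ^ k ≤ 2 ^ (h + k) := two_pow_mono (by omega)
      have hlt : i1 * 2 ^ k + 2 ^ (k - h) < 2 ^ m - 1 := by
        have hb := b1.trans_eq b2
        norm_num at b6
        omega
      rw [hraw, hmv, Nat.mod_eq_of_lt hlt] at heq
      -- mod 2^k analysis
      have m1 : (i1 * 2 ^ k + 2 ^ (k - h)) % 2 ^ k = 2 ^ (k - h) := by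
        rw [add_comm, Nat.add_mul_mod_self_right]
        exact Nat.mod_eq_of_lt (Nat.pow_lt_pow_right (by norm_num) (by omega))
      have edec : m - h = (m - h - k) + k := by omega
      have m2 : (i2 + 2 ^ (m - h)) % 2 ^ k = i2 := by
        rw [edec, pow_add, Nat.add_mul_mod_self_right]
        exact Nat.mod_eq_of_lt (hi2.trans (Nat.pow_lt_pow_right (by norm_num) (by omega)))
      have hi2e : i2 = 2 ^ (k - h) := by rw [heq] at m1; omega
      have hmain : i1 * 2 ^ k = 2 ^ (m - h - k) * 2 ^ k := by
        rw [← pow_add, ← edec]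
        omega
      have hi1e : i1 = 2 ^ (m - h - k) := Nat.eq_of_mul_eq_mul_right (by positivity) hmain
      refine ⟨m - h - k, hi1e, ?_⟩
      rw [hi2e]
      congr 1
      omega
    · -- Case III.b : m - h < k < m, impossible
      exfalso
      have hdm : (m - k) + k = m := by omega
      obtain ⟨a, b, hsplit, hblt, halt⟩ :
          ∃ a b, 2 ^ (m - k) * a + b = i1 ∧ b < 2 ^ (m - k) ∧ a < 2 ^ (h - (m - k)) := by
        refine ⟨i1 / 2 ^ (m - k), i1 % 2 ^ (m - k), Nat.div_add_mod i1 (2 ^ (m - k)),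
          Nat.mod_lt _ (by positivity), ?_⟩
        rw [Nat.div_lt_iff_lt_mul (by positivity), ← pow_add]
        exact hi1.trans_le (two_pow_mono (by omega))
      have e1 : m - h + k = m + (k - h) := by omega
      rw [e1, pow_add] at hraw
      have hi1dec : i1 * 2 ^ k = a * 2 ^ m + b * 2 ^ k := by
        calc i1 * 2 ^ k = (2 ^ (m - k) * a + b) * 2 ^ k := by rw [hsplit]
        _ = a * (2 ^ (m - k) * 2 ^ k) + b * 2 ^ k := by ring
        _ = a * 2 ^ m + b * 2 ^ k := by rw [← pow_add, hdm]
      rw [hi1dec] at hraw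
      have hmv : (a * 2 ^ m + b * 2 ^ k + 2 ^ m * 2 ^ (k - h)) % (2 ^ m - 1)
          = (a * 1 + b * 2 ^ k + 1 * 2 ^ (k - h)) % (2 ^ m - 1) :=
        Nat.ModEq.add ((hmod.mul_left _).add_right _) (hmod.mul_right _)
      rw [mul_one, one_mul] at hmv
      -- bounds
      have c1 : (2:ℕ) ^ (h - (m - k)) ≤ 2 ^ (k - 2) := two_pow_mono (by omega)
      have c2 : (2:ℕ) ^ (k - h) ≤ 2 ^ (k - 2) := two_pow_mono (by omega)
      have c3 : b * 2 ^ k ≤ (2 ^ (m - k) - 1) * 2 ^ k := Nat.mul_le_mul_right _ (by omega)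
      have c4 : (2 ^ (m - k) - 1) * 2 ^ k = 2 ^ m - 2 ^ k := by
        rw [Nat.sub_mul, one_mul, ← pow_add, hdm]
      have c5 : (2:ℕ) ^ k = 2 ^ (k - 2) * 4 := pow_pred2 (by omega)
      have c6 : (2:ℕ) ^ k ≤ 2 ^ m := two_pow_mono (by omega)
      have c7 : (1:ℕ) ≤ 2 ^ (k - 2) := Nat.one_le_two_pow
      have hlt : a + b * 2 ^ k + 2 ^ (k - h) < 2 ^ m - 1 := by
        have hc3 := c3.trans_eq c4
        omega
      rw [hraw, hmv, Nat.mod_eq_of_lt hlt] at heq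
      -- contradiction
      have d1 : (2:ℕ) ^ (h - (m - k)) ≤ 2 ^ (m - h - 1) := two_pow_mono (by omega)
      have d2 : (2:ℕ) ^ (k - h) ≤ 2 ^ (m - h - 1) := two_pow_mono (by omega)
      have d3 : (2:ℕ) ^ (m - h) = 2 ^ (m - h - 1) * 2 := pow_pred (by omega)
      have d4 : (2:ℕ) ^ h ≤ 2 ^ (m - h) := two_pow_mono (by omega)
      rcases Nat.eq_zero_or_pos b with hb0 | hb0
      · rw [hb0, zero_mul] at heq
        omega
      · have d5 : 2 ^ k ≤ b * 2 ^ k := Nat.le_mul_of_pos_left _ hb0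
        have d6 : (2:ℕ) ^ (m - h + 1) ≤ 2 ^ k := two_pow_mono (by omega)
        have d7 : (2:ℕ) ^ (m - h + 1) = 2 ^ (m - h) * 2 := pow_succ 2 (m - h)
        have g1 : b * 2 ^ k ≤ i2 + 2 ^ (m - h) :=
          ((Nat.le_add_left (b * 2 ^ k) a).trans (Nat.le_add_right _ _)).trans_eq heq
        have g3 : 2 ^ (m - h) * 2 ≤ b * 2 ^ k := by
          calc 2 ^ (m - h) * 2 = 2 ^ (m - h + 1) := (pow_succ 2 (m - h)).symm
          _ ≤ 2 ^ k := d6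
          _ ≤ b * 2 ^ k := d5
        have g4 := g3.trans g1
        omega

lemma pow_congr_mod {m K : ℕ} (hm : 0 < m) : (2:ℕ) ^ K ≡ 2 ^ (K % m) [MOD 2 ^ m - 1] := by
  have h1 : (2:ℕ) ^ K = (2 ^ m) ^ (K / m) * 2 ^ (K % m) := by
    rw [← pow_mul, ← pow_add, Nat.div_add_mod]
  calc (2:ℕ) ^ K = (2 ^ m) ^ (K / m) * 2 ^ (K % m) := h1
  _ ≡ 1 ^ (K / m) * 2 ^ (K % m) [MOD 2 ^ m - 1] := ((hmod_base m).pow _).mul_right _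
  _ = 2 ^ (K % m) := by rw [one_pow, one_mul]

lemma mem_B_lt {m h i : ℕ} (hh : 2 ≤ h) (hm : 2 * h + 1 ≤ m) (hi : i < 2 ^ h) :
    i + 2 ^ (m - h) < 2 ^ m - 1 := by
  have c1 : (2:ℕ) ^ h ≤ 2 ^ (m - h) := two_pow_mono (by omega)
  have c2 : (2:ℕ) ^ (m - h + 1) = 2 ^ (m - h) * 2 := pow_succ 2 (m - h)
  have c3 : (2:ℕ) ^ (m - h + 1) ≤ 2 ^ (m - 1) := two_pow_mono (by omega)
  have c4 : (2:ℕ) ^ m = 2 ^ (m - 1) * 2 := pow_pred (by omega)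
  have c5 : (1:ℕ) ≤ 2 ^ (m - 1) := Nat.one_le_two_pow
  omega

lemma coset_step {m h : ℕ} (hh : 2 ≤ h) (hm : 2 * h + 1 ≤ m)
    {i1 i2 K : ℕ} (hi1 : i1 < 2 ^ h) (hi2 : i2 < 2 ^ h)
    (heq : (i1 + 2 ^ (m - h)) * 2 ^ K % (2 ^ m - 1) = i2 + 2 ^ (m - h)) :
    i1 = i2 ∨ ∃ t, i1 = 2 ^ t ∧ i2 = 2 ^ (m - 2 * h - t) := by
  have hmpos : 0 < m := by omega
  have hmv : (i1 + 2 ^ (m - h)) * 2 ^ K % (2 ^ m - 1)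
      = (i1 + 2 ^ (m - h)) * 2 ^ (K % m) % (2 ^ m - 1) :=
    Nat.ModEq.mul_left _ (pow_congr_mod hmpos)
  rw [hmv] at heq
  rcases Nat.eq_zero_or_pos (K % m) with h0 | h0
  · left
    rw [h0, pow_zero, mul_one, Nat.mod_eq_of_lt (mem_B_lt hh hm hi1)] at heq
    omega
  · right
    exact key_s11 hh hm hi1 hi2 h0 (Nat.mod_lt _ hmpos) heq

lemma coset_trans {m j1 j2 x k1 k2 : ℕ} (hm : 0 < m) (hj2 : j2 < 2 ^ m - 1)
    (h1 : x = j1 * 2 ^ k1 % (2 ^ m - 1)) (h2 : x = j2 * 2 ^ k2 % (2 ^ m - 1)) :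
    j1 * 2 ^ (k1 + k2 * (m - 1)) % (2 ^ m - 1) = j2 := by
  have e2 : k2 + k2 * (m - 1) = k2 * m := by
    have e3 : m - 1 + 1 = m := by omega
    calc k2 + k2 * (m - 1) = k2 * (m - 1 + 1) := by ring
    _ = k2 * m := by rw [e3]
  have c0 : j1 * 2 ^ k1 ≡ x [MOD 2 ^ m - 1] := by
    show _ % _ = _ % _
    rw [h1]
    exact (Nat.mod_mod_of_dvd _ dvd_rfl).symm
  have c1 : x ≡ j2 * 2 ^ k2 [MOD 2 ^ m - 1] := by
    show _ % _ = _ % _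
    rw [h2]
    exact Nat.mod_mod_of_dvd _ dvd_rfl
  have c2 : j1 * 2 ^ (k1 + k2 * (m - 1)) ≡ j2 [MOD 2 ^ m - 1] := by
    calc j1 * 2 ^ (k1 + k2 * (m - 1)) = (j1 * 2 ^ k1) * 2 ^ (k2 * (m - 1)) := by
          rw [mul_assoc, ← pow_add]
    _ ≡ x * 2 ^ (k2 * (m - 1)) [MOD 2 ^ m - 1] := c0.mul_right _
    _ ≡ (j2 * 2 ^ k2) * 2 ^ (k2 * (m - 1)) [MOD 2 ^ m - 1] := c1.mul_right _
    _ = j2 * 2 ^ (k2 * m) := by rw [mul_assoc, ← pow_add, e2]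
    _ = j2 * (2 ^ m) ^ k2 := by rw [mul_comm k2 m, pow_mul]
    _ ≡ j2 * 1 ^ k2 [MOD 2 ^ m - 1] := ((hmod_base m).pow _).mul_left _
    _ = j2 := by rw [one_pow, mul_one]
  rw [← Nat.mod_eq_of_lt hj2]
  exact c2

theorem stmt_11 (m h : ℕ) (hm : 0 < m) (hh : 0 < h)
    (hO : (m % 4 = 1 → m + 3 ≤ 4 * h ∧ 2 * h ≤ m - 1) ∧
          (m % 4 = 2 → m + 2 ≤ 4 * h ∧ 2 * h ≤ m - 2) ∧
          (m % 4 = 3 → m + 1 ≤ 4 * h ∧ 2 * h ≤ m - 3) ∧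
          (m % 4 = 0 → m ≤ 4 * h ∧ 2 * h ≤ m - 4))
    (n : ℕ) (hn : n = 2 ^ m - 1)
    (B : Set ℕ) (hB : B = {j | ∃ i < 2 ^ h, j = i + 2 ^ (m - h)})
    (B2 : Set ℕ) (hB2 : B2 = {j ∈ B | binWt j = 2}) :
    (∀ j₁ ∈ B \ B2, ∀ j₂ ∈ B \ B2, j₁ ≠ j₂ → cycCoset n j₁ ∩ cycCoset n j₂ = ∅) ∧
    (∀ j ∈ B, 1 < (cycCoset n j ∩ B).ncard → binWt j = 2) ∧
    (∀ j ∈ B, 1 < (cycCoset n j ∩ B).ncard → (cycCoset n j ∩ B).ncard = 2) := by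
  have hkey : 2 ≤ h ∧ 2 * h + 1 ≤ m := by
    obtain ⟨c1, c2, c3, c4⟩ := hO
    have h4 : m % 4 = 0 ∨ m % 4 = 1 ∨ m % 4 = 2 ∨ m % 4 = 3 := by omega
    rcases h4 with h4 | h4 | h4 | h4
    · have := c4 h4; omega
    · have := c1 h4; omega
    · have := c2 h4; omega
    · have := c3 h4; omega
  obtain ⟨hh2, hm1⟩ := hkey
  subst hn
  subst hB2
  subst hB
  have wt2 : ∀ t i1, i1 < 2 ^ h → i1 = 2 ^ t → binWt (i1 + 2 ^ (m - h)) = 2 := by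
    intro t i1 hi1 ht1
    have htlt : (2:ℕ) ^ t < 2 ^ h := ht1 ▸ hi1
    have htlt2 : t < h := by
      by_contra hcon
      exact absurd htlt (by push_neg; exact two_pow_mono (by omega))
    rw [ht1]
    exact binWt_pair (by omega)
  refine ⟨?_, ?_, ?_⟩
  · -- part (i)
    intro j₁ hj₁ j₂ hj₂ hne
    obtain ⟨hj₁B, hj₁n2⟩ := hj₁
    obtain ⟨hj₂B, _⟩ := hj₂
    obtain ⟨i1, hi1, rfl⟩ := hj₁B
    obtain ⟨i2, hi2, rfl⟩ := hj₂B
    rw [Set.eq_empty_iff_forall_notMem]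
    rintro x ⟨⟨k1, hk1⟩, ⟨k2, hk2⟩⟩
    have hj2lt : i2 + 2 ^ (m - h) < 2 ^ m - 1 := mem_B_lt hh2 hm1 hi2
    have hstep := coset_trans (by omega) hj2lt hk1 hk2
    rcases coset_step hh2 hm1 hi1 hi2 hstep with hc | ⟨t, ht1, ht2⟩
    · exact hne (by rw [hc])
    · exact hj₁n2 ⟨⟨i1, hi1, rfl⟩, wt2 t i1 hi1 ht1⟩
  · -- part (ii)
    intro j hjB hcard
    obtain ⟨i1, hi1, rfl⟩ := hjB
    obtain ⟨j', hj'mem, hj'ne⟩ := Set.exists_ne_of_one_lt_ncard hcard (i1 + 2 ^ (m - h))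
    obtain ⟨⟨k, hk⟩, hj'B⟩ := hj'mem
    obtain ⟨i2, hi2, rfl⟩ := hj'B
    rcases coset_step hh2 hm1 hi1 hi2 hk.symm with hc | ⟨t, ht1, ht2⟩
    · exact absurd (by rw [hc]) hj'ne
    · exact wt2 t i1 hi1 ht1
  · -- part (iii)
    intro j hjB hcard
    obtain ⟨i1, hi1, rfl⟩ := hjB
    obtain ⟨j', hj'mem, hj'ne⟩ := Set.exists_ne_of_one_lt_ncard hcard (i1 + 2 ^ (m - h))
    obtain ⟨⟨k, hk⟩, hj'B⟩ := hj'mem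
    obtain ⟨i2, hi2, rfl⟩ := hj'B
    rcases coset_step hh2 hm1 hi1 hi2 hk.symm with hc | ⟨t, ht1, ht2⟩
    · exact absurd (by rw [hc]) hj'ne
    · have hset : cycCoset (2 ^ m - 1) (i1 + 2 ^ (m - h)) ∩
          {j | ∃ i < 2 ^ h, j = i + 2 ^ (m - h)}
          = {i1 + 2 ^ (m - h), i2 + 2 ^ (m - h)} := by
        apply Set.Subset.antisymm
        · rintro x ⟨⟨kx, hkx⟩, hxB⟩
          obtain ⟨ix, hix, rfl⟩ := hxB
          rcases coset_step hh2 hm1 hi1 hix hkx.symm with hc2 | ⟨t', ht1', ht2'⟩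
          · left
            rw [hc2]
          · right
            have htt : t' = t := Nat.pow_right_injective le_rfl (ht1'.symm.trans ht1)
            show ix + 2 ^ (m - h) = i2 + 2 ^ (m - h)
            rw [ht2', htt, ← ht2]
        · intro x hx
          simp only [Set.mem_insert_iff, Set.mem_singleton_iff] at hx
          rcases hx with rfl | rfl
          · exact ⟨⟨0, by rw [pow_zero, mul_one, Nat.mod_eq_of_lt (mem_B_lt hh2 hm1 hi1)]⟩,
              ⟨i1, hi1, rfl⟩⟩
          · exact ⟨⟨k, hk⟩, ⟨i2, hi2, rfl⟩⟩
      rw [hset]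
      exact Set.ncard_pair hj'ne.symm
end

section
/- Let h be an odd positive integer, m = 4h, and n = 2^m − 1. Then: (1) gcd(1 + 2^h + 2^{2h}, 2^{4h} − 1) = 1; (2) the 2-cyclotomic cosets modulo n satisfy |C_1| = m, |C_{1+2^h+2^{2h}}| = m, and |C_{1+2^{2h}}| = m/2 = 2h; (3) the three cosets C_1, C_{1+2^{2h}}, and C_{1+2^h+2^{2h}} are pairwise disjoint. -/
lemma pow_period (n j t : ℕ) (hjt : j * 2 ^ t ≡ j [MOD n]) (k : ℕ) :
    j * 2 ^ k ≡ j * 2 ^ (k % t) [MOD n] := by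
  conv_lhs => rw [← Nat.div_add_mod k t]
  generalize k / t = q
  induction q with
  | zero => simpa using Nat.ModEq.refl (j * 2 ^ (k % t))
  | succ q ih =>
      have he : t * (q + 1) + k % t = t + (t * q + k % t) := by ring
      rw [he]
      calc j * 2 ^ (t + (t * q + k % t))
          = (j * 2 ^ t) * 2 ^ (t * q + k % t) := by ring
        _ ≡ j * 2 ^ (t * q + k % t) [MOD n] := hjt.mul_right _
        _ ≡ j * 2 ^ (k % t) [MOD n] := ih

lemma coset_eq_image (n j t : ℕ) (ht : 0 < t) (hjt : j * 2 ^ t ≡ j [MOD n]) :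
    cycCoset n j = ↑((Finset.range t).image (fun k => j * 2 ^ k % n)) := by
  ext x
  simp only [cycCoset, Set.mem_setOf_eq, Finset.coe_image, Set.mem_image,
    Finset.mem_coe, Finset.mem_range]
  constructor
  · rintro ⟨k, rfl⟩
    exact ⟨k % t, Nat.mod_lt _ ht, (pow_period n j t hjt k).symm⟩
  · rintro ⟨k, _, rfl⟩
    exact ⟨k, rfl⟩

lemma coset_ncard (n j t : ℕ) (ht : 0 < t) (hjt : j * 2 ^ t ≡ j [MOD n])
    (hinj : ∀ a < t, ∀ b < t, j * 2 ^ a % n = j * 2 ^ b % n → a = b) :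
    (cycCoset n j).ncard = t := by
  rw [coset_eq_image n j t ht hjt, Set.ncard_coe_finset,
    Finset.card_image_of_injOn, Finset.card_range]
  intro a ha b hb hab
  exact hinj a (Finset.mem_range.mp ha) b (Finset.mem_range.mp hb) hab

theorem stmt_14 (h : ℕ) (hh : 0 < h) (hho : Odd h) (m n : ℕ) (hm : m = 4 * h)
    (hn : n = 2 ^ m - 1) :
    Nat.gcd (1 + 2 ^ h + 2 ^ (2 * h)) (2 ^ (4 * h) - 1) = 1 ∧
    (cycCoset n 1).ncard = m ∧
    (cycCoset n (1 + 2 ^ h + 2 ^ (2 * h))).ncard = m ∧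
    (cycCoset n (1 + 2 ^ (2 * h))).ncard = m / 2 ∧
    m / 2 = 2 * h ∧
    cycCoset n 1 ∩ cycCoset n (1 + 2 ^ (2 * h)) = ∅ ∧
    cycCoset n 1 ∩ cycCoset n (1 + 2 ^ h + 2 ^ (2 * h)) = ∅ ∧
    cycCoset n (1 + 2 ^ (2 * h)) ∩ cycCoset n (1 + 2 ^ h + 2 ^ (2 * h)) = ∅ := by
  obtain ⟨s, hs⟩ := hho
  set B : ℕ := 2 ^ h with hB
  have hB2 : 2 ≤ B := by
    calc 2 = 2 ^ 1 := (pow_one 2).symm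
    _ ≤ 2 ^ h := Nat.pow_le_pow_right (by norm_num) hh
  have h2h : 2 ^ (2 * h) = B ^ 2 := by rw [hB, ← pow_mul, mul_comm]
  have h3h : 2 ^ (3 * h) = B ^ 3 := by rw [hB, ← pow_mul, mul_comm]
  have h4h : 2 ^ (4 * h) = B ^ 4 := by rw [hB, ← pow_mul, mul_comm]
  have hnB : n = B ^ 4 - 1 := by rw [hn, hm, h4h]
  have hB4 : 16 ≤ B ^ 4 := by
    calc (16 : ℕ) = 2 ^ 4 := by norm_num
    _ ≤ B ^ 4 := Nat.pow_le_pow_left hB2 4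
  -- j2 = 1 + B + B^2, j3 = 1 + B^2
  set j2 : ℕ := 1 + 2 ^ h + 2 ^ (2 * h) with hj2
  set j3 : ℕ := 1 + 2 ^ (2 * h) with hj3
  have hj2B : j2 = 1 + B + B ^ 2 := by rw [hj2, h2h, hB]
  have hj3B : j3 = 1 + B ^ 2 := by rw [hj3, h2h]
  have hn0 : 1 < n := by rw [hnB]; omega
  -- key identity: j2 * (B - 1) = B^3 - 1
  have hident : j2 * (B - 1) + 1 = B ^ 3 := by
    obtain ⟨C, hC⟩ : ∃ C, B = C + 1 := ⟨B - 1, by omega⟩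
    rw [hj2B, hC]
    simp only [Nat.add_sub_cancel]
    ring
  -- Part 1: gcd
  have hgcd : Nat.gcd j2 (2 ^ (4 * h) - 1) = 1 := by
    set d := Nat.gcd j2 (2 ^ (4 * h) - 1) with hd
    have hd2 : d ∣ j2 := Nat.gcd_dvd_left _ _
    have hd4 : d ∣ B ^ 4 - 1 := h4h ▸ Nat.gcd_dvd_right _ _
    have hd3 : d ∣ B ^ 3 - 1 := by
      refine Dvd.dvd.trans (Dvd.dvd.mul_right hd2 (B - 1)) ?_
      exact ⟨1, by omega⟩
    -- from B^3 ≡ 1 and B^4 ≡ 1 mod d, get B ≡ 1 mod d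
    have hm3 : (1 : ℕ) ≡ B ^ 3 [MOD d] := (Nat.modEq_iff_dvd' (Nat.one_le_pow _ _ (by omega))).mpr hd3
    have hm4 : B ^ 4 ≡ 1 [MOD d] := ((Nat.modEq_iff_dvd' (Nat.one_le_pow _ _ (by omega))).mpr hd4).symm
    have hmB : B ≡ 1 [MOD d] := by
      calc B = 1 * B := (one_mul B).symm
        _ ≡ B ^ 3 * B [MOD d] := hm3.mul_right B
        _ = B ^ 4 := by ring
        _ ≡ 1 [MOD d] := hm4
    have hdB1 : d ∣ B - 1 := (Nat.modEq_iff_dvd' (by omega)).mp hmB.symm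
    -- j2 = (B-1)*(B+2) + 3, so d ∣ 3
    have hd3' : d ∣ 3 := by
      have hdec : (B - 1) * (B + 2) + 3 = j2 := by
        obtain ⟨C, hC⟩ : ∃ C, B = C + 1 := ⟨B - 1, by omega⟩
        rw [hj2B, hC]; simp only [Nat.add_sub_cancel]; ring
      have : d ∣ (B - 1) * (B + 2) + 3 := hdec ▸ hd2
      exact (Nat.dvd_add_right (Dvd.dvd.mul_right hdB1 _)).mp this
    -- 3 does not divide B - 1 since h odd
    have hBmod3 : B % 3 = 2 := by
      rw [hB, hs, pow_succ, pow_mul, Nat.mul_mod, Nat.pow_mod]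
      norm_num
    rcases (Nat.prime_three).eq_one_or_self_of_dvd d hd3' with h1 | h3
    · exact h1
    · exfalso
      have h3B : (3 : ℕ) ∣ B - 1 := h3 ▸ hdB1
      omega
  have hgcdn : Nat.Coprime j2 n := by rw [hn, hm]; exact hgcd
  -- 2^m ≡ 1 mod n
  have hm2 : 2 ^ m ≡ 1 [MOD n] := by
    have h1 : 16 ≤ 2 ^ m := by rw [hm, h4h]; exact hB4
    have hn1 : n + 1 = 2 ^ m := by rw [hn]; omega
    show 2 ^ m % n = 1 % n
    rw [← hn1, Nat.add_mod_left]
  have hsq : 4 ≤ B ^ 2 := by nlinarith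
  have hBle : B ≤ B ^ 2 := by nlinarith
  have h24 : 4 * B ^ 2 ≤ B ^ 4 := by nlinarith
  have hm4 : 4 ≤ m := by omega
  -- powers of two below m are < n
  have pow2_lt : ∀ k, k < m → 2 ^ k < n := by
    intro k hk
    have h1 : 2 ^ k ≤ 2 ^ (m - 1) := Nat.pow_le_pow_right (by norm_num) (by omega)
    have h2 : 2 ^ (m - 1) * 2 = 2 ^ m := by rw [← pow_succ]; congr 1; omega
    have h3 : 2 ≤ 2 ^ (m - 1) := by
      calc (2:ℕ) = 2 ^ 1 := (pow_one 2).symm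
      _ ≤ 2 ^ (m - 1) := Nat.pow_le_pow_right (by norm_num) (by omega)
    rw [hn]; omega
  have hm2' : 1 * 2 ^ m ≡ 1 [MOD n] := by simpa using hm2
  -- coset C_1 has size m
  have hc1 : (cycCoset n 1).ncard = m := by
    apply coset_ncard n 1 m (by omega) hm2'
    intro a ha b hb hab
    rw [one_mul, one_mul, Nat.mod_eq_of_lt (pow2_lt a ha),
      Nat.mod_eq_of_lt (pow2_lt b hb)] at hab
    exact Nat.pow_right_injective (le_refl 2) hab
  -- coset C_{j2} has size m
  have hper2 : j2 * 2 ^ m ≡ j2 [MOD n] := by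
    calc j2 * 2 ^ m ≡ j2 * 1 [MOD n] := hm2.mul_left j2
      _ = j2 := mul_one j2
  have hc2 : (cycCoset n j2).ncard = m := by
    apply coset_ncard n j2 m (by omega) hper2
    intro a ha b hb hab
    have hmeq : j2 * 2 ^ a ≡ j2 * 2 ^ b [MOD n] := hab
    have h2ab : 2 ^ a ≡ 2 ^ b [MOD n] :=
      Nat.ModEq.cancel_left_of_coprime hgcdn.symm hmeq
    have h2ab' : 2 ^ a % n = 2 ^ b % n := h2ab
    rw [Nat.mod_eq_of_lt (pow2_lt a ha), Nat.mod_eq_of_lt (pow2_lt b hb)] at h2ab'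
    exact Nat.pow_right_injective (le_refl 2) h2ab'
  -- coset C_{j3} has size 2h
  have hper3 : j3 * 2 ^ (2 * h) ≡ j3 [MOD n] := by
    have key : j3 * 2 ^ (2 * h) = j3 + n := by
      rw [hj3B, h2h, hnB]
      have e1 : (1 + B ^ 2) * B ^ 2 = B ^ 2 + B ^ 4 := by ring
      omega
    show (j3 * 2 ^ (2 * h)) % n = j3 % n
    rw [key, Nat.add_mod_right]
  have hlt3 : ∀ k, k < 2 * h → j3 * 2 ^ k < n := by
    intro k hk
    have h1 : 2 ^ k ≤ 2 ^ (2 * h - 1) := Nat.pow_le_pow_right (by norm_num) (by omega)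
    have h2 : 2 ^ (2 * h - 1) * 2 = 2 ^ (2 * h) := by rw [← pow_succ]; congr 1; omega
    have h4 : j3 * 2 ^ k ≤ (1 + B ^ 2) * 2 ^ (2 * h - 1) := by
      rw [hj3B]; exact Nat.mul_le_mul_left _ h1
    have h5 : (1 + B ^ 2) * 2 ^ (2 * h - 1) * 2 = (1 + B ^ 2) * B ^ 2 := by
      rw [mul_assoc, h2, h2h]
    have e1 : (1 + B ^ 2) * B ^ 2 = B ^ 2 + B ^ 4 := by ring
    rw [hnB]; omega
  have hc3 : (cycCoset n j3).ncard = 2 * h := by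
    apply coset_ncard n j3 (2 * h) (by omega) hper3
    intro a ha b hb hab
    rw [Nat.mod_eq_of_lt (hlt3 a ha), Nat.mod_eq_of_lt (hlt3 b hb)] at hab
    have hj3pos : j3 ≠ 0 := by rw [hj3B]; omega
    have := Nat.eq_of_mul_eq_mul_left (Nat.pos_of_ne_zero hj3pos) hab
    exact Nat.pow_right_injective (le_refl 2) this
  -- oddness and bounds for j2, j3
  have hBdvd : 2 ∣ B := dvd_pow_self 2 hh.ne'
  have hB2dvd : 2 ∣ B ^ 2 := dvd_pow hBdvd (by norm_num)
  have hj2odd : j2 % 2 = 1 := by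
    obtain ⟨u, hu⟩ := hBdvd; obtain ⟨v, hv⟩ := hB2dvd; rw [hj2B]; omega
  have hj3odd : j3 % 2 = 1 := by
    obtain ⟨v, hv⟩ := hB2dvd; rw [hj3B]; omega
  have hj2ge : 3 ≤ j2 := by rw [hj2B]; omega
  have hj3ge : 3 ≤ j3 := by rw [hj3B]; omega
  have hj2lt : j2 < n := by rw [hj2B, hnB]; omega
  have hj3lt : j3 < n := by rw [hj3B, hnB]; omega
  -- generic disjointness of C_1 with an odd coset
  have key1 : ∀ j' : ℕ, j' % 2 = 1 → 3 ≤ j' → j' < n →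
      cycCoset n 1 ∩ cycCoset n j' = ∅ := by
    intro j' hodd h3' hlt'
    rw [Set.eq_empty_iff_forall_notMem]
    rintro x ⟨hx1, hx2⟩
    obtain ⟨a, ha⟩ := hx1
    obtain ⟨b, hbx⟩ := hx2
    rw [one_mul] at ha
    have hcong : 2 ^ a ≡ j' * 2 ^ b [MOD n] := ha.symm.trans hbx
    have hpowb : (2:ℕ) ^ (m * b) ≡ 1 [MOD n] := by
      rw [pow_mul]; simpa using hm2.pow b
    have e : (m - 1) * b + b = m * b := by
      have e1 := Nat.sub_one_mul m b
      have e2 : b ≤ m * b := Nat.le_mul_of_pos_left b (by omega)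
      omega
    have hfin : 2 ^ (a + (m - 1) * b) ≡ j' [MOD n] := by
      calc 2 ^ (a + (m - 1) * b) = 2 ^ a * 2 ^ ((m - 1) * b) := by rw [← pow_add]
        _ ≡ (j' * 2 ^ b) * 2 ^ ((m - 1) * b) [MOD n] := hcong.mul_right _
        _ = j' * 2 ^ (m * b) := by rw [mul_assoc, ← pow_add]; congr 2; omega
        _ ≡ j' * 1 [MOD n] := hpowb.mul_left j'
        _ = j' := mul_one j'
    set c := a + (m - 1) * b with hc
    have hredaux : (1:ℕ) * 2 ^ c ≡ 1 * 2 ^ (c % m) [MOD n] := pow_period n 1 m hm2' c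
    rw [one_mul, one_mul] at hredaux
    have hred : 2 ^ (c % m) ≡ j' [MOD n] := hredaux.symm.trans hfin
    have hcm' : c % m < m := Nat.mod_lt _ (by omega)
    have heq : 2 ^ (c % m) = j' := by
      have hr : 2 ^ (c % m) % n = j' % n := hred
      rwa [Nat.mod_eq_of_lt (pow2_lt _ hcm'), Nat.mod_eq_of_lt hlt'] at hr
    rcases Nat.eq_zero_or_pos (c % m) with h0 | hpos
    · rw [h0, pow_zero] at heq; omega
    · have hdv : 2 ∣ 2 ^ (c % m) := dvd_pow_self 2 hpos.ne'
      obtain ⟨w, hw⟩ := hdv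
      omega
  -- mod-5 facts
  have h16s : ∀ t : ℕ, (16:ℕ) ^ t % 5 = 1 := by
    intro t; rw [Nat.pow_mod]; norm_num
  have h5n : 5 ∣ n := by
    have hB4e : B ^ 4 = 16 ^ h := by
      rw [hB, ← pow_mul, show h * 4 = 4 * h by ring, pow_mul]; norm_num
    have := h16s h
    rw [hnB, hB4e]; omega
  have h5j3 : 5 ∣ j3 := by
    have e2 : 2 ^ (2 * h) = 4 * 16 ^ s := by
      rw [hs, show 2 * (2 * s + 1) = 4 * s + 2 by ring, pow_add, pow_mul]
      norm_num [mul_comm]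
    have := h16s s
    rw [hj3]; omega
  have h5p : Nat.Prime 5 := by norm_num
  have h5j2 : ¬ (5 ∣ j2) := by
    intro hdv
    have hj2e : j2 = j3 + 2 ^ h := by rw [hj2, hj3]; ring
    have h5h : ¬ (5 ∣ 2 ^ h) := by
      intro hd
      have := h5p.dvd_of_dvd_pow hd
      norm_num at this
    rw [hj2e] at hdv
    exact h5h ((Nat.dvd_add_right h5j3).mp hdv)
  -- disjointness of C_{j3} and C_{j2}
  have key23 : cycCoset n j3 ∩ cycCoset n j2 = ∅ := by
    rw [Set.eq_empty_iff_forall_notMem]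
    rintro x ⟨hx1, hx2⟩
    obtain ⟨a, ha⟩ := hx1
    obtain ⟨b, hbx⟩ := hx2
    have h51 : x % 5 = 0 := by
      rw [ha, Nat.mod_mod_of_dvd _ h5n]
      exact (Nat.modEq_zero_iff_dvd).mpr (Dvd.dvd.mul_right h5j3 (2 ^ a))
    have h52 : x % 5 ≠ 0 := by
      rw [hbx, Nat.mod_mod_of_dvd _ h5n]
      intro hc
      have hdv : 5 ∣ j2 * 2 ^ b := by omega
      rcases (Nat.Prime.dvd_mul h5p).mp hdv with hd | hd
      · exact h5j2 hd
      · have := h5p.dvd_of_dvd_pow hd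
        norm_num at this
    exact h52 h51
  refine ⟨hgcd, hc1, hc2, ?_, by omega, key1 j3 hj3odd hj3ge hj3lt,
    key1 j2 hj2odd hj2ge hj2lt, key23⟩
  rw [hc3]; omega
end

section
/- Let h be an odd positive integer, m = 4h, n = 2^m − 1, and let α be a primitive element of the finite field F_{2^m}. Let C = { c = (c_0, …, c_{n−1}) ∈ F_2^n : Σ_{i=0}^{n−1} c_i · α^{j·i} = 0 in F_{2^m} for each j ∈ {1, 1 + 2^{2h}, 1 + 2^h + 2^{2h}} }. Then C is an F_2-linear subspace of F_2^n of dimension 2^m − 1 − 5m/2, and the minimum Hamming weight of a nonzero element of C equals 3. -/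
/-!
`C` is the kernel of the syndrome map `x ↦ (∑ xᵢ αⁱ, ∑ xᵢ α^(t₂ i), ∑ xᵢ α^(t₃ i))` into `F³`,
where `t₂ = 1 + 2^(2h)` and `t₃ = 1 + 2^h + 2^(2h)`. As `t₂ = 1 + #K` for the subfield `K` of
order `2^(2h)`, the middle coordinate is a norm to `K`, so the image lies in `F × K × F`, of
dimension `5m/2`. Equality holds by duality: a functional vanishing on the image is
`v ↦ Tr(a v₁ + b v₂ + c v₃)` with `Tr(a x + b x^t₂ + c x^t₃) = 0` for all `x`. Writing the trace
as `∑ₖ (·)^(2^k)` gives a polynomial of degree `< 2^m` vanishing on `F`. Multiplying an exponent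
by `2^k` modulo `2^m - 1` rotates its binary digits, so the monomials coming from `x`, `x^t₂` and
`x^t₃` have `1`, `2` and `3` binary digits. Comparing coefficients gives `a = 0`, `b ∈ K` and
`c = 0`, and the trace vanishes on `K`.

The condition for `j = 1` alone defines the binary Hamming code, so the weight is at least `3`.
Since `3 ∣ 2^m - 1` and, `h` being odd, no `j` is divisible by `3`, the word supported on
`{0, n/3, 2n/3}` lies in `C`: its syndromes are `1 + ω^j + ω^(2j) = 0` for `ω = α^(n/3)`.
-/

open Finset Polynomial

-- `2 ^ k * ∑ i ∈ S, 2 ^ i ≡ ∑ i ∈ rotateDigits m k S, 2 ^ i [MOD 2 ^ m - 1]` for `S ⊆ range m`.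
def rotateDigits (m k : ℕ) (S : Finset ℕ) : Finset ℕ := S.image fun i => (i + k) % m

section RotateDigits

variable {m k : ℕ} {S T : Finset ℕ}

lemma injOn_add_mod_range (m k : ℕ) :
    Set.InjOn (fun i => (i + k) % m) (range m : Set ℕ) := by
  intro i hi j hj hij
  simp only [coe_range, Set.mem_Iio] at hi hj
  have := Nat.ModEq.add_right_cancel' k hij
  rwa [Nat.ModEq, Nat.mod_eq_of_lt hi, Nat.mod_eq_of_lt hj] at this

lemma card_rotateDigits (hS : S ⊆ range m) : #(rotateDigits m k S) = #S :=
  card_image_of_injOn ((injOn_add_mod_range m k).mono (coe_subset.mpr hS))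

lemma rotateDigits_subset_range (hm : 0 < m) : rotateDigits m k S ⊆ range m := by
  simp only [rotateDigits, image_subset_iff, mem_range]
  exact fun i _ => Nat.mod_lt _ hm

lemma rotateDigits_zero (hS : S ⊆ range m) : rotateDigits m 0 S = S := by
  refine (image_congr fun i hi => ?_).trans image_id
  simp [Nat.mod_eq_of_lt (mem_range.mp (hS hi))]

lemma mem_of_rotateDigits_eq {i : ℕ} (h : rotateDigits m k S = T) (hi : i ∈ S) :
    (i + k) % m ∈ T :=
  h ▸ mem_image_of_mem _ hi

lemma filter_rotateDigits_eq_singleton_zero (hm : 0 < m) :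
    {k ∈ range m | rotateDigits m k {0} = {0}} = {0} := by
  ext k
  simp only [mem_filter, mem_range, mem_singleton, rotateDigits, image_singleton, zero_add,
    singleton_inj]
  constructor
  · rintro ⟨hk, h⟩
    rwa [Nat.mod_eq_of_lt hk] at h
  · rintro rfl
    exact ⟨hm, Nat.zero_mod _⟩

end RotateDigits

section Stabilizers

variable {r : ℕ} (hr : 0 < r)
include hr

lemma filter_rotateDigits_eq_pair :
    {k ∈ range (4 * r) | rotateDigits (4 * r) k {0, 2 * r} = {0, 2 * r}} = {0, 2 * r} := by
  have hS : ({0, 2 * r} : Finset ℕ) ⊆ range (4 * r) := by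
    intro i; simp only [mem_insert, mem_singleton, mem_range]; omega
  ext k
  simp only [mem_filter, mem_range, mem_insert, mem_singleton]
  constructor
  · rintro ⟨hk, h⟩
    simpa [Nat.mod_eq_of_lt hk] using mem_of_rotateDigits_eq h (mem_insert_self 0 _)
  · rintro (rfl | rfl)
    · exact ⟨by omega, rotateDigits_zero hS⟩
    · refine ⟨by omega, ?_⟩
      rw [rotateDigits, image_insert, image_singleton, zero_add, Nat.mod_eq_of_lt (by omega),
        show 2 * r + 2 * r = 4 * r by ring, Nat.mod_self, pair_comm]

lemma filter_rotateDigits_eq_triple :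
    {k ∈ range (4 * r) | rotateDigits (4 * r) k {0, r, 2 * r} = {0, r, 2 * r}} = {0} := by
  have hS : ({0, r, 2 * r} : Finset ℕ) ⊆ range (4 * r) := by
    intro i; simp only [mem_insert, mem_singleton, mem_range]; omega
  ext k
  simp only [mem_filter, mem_range, mem_singleton]
  constructor
  · rintro ⟨hk, h⟩
    have hk' : k = 0 ∨ k = r ∨ k = 2 * r := by
      simpa [Nat.mod_eq_of_lt hk] using mem_of_rotateDigits_eq h (mem_insert_self 0 _)
    have h3r : 3 * r ∉ ({0, r, 2 * r} : Finset ℕ) := by simp; omega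
    rcases hk' with hk' | hk' | hk' <;> rw [hk'] at h
    · exact hk'
    · have := mem_of_rotateDigits_eq h (i := 2 * r) (by simp)
      rw [Nat.mod_eq_of_lt (by omega), show 2 * r + r = 3 * r by ring] at this
      exact absurd this h3r
    · have := mem_of_rotateDigits_eq h (i := r) (by simp)
      rw [Nat.mod_eq_of_lt (by omega), show r + 2 * r = 3 * r by ring] at this
      exact absurd this h3r
  · rintro rfl
    exact ⟨by omega, rotateDigits_zero hS⟩

lemma geomSum_two_pair : ∑ i ∈ ({0, 2 * r} : Finset ℕ), 2 ^ i = 1 + 2 ^ (2 * r) := by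
  rw [sum_pair (by omega), pow_zero]

lemma geomSum_two_triple : ∑ i ∈ ({0, r, 2 * r} : Finset ℕ), 2 ^ i = 1 + 2 ^ r + 2 ^ (2 * r) := by
  rw [sum_insert (by simp; omega), sum_pair (by omega), pow_zero, add_assoc]

end Stabilizers

section TracePoly

variable {F : Type*} [Field F] {m : ℕ}

lemma pow_two_pow_eq_pow_two_pow_mod [Fintype F] (hF : Fintype.card F = 2 ^ m) (x : F)
    (j : ℕ) : x ^ 2 ^ j = x ^ 2 ^ (j % m) := by
  conv_lhs => rw [← Nat.mod_add_div j m, pow_add, pow_mul, pow_mul, ← hF,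
    FiniteField.pow_card_pow]

lemma pow_geomSum_pow_two_pow [Fintype F] (hF : Fintype.card F = 2 ^ m) {S : Finset ℕ}
    (hS : S ⊆ range m) (x : F) (k : ℕ) :
    (x ^ ∑ i ∈ S, 2 ^ i) ^ 2 ^ k = x ^ ∑ i ∈ rotateDigits m k S, 2 ^ i := by
  rw [← pow_mul, sum_mul, rotateDigits,
    sum_image ((injOn_add_mod_range m k).mono (coe_subset.mpr hS)), ← prod_pow_eq_pow_sum,
    ← prod_pow_eq_pow_sum]
  refine prod_congr rfl fun i _ => ?_
  rw [← pow_add, pow_two_pow_eq_pow_two_pow_mod hF]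

noncomputable def tracePoly (m : ℕ) (a : F) (S : Finset ℕ) : F[X] :=
  ∑ k ∈ range m, monomial (∑ i ∈ rotateDigits m k S, 2 ^ i) (a ^ 2 ^ k)

lemma eval_tracePoly [Fintype F] (hF : Fintype.card F = 2 ^ m) (a : F) {S : Finset ℕ}
    (hS : S ⊆ range m) (x : F) :
    (tracePoly m a S).eval x = ∑ k ∈ range m, (a * x ^ ∑ i ∈ S, 2 ^ i) ^ 2 ^ k := by
  simp only [tracePoly, eval_finsetSum, eval_monomial, mul_pow, pow_geomSum_pow_two_pow hF hS]

lemma natDegree_tracePoly_lt (a : F) (S : Finset ℕ) : (tracePoly m a S).natDegree < 2 ^ m := by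
  refine lt_of_le_of_lt (natDegree_sum_le_of_forall_le _ _ (n := 2 ^ m - 1) fun k hk => ?_)
    (Nat.sub_lt (Nat.two_pow_pos m) one_pos)
  have hm : 0 < m := Nat.zero_lt_of_lt (mem_range.mp hk)
  refine (natDegree_monomial_le _).trans (Nat.le_sub_one_of_lt (Nat.geomSum_lt le_rfl ?_))
  exact fun i hi => mem_range.mp (rotateDigits_subset_range hm hi)

lemma coeff_tracePoly (a : F) (S T : Finset ℕ) :
    (tracePoly m a S).coeff (∑ i ∈ T, 2 ^ i) =
      ∑ k ∈ range m with rotateDigits m k S = T, a ^ 2 ^ k := by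
  simp only [tracePoly, finsetSum_coeff, coeff_monomial, sum_filter,
    (geomSum_injective le_rfl).eq_iff]

lemma coeff_tracePoly_of_card_ne (a : F) {S T : Finset ℕ} (hS : S ⊆ range m)
    (hST : #S ≠ #T) : (tracePoly m a S).coeff (∑ i ∈ T, 2 ^ i) = 0 := by
  rw [coeff_tracePoly, filter_false_of_mem fun k _ h => hST (h ▸ card_rotateDigits hS).symm,
    sum_empty]

theorem eq_zero_of_forall_sum_pow_two_pow_eq_zero [Fintype F] {r : ℕ} (hr : 0 < r)
    (hF : Fintype.card F = 2 ^ (4 * r)) {a b c : F}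
    (h : ∀ x : F, ∑ k ∈ range (4 * r), (a * x) ^ 2 ^ k
      + ∑ k ∈ range (4 * r), (b * x ^ (1 + 2 ^ (2 * r))) ^ 2 ^ k
      + ∑ k ∈ range (4 * r), (c * x ^ (1 + 2 ^ r + 2 ^ (2 * r))) ^ 2 ^ k = 0) :
    a = 0 ∧ b ^ 2 ^ (2 * r) + b = 0 ∧ c = 0 := by
  have hsub : ∀ {S : Finset ℕ}, (∀ i ∈ S, i ≤ 2 * r) → S ⊆ range (4 * r) :=
    fun hS i hi => mem_range.mpr (by linarith [hS i hi])
  have h₁ : ({0} : Finset ℕ) ⊆ range (4 * r) := hsub (by simp)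
  have h₂ : ({0, 2 * r} : Finset ℕ) ⊆ range (4 * r) := hsub (by simp)
  have h₃ : ({0, r, 2 * r} : Finset ℕ) ⊆ range (4 * r) := hsub (by simp; omega)
  set Q := tracePoly (4 * r) a {0} + tracePoly (4 * r) b {0, 2 * r} +
    tracePoly (4 * r) c {0, r, 2 * r}
  have hQ : Q = 0 := by
    refine eq_zero_of_natDegree_lt_card_of_eval_eq_zero Q Function.injective_id (fun x => ?_) ?_
    · simpa only [Q, eval_add, eval_tracePoly hF _ h₁, eval_tracePoly hF _ h₂,
        eval_tracePoly hF _ h₃, sum_singleton, pow_zero, pow_one, geomSum_two_pair hr,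
        geomSum_two_triple hr, id] using h x
    · rw [hF]
      refine (natDegree_add_le _ _).trans_lt (max_lt ((natDegree_add_le _ _).trans_lt
        (max_lt ?_ ?_)) ?_) <;> exact natDegree_tracePoly_lt _ _
  have c₂ : #({0, 2 * r} : Finset ℕ) = 2 := card_pair (by omega)
  have c₃ : #({0, r, 2 * r} : Finset ℕ) = 3 := by
    rw [card_insert_of_notMem (by simp; omega), card_pair (by omega)]
  have hcoeff (T : Finset ℕ) := congrArg (coeff · (∑ i ∈ T, 2 ^ i)) hQ
  simp only [Q, coeff_add, coeff_zero] at hcoeff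
  -- Rotation preserves the number of binary digits, so each coefficient comes from one summand.
  refine ⟨?_, ?_, ?_⟩
  · have h := hcoeff {0}
    rw [coeff_tracePoly_of_card_ne _ h₂ (by simp [c₂]),
      coeff_tracePoly_of_card_ne _ h₃ (by simp [c₃]), coeff_tracePoly,
      filter_rotateDigits_eq_singleton_zero (by omega)] at h
    simpa using h
  · have h := hcoeff {0, 2 * r}
    rw [coeff_tracePoly_of_card_ne _ h₁ (by simp [c₂]),
      coeff_tracePoly_of_card_ne _ h₃ (by simp [c₂, c₃]), coeff_tracePoly,
      filter_rotateDigits_eq_pair hr, sum_pair (by omega)] at h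
    simpa [add_comm] using h
  · have h := hcoeff {0, r, 2 * r}
    rw [coeff_tracePoly_of_card_ne _ h₁ (by simp [c₃]),
      coeff_tracePoly_of_card_ne _ h₂ (by simp [c₂, c₃]), coeff_tracePoly,
      filter_rotateDigits_eq_triple hr] at h
    simpa using h

end TracePoly

theorem charP_two_of_zmod_algebra (F : Type*) [Field F] [Algebra (ZMod 2) F] : CharP F 2 :=
  charP_of_injective_algebraMap (algebraMap (ZMod 2) F).injective 2

attribute [local instance] charP_two_of_zmod_algebra

section Frobenius

variable (F : Type*) [Field F] [Algebra (ZMod 2) F]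

noncomputable def iterateFrobeniusAddId (r : ℕ) : F →ₗ[ZMod 2] F :=
  AddMonoidHom.toZModLinearMap 2
    { toFun := fun x => x ^ 2 ^ r + x
      map_zero' := by simp
      map_add' := fun x y => by rw [add_pow_char_pow]; ring }

-- The subfield of order `2 ^ r` (when it exists), as a kernel so that rank-nullity applies.
noncomputable def iterateFrobeniusFixed (r : ℕ) : Submodule (ZMod 2) F :=
  LinearMap.ker (iterateFrobeniusAddId F r)

variable {F} {r : ℕ}

lemma mem_iterateFrobeniusFixed {y : F} : y ∈ iterateFrobeniusFixed F r ↔ y ^ 2 ^ r = y :=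
  LinearMap.mem_ker.trans CharTwo.add_eq_zero

variable [Fintype F]

lemma finrank_zmod_two_of_card_eq {m : ℕ} (hF : Fintype.card F = 2 ^ m) :
    Module.finrank (ZMod 2) F = m := by
  rw [Module.card_eq_pow_finrank (K := ZMod 2), ZMod.card] at hF
  exact Nat.pow_right_injective le_rfl hF

lemma card_iterateFrobeniusFixed_le (hr : r ≠ 0) :
    Nat.card (iterateFrobeniusFixed F r) ≤ 2 ^ r := by
  classical
  have hp : (1 : ℕ) < 2 := one_lt_two
  calc Nat.card (iterateFrobeniusFixed F r)
      = #{y | y ∈ iterateFrobeniusFixed F r} := by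
        rw [Nat.card_eq_fintype_card, Fintype.card_subtype]
    _ ≤ (X ^ 2 ^ r - X : F[X]).natDegree := by
      refine card_le_degree_of_subset_roots fun y hy => ?_
      rw [mem_roots (FiniteField.X_pow_card_pow_sub_X_ne_zero F hr hp), IsRoot.def, eval_sub,
        eval_pow, eval_X, sub_eq_zero, ← mem_iterateFrobeniusFixed]
      exact (mem_filter.mp hy).2
    _ = 2 ^ r := FiniteField.X_pow_card_pow_sub_X_natDegree_eq F hr hp

lemma finrank_iterateFrobeniusFixed (hF : Fintype.card F = 2 ^ (2 * r)) :
    Module.finrank (ZMod 2) (iterateFrobeniusFixed F r) = r := by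
  -- `x ↦ x ^ 2 ^ r` is an involution, so `iterateFrobeniusAddId F r` squares to zero.
  have hrange : LinearMap.range (iterateFrobeniusAddId F r) ≤ iterateFrobeniusFixed F r := by
    rintro _ ⟨x, rfl⟩
    rw [iterateFrobeniusFixed, LinearMap.mem_ker]
    show (x ^ 2 ^ r + x) ^ 2 ^ r + (x ^ 2 ^ r + x) = 0
    have hx : x ^ 2 ^ (2 * r) = x := hF ▸ FiniteField.pow_card x
    rw [add_pow_char_pow, ← pow_mul, ← pow_add, ← two_mul, hx, add_comm x]
    exact CharTwo.add_self_eq_zero _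
  have hle : Module.finrank (ZMod 2) (iterateFrobeniusFixed F r) ≤ r := by
    have hr : r ≠ 0 := by
      rintro rfl
      exact Fintype.one_lt_card.ne' (by simpa using hF)
    have := card_iterateFrobeniusFixed_le (F := F) hr
    rw [Module.natCard_eq_pow_finrank (K := ZMod 2), Nat.card_zmod] at this
    exact (Nat.pow_le_pow_iff_right one_lt_two).mp this
  have := LinearMap.finrank_range_add_finrank_ker (iterateFrobeniusAddId F r)
  have := Submodule.finrank_mono hrange
  rw [finrank_zmod_two_of_card_eq hF] at *
  unfold iterateFrobeniusFixed at *
  omega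

lemma pow_one_add_two_pow_mem_iterateFrobeniusFixed (hF : Fintype.card F = 2 ^ (2 * r))
    (x : F) : x ^ (1 + 2 ^ r) ∈ iterateFrobeniusFixed F r := by
  have hx : x ^ 2 ^ (2 * r) = x := hF ▸ FiniteField.pow_card x
  rw [mem_iterateFrobeniusFixed, ← pow_mul, add_mul, one_mul, ← pow_add, ← two_mul, pow_add, hx,
    mul_comm, ← pow_succ', add_comm]

end Frobenius

section Trace

variable {F : Type*} [Field F] [Fintype F] [Algebra (ZMod 2) F] {r : ℕ}

lemma algebraMap_trace_eq_sum_pow_two_pow {m : ℕ} (hF : Fintype.card F = 2 ^ m) (y : F) :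
    algebraMap (ZMod 2) F (Algebra.trace (ZMod 2) F y) = ∑ k ∈ range m, y ^ 2 ^ k := by
  rw [FiniteField.algebraMap_trace_eq_sum_pow, finrank_zmod_two_of_card_eq hF, Nat.card_zmod]

lemma trace_eq_zero_of_mem_iterateFrobeniusFixed (hF : Fintype.card F = 2 ^ (2 * r)) {y : F}
    (hy : y ∈ iterateFrobeniusFixed F r) : Algebra.trace (ZMod 2) F y = 0 := by
  apply (algebraMap (ZMod 2) F).injective
  rw [algebraMap_trace_eq_sum_pow_two_pow hF, map_zero, two_mul, sum_range_add]
  simp_rw [pow_add, pow_mul, mem_iterateFrobeniusFixed.mp hy]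
  exact CharTwo.add_self_eq_zero _

theorem eq_zero_of_forall_trace_eq_zero (hr : 0 < r) (hF : Fintype.card F = 2 ^ (4 * r))
    {a b c : F}
    (h : ∀ x : F, Algebra.trace (ZMod 2) F (a * x)
      + Algebra.trace (ZMod 2) F (b * x ^ (1 + 2 ^ (2 * r)))
      + Algebra.trace (ZMod 2) F (c * x ^ (1 + 2 ^ r + 2 ^ (2 * r))) = 0) :
    a = 0 ∧ b ∈ iterateFrobeniusFixed F (2 * r) ∧ c = 0 :=
  eq_zero_of_forall_sum_pow_two_pow_eq_zero hr hF fun x => by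
    simpa only [map_add, algebraMap_trace_eq_sum_pow_two_pow hF, map_zero] using
      congrArg (algebraMap (ZMod 2) F) (h x)

end Trace

section Duality

variable {K L : Type*} [Field K] [Field L] [Algebra K L] [FiniteDimensional K L]
  [Algebra.IsSeparable K L]

lemma exists_forall_apply_eq_trace_mul (f : Module.Dual K L) :
    ∃ a : L, ∀ v, f v = Algebra.trace K L (a * v) :=
  ⟨((Algebra.traceForm K L).toDual (traceForm_nondegenerate K L)).symm f, fun v => by
    rw [← Algebra.traceForm_apply, LinearMap.BilinForm.apply_toDual_symm_apply]⟩

lemma exists_forall_apply_eq_trace_mul_prod (f : Module.Dual K (L × L × L)) :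
    ∃ a b c : L, ∀ v : L × L × L, f v = Algebra.trace K L (a * v.1)
      + Algebra.trace K L (b * v.2.1) + Algebra.trace K L (c * v.2.2) := by
  obtain ⟨a, ha⟩ := exists_forall_apply_eq_trace_mul (f ∘ₗ LinearMap.inl K L (L × L))
  obtain ⟨b, hb⟩ := exists_forall_apply_eq_trace_mul
    (f ∘ₗ LinearMap.inr K L (L × L) ∘ₗ LinearMap.inl K L L)
  obtain ⟨c, hc⟩ := exists_forall_apply_eq_trace_mul
    (f ∘ₗ LinearMap.inr K L (L × L) ∘ₗ LinearMap.inr K L L)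
  refine ⟨a, b, c, fun v => ?_⟩
  rw [← ha, ← hb, ← hc]
  simp only [LinearMap.comp_apply, LinearMap.inl_apply, LinearMap.inr_apply, ← map_add]
  congr 1
  ext <;> simp

end Duality

lemma Submodule.finrank_prod {R M N : Type*} [DivisionRing R] [AddCommGroup M] [Module R M]
    [AddCommGroup N] [Module R N] [FiniteDimensional R M] [FiniteDimensional R N]
    (p : Submodule R M) (q : Submodule R N) :
    Module.finrank R (p.prod q) = Module.finrank R p + Module.finrank R q := by
  have hinj : Function.Injective (p.subtype.prodMap q.subtype) := by
    rw [LinearMap.coe_prodMap]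
    exact p.injective_subtype.prodMap q.injective_subtype
  calc Module.finrank R (p.prod q)
      = Module.finrank R (LinearMap.range (p.subtype.prodMap q.subtype)) := by
        rw [LinearMap.range_prodMap, Submodule.range_subtype, Submodule.range_subtype]
    _ = Module.finrank R p + Module.finrank R q := by
        rw [LinearMap.finrank_range_of_inj hinj, Module.finrank_prod]

section Syndrome

variable {F : Type*} [Field F] [Fintype F] [Algebra (ZMod 2) F]

variable (n : ℕ) (α : F) in
noncomputable def powSyndrome (j : ℕ) : (Fin n → ZMod 2) →ₗ[ZMod 2] F :=
  Fintype.linearCombination (ZMod 2) fun i : Fin n => α ^ (j * i)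

variable (n : ℕ) (α : F) in
noncomputable def syndrome (r : ℕ) : (Fin n → ZMod 2) →ₗ[ZMod 2] F × F × F :=
  (powSyndrome n α 1).prod
    ((powSyndrome n α (1 + 2 ^ (2 * r))).prod (powSyndrome n α (1 + 2 ^ r + 2 ^ (2 * r))))

variable (F) in
noncomputable def syndromeSpace (r : ℕ) : Submodule (ZMod 2) (F × F × F) :=
  (⊤ : Submodule (ZMod 2) F).prod ((iterateFrobeniusFixed F (2 * r)).prod ⊤)

variable {n : ℕ} {α : F} {r : ℕ}

lemma finrank_syndromeSpace (hF : Fintype.card F = 2 ^ (4 * r)) :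
    Module.finrank (ZMod 2) (syndromeSpace F r) = 10 * r := by
  rw [syndromeSpace, Submodule.finrank_prod, Submodule.finrank_prod, finrank_top,
    finrank_zmod_two_of_card_eq hF, finrank_iterateFrobeniusFixed (by rw [hF]; ring_nf)]
  ring

lemma range_syndrome_le (hF : Fintype.card F = 2 ^ (4 * r)) :
    LinearMap.range (syndrome n α r) ≤ syndromeSpace F r := by
  rintro _ ⟨x, rfl⟩
  refine Submodule.mem_prod.mpr ⟨trivial, Submodule.mem_prod.mpr ⟨?_, trivial⟩⟩
  have hrange : LinearMap.range (powSyndrome n α (1 + 2 ^ (2 * r))) ≤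
      iterateFrobeniusFixed F (2 * r) := by
    rw [powSyndrome, Fintype.range_linearCombination, Submodule.span_le]
    rintro _ ⟨i, rfl⟩
    dsimp only
    rw [SetLike.mem_coe, pow_mul' α]
    exact pow_one_add_two_pow_mem_iterateFrobeniusFixed (by rw [hF]; ring_nf) _
  exact hrange (LinearMap.mem_range_self _ x)

lemma le_range_syndrome (hr : 0 < r) (hF : Fintype.card F = 2 ^ (4 * r))
    (hα : IsPrimitiveRoot α n) (hn : n = Fintype.card F - 1) :
    syndromeSpace F r ≤ LinearMap.range (syndrome n α r) := by
  classical
  have : NeZero n :=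
    ⟨by rw [hn, hF]; exact Nat.sub_ne_zero_iff_lt.mpr (Nat.one_lt_two_pow (by omega))⟩
  rw [← Subspace.dualAnnihilator_le_dualAnnihilator_iff]
  intro f hf
  rw [Submodule.mem_dualAnnihilator] at hf ⊢
  obtain ⟨a, b, c, hfabc⟩ := exists_forall_apply_eq_trace_mul_prod f
  have hpow (i : Fin n) : f (α ^ (i : ℕ), (α ^ (i : ℕ)) ^ (1 + 2 ^ (2 * r)),
      (α ^ (i : ℕ)) ^ (1 + 2 ^ r + 2 ^ (2 * r))) = 0 := by
    simpa [syndrome, powSyndrome, ← pow_mul, mul_comm] using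
      hf _ (LinearMap.mem_range_self _ (Pi.single i 1))
  obtain ⟨ha, hb, hc⟩ := eq_zero_of_forall_trace_eq_zero hr hF (a := a) (b := b) (c := c)
    fun x => by
      obtain rfl | hx := eq_or_ne x 0
      · simp
      obtain ⟨i, hi, rfl⟩ := hα.eq_pow_of_pow_eq_one
        (by rw [hn]; exact FiniteField.pow_card_sub_one_eq_one x hx)
      simpa [hfabc] using hpow ⟨i, hi⟩
  rintro v hv
  obtain ⟨-, hv₂, -⟩ := Submodule.mem_prod.mp hv
  rw [hfabc, ha, hc, zero_mul, zero_mul, map_zero, zero_add, add_zero]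
  refine trace_eq_zero_of_mem_iterateFrobeniusFixed (r := 2 * r) (by rw [hF]; ring_nf) ?_
  rw [mem_iterateFrobeniusFixed, mul_pow, mem_iterateFrobeniusFixed.mp hb,
    mem_iterateFrobeniusFixed.mp hv₂]

lemma range_syndrome (hr : 0 < r) (hF : Fintype.card F = 2 ^ (4 * r))
    (hα : IsPrimitiveRoot α n) (hn : n = Fintype.card F - 1) :
    LinearMap.range (syndrome n α r) = syndromeSpace F r :=
  le_antisymm (range_syndrome_le hF) (le_range_syndrome hr hF hα hn)

lemma finrank_ker_syndrome (hr : 0 < r) (hF : Fintype.card F = 2 ^ (4 * r))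
    (hα : IsPrimitiveRoot α n) (hn : n = Fintype.card F - 1) :
    Module.finrank (ZMod 2) (LinearMap.ker (syndrome n α r)) = n - 10 * r := by
  have := LinearMap.finrank_range_add_finrank_ker (syndrome n α r)
  rw [range_syndrome hr hF hα hn, finrank_syndromeSpace hF, Module.finrank_fin_fun] at this
  omega

end Syndrome

lemma sum_zmod_two_smul_eq_sum_filter {ι M : Type*} [Fintype ι] [AddCommGroup M]
    [Module (ZMod 2) M] (c : ι → ZMod 2) (v : ι → M) :
    ∑ i, c i • v i = ∑ i with c i ≠ 0, v i := by
  rw [sum_filter]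
  refine sum_congr rfl fun i _ => ?_
  rcases (by decide : ∀ z : ZMod 2, z = 0 ∨ z = 1) (c i) with h | h <;> simp [h]

lemma IsPrimitiveRoot.one_add_pow_add_pow_two_mul_eq_zero {R : Type*} [CommRing R] [IsDomain R]
    {ω : R} (hω : IsPrimitiveRoot ω 3) {j : ℕ} (hj : ¬ 3 ∣ j) : 1 + ω ^ j + ω ^ (2 * j) = 0 := by
  have hcop : j.Coprime 3 := (Nat.Prime.coprime_iff_not_dvd Nat.prime_three).mpr hj |>.symm
  simpa [sum_range_succ, ← pow_mul, mul_comm] using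
    (hω.pow_of_coprime j hcop).geom_sum_eq_zero (by norm_num)

section Weight

variable {F : Type*} [Field F] [Algebra (ZMod 2) F] {n : ℕ} {α : F}

lemma three_le_hammingNorm_of_sum_smul_pow_eq_zero (hα : IsPrimitiveRoot α n)
    {c : Fin n → ZMod 2} (hc : c ≠ 0) (h : ∑ i, c i • α ^ (i : ℕ) = 0) : 3 ≤ hammingNorm c := by
  have hn : n ≠ 0 := by
    rintro rfl
    exact hc (Subsingleton.elim _ _)
  rw [sum_zmod_two_smul_eq_sum_filter] at h
  have hpos := hammingNorm_pos_iff.mpr hc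
  rw [hammingNorm] at hpos ⊢
  by_contra! hlt
  interval_cases hs : #{i | c i ≠ 0}
  · obtain ⟨i, hi⟩ := card_eq_one.mp hs
    rw [hi, sum_singleton] at h
    exact pow_ne_zero _ (hα.ne_zero hn) h
  · obtain ⟨i, j, hij, hi⟩ := card_eq_two.mp hs
    rw [hi, sum_pair hij, CharTwo.add_eq_zero] at h
    exact hij (Fin.ext (hα.pow_inj i.is_lt j.is_lt h))

lemma exists_hammingNorm_eq_three (hα : IsPrimitiveRoot α n) (hn : 0 < n) (h3 : 3 ∣ n) :
    ∃ c : Fin n → ZMod 2, hammingNorm c = 3 ∧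
      ∀ j : ℕ, ¬ 3 ∣ j → ∑ i, c i • α ^ (j * (i : ℕ)) = 0 := by
  classical
  obtain ⟨a, rfl⟩ := h3
  set s : Finset (Fin (3 * a)) := {⟨0, by omega⟩, ⟨a, by omega⟩, ⟨2 * a, by omega⟩}
  set c : Fin (3 * a) → ZMod 2 := fun i => if i ∈ s then 1 else 0
  have hsupp : ({i | c i ≠ 0} : Finset _) = s := by ext; simp [c]
  have hs : #s = 3 := by
    rw [card_insert_of_notMem (by simp [Fin.ext_iff]; omega),
      card_pair (by simp [Fin.ext_iff]; omega)]
  refine ⟨c, by rw [hammingNorm, hsupp, hs], fun j hj => ?_⟩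
  have hω : IsPrimitiveRoot (α ^ a) 3 := hα.pow hn (mul_comm 3 a)
  rw [sum_zmod_two_smul_eq_sum_filter, hsupp, sum_insert (by simp [Fin.ext_iff]; omega),
    sum_pair (by simp [Fin.ext_iff]; omega)]
  simpa [← pow_mul, mul_comm, mul_left_comm, add_assoc] using
    hω.one_add_pow_add_pow_two_mul_eq_zero hj

end Weight

lemma three_dvd_two_pow_four_mul_sub_one (h : ℕ) : 3 ∣ 2 ^ (4 * h) - 1 := by
  have := Nat.sub_dvd_pow_sub_pow (2 ^ 4) 1 h
  rw [one_pow, ← pow_mul] at this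
  exact (show 3 ∣ 2 ^ 4 - 1 by norm_num).trans this

lemma not_three_dvd_of_mem_exponents {h : ℕ} (hh : Odd h) :
    ∀ j ∈ ({1, 1 + 2 ^ (2 * h), 1 + 2 ^ h + 2 ^ (2 * h)} : Set ℕ), ¬ 3 ∣ j := by
  have h₂ : 2 ^ (2 * h) % 3 = 1 := by rw [pow_mul, Nat.pow_mod]; norm_num
  have h₁ : 2 ^ h % 3 = 2 := by
    obtain ⟨k, rfl⟩ := hh
    rw [pow_succ, pow_mul, Nat.mul_mod, Nat.pow_mod]; norm_num
  simp only [Set.mem_insert_iff, Set.mem_singleton_iff, forall_eq_or_imp, forall_eq]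
  omega

theorem stmt_15 (h : ℕ) (hh : 0 < h) (hho : Odd h) (m n : ℕ) (hm : m = 4 * h)
    (hn : n = 2 ^ m - 1)
    (F : Type) [Field F] [Fintype F] [Algebra (ZMod 2) F]
    (hF : Fintype.card F = 2 ^ m) (α : F) (hα : orderOf α = n)
    (C : Set (Fin n → ZMod 2))
    (hC : C = {c | ∀ j ∈ ({1, 1 + 2 ^ (2 * h), 1 + 2 ^ h + 2 ^ (2 * h)} : Set ℕ),
                 ∑ i : Fin n, c i • α ^ (j * (i : ℕ)) = 0}) :
    (∃ W : Submodule (ZMod 2) (Fin n → ZMod 2),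
        (W : Set (Fin n → ZMod 2)) = C ∧
        Module.finrank (ZMod 2) W = 2 ^ m - 1 - 5 * m / 2) ∧
    IsLeast {w : ℕ | ∃ c ∈ C, c ≠ 0 ∧ hammingNorm c = w} 3 := by
  subst hm
  have hα' : IsPrimitiveRoot α n := hα ▸ IsPrimitiveRoot.orderOf α
  have hnF : n = Fintype.card F - 1 := by rw [hF, hn]
  have hC' : C = LinearMap.ker (syndrome n α h) := by
    ext c
    simp [hC, syndrome, powSyndrome, Fintype.linearCombination_apply]
  refine ⟨⟨_, hC'.symm, ?_⟩, ?_, ?_⟩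
  · rw [finrank_ker_syndrome hh hF hα' hnF, hn]
    omega
  · have hn0 : 0 < n := by rw [hn]; exact Nat.sub_pos_of_lt (Nat.one_lt_two_pow (by omega))
    obtain ⟨c, hc3, hcC⟩ := exists_hammingNorm_eq_three hα' hn0
      (hn ▸ three_dvd_two_pow_four_mul_sub_one h)
    refine ⟨c, hC ▸ fun j hj => hcC j (not_three_dvd_of_mem_exponents hho j hj), ?_, hc3⟩
    exact hammingNorm_pos_iff.mp (by omega)
  · rintro w ⟨c, hcC, hc0, rfl⟩
    rw [hC] at hcC
    exact three_le_hammingNorm_of_sum_smul_pow_eq_zero hα' hc0 (by simpa using hcC 1 (by simp))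
end

section
/- Let a > 1 be an integer and let l and h be positive integers. Then gcd(a^l + 1, a^h − 1) = 1 if h/gcd(l,h) is odd and a is even; gcd(a^l + 1, a^h − 1) = 2 if h/gcd(l,h) is odd and a is odd; and gcd(a^l + 1, a^h − 1) = a^{gcd(l,h)} + 1 if h/gcd(l,h) is even. -/
/-- If `x ∣ a^m - 1` and `x ∣ a^n - 1` then `x ∣ a^(gcd m n) - 1` (over ℤ). -/
lemma aux_dvd_pow_gcd_s16 (a x : ℤ) : ∀ m n : ℕ, x ∣ a ^ m - 1 → x ∣ a ^ n - 1 →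
    x ∣ a ^ Nat.gcd m n - 1 := by
  intro m n
  induction m, n using Nat.gcd.induction with
  | H0 n => simp
  | H1 m n hm ih =>
    intro h1 h2
    rw [Nat.gcd_rec]
    refine ih ?_ h1
    have hpow : a ^ n = a ^ (m * (n / m)) * a ^ (n % m) := by
      rw [← pow_add, Nat.div_add_mod]
    have hdvd : x ∣ a ^ (m * (n / m)) - 1 := by
      have := sub_dvd_pow_sub_pow (a ^ m) 1 (n / m)
      rw [one_pow, ← pow_mul] at this
      exact h1.trans this
    have heq : a ^ (n % m) - 1 = (a ^ n - 1) - a ^ (n % m) * (a ^ (m * (n / m)) - 1) := by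
      rw [hpow]; ring
    rw [heq]
    exact dvd_sub h2 (hdvd.mul_left _)

theorem stmt_16 (a l h : ℕ) (ha : 1 < a) (hl : 0 < l) (hh : 0 < h) :
    (Odd (h / Nat.gcd l h) → Even a → Nat.gcd (a ^ l + 1) (a ^ h - 1) = 1) ∧
    (Odd (h / Nat.gcd l h) → Odd a → Nat.gcd (a ^ l + 1) (a ^ h - 1) = 2) ∧
    (Even (h / Nat.gcd l h) → Nat.gcd (a ^ l + 1) (a ^ h - 1) = a ^ Nat.gcd l h + 1) := by
  set d := Nat.gcd l h with hd
  set N := Nat.gcd (a ^ l + 1) (a ^ h - 1) with hN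
  have hd0 : 0 < d := Nat.gcd_pos_of_pos_left h hl
  obtain ⟨l', hl'⟩ : d ∣ l := Nat.gcd_dvd_left l h
  obtain ⟨h', hh'⟩ : d ∣ h := Nat.gcd_dvd_right l h
  have hL : l / d = l' := by rw [hl', Nat.mul_div_cancel_left _ hd0]
  have hH : h / d = h' := by rw [hh', Nat.mul_div_cancel_left _ hd0]
  have hcop : Nat.Coprime l' h' := by
    have H := Nat.coprime_div_gcd_div_gcd (m := l) (n := h) (hd ▸ hd0)
    rwa [← hd, hL, hH] at H
  have hl'0 : 0 < l' := by
    rcases Nat.eq_zero_or_pos l' with rfl | h0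
    · simp at hl'; omega
    · exact h0
  have hh'0 : 0 < h' := by
    rcases Nat.eq_zero_or_pos h' with rfl | h0
    · simp at hh'; omega
    · exact h0
  have hah : 1 ≤ a ^ h := Nat.one_le_pow _ _ (by omega)
  have hal : 1 ≤ a ^ l := Nat.one_le_pow _ _ (by omega)
  have had : 1 ≤ a ^ d := Nat.one_le_pow _ _ (by omega)
  -- integer versions of the divisibilities of N
  have hNl : (N : ℤ) ∣ (a : ℤ) ^ l + 1 := by
    have h1 : N ∣ a ^ l + 1 := Nat.gcd_dvd_left _ _
    have := Int.natCast_dvd_natCast.mpr h1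
    push_cast at this
    exact this
  have hNh : (N : ℤ) ∣ (a : ℤ) ^ h - 1 := by
    have h1 : N ∣ a ^ h - 1 := Nat.gcd_dvd_right _ _
    have := Int.natCast_dvd_natCast.mpr h1
    rwa [Nat.cast_sub hah, Nat.cast_pow, Nat.cast_one] at this
  have hN2l : (N : ℤ) ∣ (a : ℤ) ^ (2 * l) - 1 := by
    have heq : (a : ℤ) ^ (2 * l) - 1 = ((a : ℤ) ^ l + 1) * ((a : ℤ) ^ l - 1) := by
      rw [two_mul, pow_add]; ring
    rw [heq]
    exact hNl.mul_right _
  have hgcd2 : (N : ℤ) ∣ (a : ℤ) ^ Nat.gcd (2 * l) h - 1 :=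
    aux_dvd_pow_gcd_s16 _ _ _ _ hN2l hNh
  -- common consequence in the odd case
  have oddCase : Odd h' → N ∣ 2 := by
    intro hodd
    have hg : Nat.gcd (2 * l) h = d := by
      rw [hl', hh', show 2 * (d * l') = d * (2 * l') by ring, Nat.gcd_mul_left]
      have hcp : Nat.Coprime (2 * l') h' :=
        Nat.Coprime.mul (Nat.coprime_two_left.mpr hodd) hcop
      rw [hcp.gcd_eq_one, Nat.mul_one]
    rw [hg] at hgcd2
    have hNd : (N : ℤ) ∣ (a : ℤ) ^ l - 1 := by
      refine hgcd2.trans ?_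
      have := sub_dvd_pow_sub_pow ((a : ℤ) ^ d) 1 l'
      rwa [one_pow, ← pow_mul, ← hl'] at this
    have hN2 : (N : ℤ) ∣ 2 := by
      have hsub := dvd_sub hNl hNd
      have : (a : ℤ) ^ l + 1 - ((a : ℤ) ^ l - 1) = 2 := by ring
      rwa [this] at hsub
    exact_mod_cast hN2
  refine ⟨?_, ?_, ?_⟩
  · -- h' odd, a even → N = 1
    intro hodd heven
    rw [hH] at hodd
    have hN2' := oddCase hodd
    have hodda : ¬ 2 ∣ N := by
      intro h2
      have h3 : 2 ∣ a ^ l + 1 := h2.trans (Nat.gcd_dvd_left _ _)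
      have h4 : 2 ∣ a ^ l := dvd_pow heven.two_dvd (by omega)
      omega
    rcases (Nat.dvd_prime Nat.prime_two).mp hN2' with h1 | h2
    · exact h1
    · exact absurd (h2 ▸ dvd_rfl) hodda
  · -- h' odd, a odd → N = 2
    intro hodd hodda
    rw [hH] at hodd
    have hN2' := oddCase hodd
    have h2N : 2 ∣ N := by
      refine Nat.dvd_gcd ?_ ?_
      · obtain ⟨k, hk⟩ := hodda.pow (n := l); omega
      · obtain ⟨k, hk⟩ := hodda.pow (n := h); omega
    exact Nat.dvd_antisymm hN2' h2N
  · -- h' even → N = a^d + 1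
    intro heven
    rw [hH] at heven
    have hl'odd : Odd l' := by
      rcases Nat.even_or_odd l' with he | ho
      · exfalso
        have h2 : 2 ∣ Nat.gcd l' h' := Nat.dvd_gcd he.two_dvd heven.two_dvd
        rw [hcop.gcd_eq_one] at h2; omega
      · exact ho
    obtain ⟨h'', hh''⟩ := heven.two_dvd
    have hcop2 : Nat.Coprime l' h'' := Nat.Coprime.coprime_dvd_right ⟨2, by omega⟩ hcop
    have hg : Nat.gcd (2 * l) h = 2 * d := by
      rw [hl', hh', hh'', show 2 * (d * l') = (2 * d) * l' by ring,
        show d * (2 * h'') = (2 * d) * h'' by ring, Nat.gcd_mul_left, hcop2.gcd_eq_one,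
        Nat.mul_one]
    rw [hg] at hgcd2
    obtain ⟨k, hk⟩ := hl'odd
    have hlk : l = 2 * d * k + d := by rw [hl', hk]; ring
    have hdvd1 : (N : ℤ) ∣ (a : ℤ) ^ (2 * d * k) - 1 := by
      refine hgcd2.trans ?_
      have := sub_dvd_pow_sub_pow ((a : ℤ) ^ (2 * d)) 1 k
      rwa [one_pow, ← pow_mul] at this
    have hNad : (N : ℤ) ∣ (a : ℤ) ^ d + 1 := by
      have heq : (a : ℤ) ^ d + 1 =
          ((a : ℤ) ^ l + 1) - (a : ℤ) ^ d * ((a : ℤ) ^ (2 * d * k) - 1) := by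
        rw [hlk, pow_add]; ring
      rw [heq]
      exact dvd_sub hNl (hdvd1.mul_left _)
    -- a^d + 1 ∣ N
    have hd1 : a ^ d + 1 ∣ a ^ l + 1 := by
      have hodd : Odd l' := ⟨k, hk⟩
      have := hodd.nat_add_dvd_pow_add_pow (a ^ d) 1
      rwa [one_pow, ← pow_mul, ← hl'] at this
    have hd2 : a ^ d + 1 ∣ a ^ h - 1 := by
      have hz : ((a : ℤ) ^ d + 1) ∣ (a : ℤ) ^ h - 1 := by
        have h1 : ((a : ℤ) ^ d + 1) ∣ (a : ℤ) ^ (2 * d) - 1 :=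
          ⟨(a : ℤ) ^ d - 1, by rw [two_mul, pow_add]; ring⟩
        have h2 := sub_dvd_pow_sub_pow ((a : ℤ) ^ (2 * d)) 1 h''
        rw [one_pow, ← pow_mul, show 2 * d * h'' = h from by rw [hh', hh'']; ring] at h2
        exact h1.trans h2
      rw [show ((a : ℤ) ^ d + 1) = ((a ^ d + 1 : ℕ) : ℤ) from by push_cast; ring,
        show ((a : ℤ) ^ h - 1) = ((a ^ h - 1 : ℕ) : ℤ) from by
          rw [Nat.cast_sub hah]; push_cast; ring] at hz
      exact_mod_cast hz
    have hdN : a ^ d + 1 ∣ N := Nat.dvd_gcd hd1 hd2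
    have hNd' : N ∣ a ^ d + 1 := by
      rw [show ((a : ℤ) ^ d + 1) = ((a ^ d + 1 : ℕ) : ℤ) from by push_cast; ring] at hNad
      exact_mod_cast hNad
    exact Nat.dvd_antisymm hNd' hdN
end
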